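/- arXiv:1903.00973 — 12 statements merged into one kernel-verified Lean document; each statement's English description precedes it below -/
import Mathlib

section
/- Let S be a standard graded polynomial ring over a field and g_1,...,g_t a homogeneous regular sequence of elements of positive degree such that the ideal (g_1,...,g_t) is prime. Then S/(g_1,...,g_i) is an integral domain for all 1 ≤ i ≤ t; i.e., g_1,...,g_t is a prime sequence. -/
/-!
Descending induction on `i`. Write `I = (g₁, …, gᵢ)` and `f = gᵢ₊₁`, so that `I + (f)` is prime,
`f` is a nonzerodivisor modulo `I` and `I` is homogeneous; it suffices to test primality of `I`
on homogeneous `x, y` with `xy ∈ I`. Say `x ∈ I + (f)`; comparing homogeneous components,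
`x ≡ f e (mod I)` with `e` homogeneous of degree `deg x - deg f`, or `x ∈ I`. Then
`f (e y) ∈ I`, so `e y ∈ I`, and since `deg f > 0` induction on `deg x + deg y` gives
`e ∈ I` (hence `x ∈ I`) or `y ∈ I`.
-/

open MvPolynomial DirectSum

section GradedRing

variable {A σ : Type*} [CommRing A] [SetLike σ A] [AddSubmonoidClass σ A] {𝒜 : ℕ → σ}
  [GradedRing 𝒜] {I : Ideal A} {f : A} {d : ℕ}

theorem Ideal.IsHomogeneous.exists_sub_mul_mem_of_mem_sup_span_singleton
    (hI : I.IsHomogeneous 𝒜) (hf : f ∈ 𝒜 d) {x : A} {m : ℕ} (hx : x ∈ 𝒜 m)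
    (hxI : x ∈ I ⊔ Ideal.span {f}) :
    x ∈ I ∨ ∃ m', m' + d = m ∧ ∃ e ∈ 𝒜 m', x - f * e ∈ I := by
  obtain ⟨c, hc, _, hw, rfl⟩ := Submodule.mem_sup.mp hxI
  obtain ⟨e, rfl⟩ := Ideal.mem_span_singleton'.mp hw
  have hcm : (decompose 𝒜 c m : A) ∈ I := hI m hc
  have hx' : (decompose 𝒜 c m : A) + decompose 𝒜 (e * f) m = c + e * f := by
    rw [← decompose_of_mem_same 𝒜 hx, decompose_add, DirectSum.add_apply, AddMemClass.coe_add]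
  by_cases hdm : d ≤ m
  · rw [coe_decompose_mul_of_right_mem_of_le 𝒜 hf hdm] at hx'
    refine Or.inr ⟨m - d, by omega, decompose 𝒜 e (m - d), SetLike.coe_mem _, ?_⟩
    rw [← hx', mul_comm f, add_sub_cancel_right]
    exact hcm
  · rw [coe_decompose_mul_of_right_mem_of_not_le 𝒜 hf hdm, add_zero] at hx'
    exact Or.inl (hx' ▸ hcm)

theorem Ideal.IsHomogeneous.mem_or_mem_of_mem_sup_span_singleton
    (hI : I.IsHomogeneous 𝒜) (hf : f ∈ 𝒜 d) (hd : 0 < d) (hreg : ∀ z, f * z ∈ I → z ∈ I)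
    {x y : A} {a : ℕ} (hx : x ∈ 𝒜 a) (hxy : x * y ∈ I) (hxI : x ∈ I ⊔ Ideal.span {f})
    (ih : ∀ a' < a, ∀ x' ∈ 𝒜 a', x' * y ∈ I → x' ∈ I ∨ y ∈ I) :
    x ∈ I ∨ y ∈ I := by
  obtain hxI | ⟨a', rfl, e, he, hxe⟩ := hI.exists_sub_mul_mem_of_mem_sup_span_singleton hf hx hxI
  · exact Or.inl hxI
  have hey : e * y ∈ I := hreg _ <| by
    rw [show f * (e * y) = x * y - (x - f * e) * y by ring]
    exact I.sub_mem hxy (I.mul_mem_right y hxe)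
  refine (ih a' (by omega) e he hey).imp_left fun heI => ?_
  rw [← sub_add_cancel x (f * e)]
  exact I.add_mem hxe (I.mul_mem_left f heI)

theorem Ideal.IsHomogeneous.isPrime_of_isPrime_sup_span_singleton
    (hI : I.IsHomogeneous 𝒜) (hf : f ∈ 𝒜 d) (hd : 0 < d) (hreg : ∀ z, f * z ∈ I → z ∈ I)
    (hP : (I ⊔ Ideal.span {f}).IsPrime) : I.IsPrime := by
  have hne : I ≠ ⊤ := fun h => hP.ne_top (by rw [h, top_sup_eq])
  refine hI.isPrime_of_homogeneous_mem_or_mem hne ?_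
  rintro x y ⟨a, hx⟩ ⟨b, hy⟩ hxy
  induction hN : a + b using Nat.strong_induction_on generalizing a b x y with
  | _ N ih =>
    rcases hP.mem_or_mem (Ideal.mem_sup_left hxy) with hxP | hyP
    · exact hI.mem_or_mem_of_mem_sup_span_singleton hf hd hreg hx hxy hxP
        fun a' ha' x' hx' hx'y => ih (a' + b) (by omega) a' hx' b hy hx'y rfl
    · refine (hI.mem_or_mem_of_mem_sup_span_singleton hf hd hreg hy (mul_comm x y ▸ hxy) hyP
        fun b' hb' y' hy' hxy' => ?_).symm
      exact (ih (a + b') (by omega) a hx b' hy' (mul_comm y' x ▸ hxy') rfl).symm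

end GradedRing

namespace RingTheory.Sequence.IsWeaklyRegular

theorem mem_ofList_take_of_mul_mem {R : Type*} [CommRing R] {rs : List R}
    (hrs : IsWeaklyRegular R rs) {i : ℕ} (hi : i < rs.length) {z : R}
    (hz : rs[i] * z ∈ Ideal.ofList (rs.take i)) : z ∈ Ideal.ofList (rs.take i) := by
  have hreg := hrs.regular_mod_prev i hi
  rw [smul_eq_mul, Ideal.mul_top] at hreg
  exact mem_of_isSMulRegular_quotient_of_smul_mem hreg hz

theorem isPrime_ofList_take {A σ : Type*} [CommRing A] [SetLike σ A] [AddSubmonoidClass σ A]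
    {𝒜 : ℕ → σ} [GradedRing 𝒜] {rs : List A} (hrs : IsWeaklyRegular A rs)
    (hhom : ∀ r ∈ rs, ∃ d, 0 < d ∧ r ∈ 𝒜 d) (hprime : (Ideal.ofList rs).IsPrime)
    {i : ℕ} (hi : i ≤ rs.length) : (Ideal.ofList (rs.take i)).IsPrime := by
  induction hi using Nat.decreasingInduction with
  | self => rwa [List.take_length]
  | of_succ k hk ih =>
    obtain ⟨d, hd, hf⟩ := hhom rs[k] (List.getElem_mem hk)
    have hIhom : (Ideal.ofList (rs.take k)).IsHomogeneous 𝒜 :=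
      Ideal.homogeneous_span 𝒜 _ fun r hr =>
        let ⟨d, _, hr⟩ := hhom r (List.mem_of_mem_take hr)
        ⟨d, hr⟩
    refine hIhom.isPrime_of_isPrime_sup_span_singleton hf hd
      (fun _ => hrs.mem_ofList_take_of_mul_mem hk) ?_
    rwa [← Ideal.ofList_singleton, ← Ideal.ofList_append, List.take_append_getElem]

end RingTheory.Sequence.IsWeaklyRegular

attribute [local instance] gradedAlgebra

/-- **Lemma (primeseq., first part).** If `g 1, …, g t` is a homogeneous regular sequence of
elements of positive degree in a standard graded polynomial ring `S` over a field, and the ideal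
`(g 1, …, g t)` is prime, then `S/(g 1, …, g i)` is a domain for all `1 ≤ i ≤ t`; that is,
each ideal `(g 1, …, g i)` is prime, i.e. `g` is a prime sequence. -/
theorem prime_sequence_of_regular_sequence_span_prime
    (k : Type*) [Field k] (n t : ℕ) (g : Fin t → MvPolynomial (Fin n) k)
    (hhom : ∀ i, ∃ d : ℕ, 0 < d ∧ (g i).IsHomogeneous d)
    (hreg : RingTheory.Sequence.IsRegular (MvPolynomial (Fin n) k) (List.ofFn g))
    (hprime : (Ideal.span (Set.range g)).IsPrime) :
    ∀ i : ℕ, 1 ≤ i → i ≤ t →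
      (Ideal.span {p : MvPolynomial (Fin n) k | ∃ j : Fin t, (j : ℕ) < i ∧ p = g j}).IsPrime ∧
      IsDomain (MvPolynomial (Fin n) k ⧸
        Ideal.span {p : MvPolynomial (Fin n) k | ∃ j : Fin t, (j : ℕ) < i ∧ p = g j}) := by
  intro i _ hi
  have hhom' : ∀ r ∈ List.ofFn g, ∃ d, 0 < d ∧ r ∈ homogeneousSubmodule (Fin n) k d := by
    simpa only [List.forall_mem_ofFn_iff, mem_homogeneousSubmodule] using hhom
  have hprime' : (Ideal.ofList (List.ofFn g)).IsPrime := by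
    rwa [Ideal.ofList, show {r | r ∈ List.ofFn g} = Set.range g from
      Set.ext fun _ => List.mem_ofFn]
  have hspan : {p | ∃ j : Fin t, (j : ℕ) < i ∧ p = g j} = {p | p ∈ (List.ofFn g).take i} := by
    ext p
    simp only [Set.mem_ofPred_eq, List.mem_take_iff_getElem, List.length_ofFn, lt_min_iff,
      List.getElem_ofFn]
    exact ⟨fun ⟨j, hj, hp⟩ => ⟨j, ⟨hj, j.isLt⟩, hp.symm⟩,
      fun ⟨j, ⟨hj, hjt⟩, hp⟩ => ⟨⟨j, hjt⟩, hj, hp.symm⟩⟩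
  have hP := hreg.toIsWeaklyRegular.isPrime_ofList_take hhom' hprime'
    (i := i) (by rwa [List.length_ofFn])
  rw [hspan]
  exact ⟨hP, (Ideal.Quotient.isDomain_iff_prime _).mpr hP⟩
end

section
/- Let S be a standard graded polynomial ring over a field, g_1,...,g_t a homogeneous regular sequence of positive-degree elements generating a prime ideal. Then any permutation of g_1,...,g_t is also a prime sequence. -/
/-!
In a Noetherian `ℕ`-graded ring, `1 + z` with `z` in the irrelevant ideal is a nonzerodivisor
modulo every homogeneous ideal (look at the lowest degree component that escapes the ideal).
This is exactly the Nakayama-type input that lets adjacent members of a regular sequence be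
swapped, so a regular sequence of homogeneous elements of positive degree stays regular under
any permutation.

Primality then descends along such a sequence: if `J` is homogeneous, `h` is homogeneous of
positive degree and regular on `A ⧸ J`, and `J + (h)` is prime, then `J` is prime. Indeed, if
`x * y ∈ J` for homogeneous `x`, `y` with, say, `x ∈ J + (h)`, then `x ≡ c * h` modulo `J` with
`deg c < deg x`, regularity gives `c * y ∈ J`, and we conclude by induction on `deg x + deg y`.
Starting from the prime ideal generated by the whole permuted sequence and removing its elements
from the end shows that every initial segment generates a prime ideal.
-/

open DirectSum HomogeneousIdeal

theorem List.mem_take_ofFn {α : Type*} {t i : ℕ} {f : Fin t → α} {a : α} :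
    a ∈ (List.ofFn f).take i ↔ ∃ j : Fin t, (j : ℕ) < i ∧ f j = a := by
  simp only [List.mem_take_iff_getElem, List.length_ofFn, List.getElem_ofFn, lt_min_iff]
  exact ⟨fun ⟨j, hj, h⟩ => ⟨⟨j, hj.2⟩, hj.1, h⟩, fun ⟨j, hj, h⟩ => ⟨j, ⟨hj, j.2⟩, h⟩⟩

section GradedRing

variable {σ A : Type*} [CommRing A] [SetLike σ A] [AddSubgroupClass σ A] {𝒜 : ℕ → σ}
  [GradedRing 𝒜]

theorem decompose_mul_mem_of_mem_irrelevant {I : Ideal A} {z y : A} (hz : z ∈ 𝒜₊) {d : ℕ}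
    (hy : ∀ e < d, (decompose 𝒜 y e : A) ∈ I) : (decompose 𝒜 (z * y) d : A) ∈ I := by
  classical
  rw [decompose_mul, coe_mul_apply]
  refine Ideal.sum_mem _ fun ij hij => ?_
  have hsum : ij.1 + ij.2 = d := (Finset.mem_filter.mp hij).2
  rcases Nat.eq_zero_or_pos ij.1 with h0 | hpos
  · rw [h0, ← GradedRing.proj_apply, (mem_irrelevant_iff _ _).mp hz, zero_mul]
    exact I.zero_mem
  · exact I.mul_mem_left _ (hy _ (by omega))

theorem Ideal.IsHomogeneous.mem_of_one_add_mul_mem {I : Ideal A} (hI : I.IsHomogeneous 𝒜)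
    {z y : A} (hz : z ∈ 𝒜₊) (h : (1 + z) * y ∈ I) : y ∈ I := by
  rw [hI.mem_iff]
  intro d
  induction d using Nat.strong_induction_on with
  | _ d ih =>
    have hd := hI d h
    rw [add_mul, one_mul, decompose_add, DirectSum.add_apply, AddMemClass.coe_add] at hd
    simpa using I.sub_mem hd (decompose_mul_mem_of_mem_irrelevant hz ih)

open Pointwise in
theorem Ideal.IsHomogeneous.eq_bot_of_eq_pointwise_smul_of_mem_irrelevant {I : Ideal A}
    (hI : I.IsHomogeneous 𝒜) {a : A} (ha : a ∈ 𝒜₊) {K : Submodule A (A ⧸ I)} (hK : K.FG)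
    (hKa : K = a • K) : K = ⊥ := by
  obtain ⟨r, hr, hrK⟩ := Submodule.exists_sub_one_mem_and_smul_eq_zero_of_fg_of_le_smul
    (Ideal.span {a}) K hK (by rw [Submodule.ideal_span_singleton_smul]; exact hKa.le)
  obtain ⟨c, hc⟩ := Ideal.mem_span_singleton'.mp hr
  have hr' : r = 1 + c * a := by rw [hc]; ring
  refine (Submodule.eq_bot_iff K).mpr fun x hx => ?_
  obtain ⟨y, rfl⟩ := Ideal.Quotient.mk_surjective x
  have hry := hrK _ hx
  rw [Algebra.smul_def, Ideal.Quotient.algebraMap_eq, ← map_mul, Ideal.Quotient.eq_zero_iff_mem,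
    hr'] at hry
  exact Ideal.Quotient.eq_zero_iff_mem.mpr
    (hI.mem_of_one_add_mul_mem ((𝒜₊).toIdeal.mul_mem_left c ha) hry)

theorem Ideal.IsHomogeneous.mem_or_exists_sub_mul_mem_of_mem_sup_span_singleton
    {J : Ideal A} (hJ : J.IsHomogeneous 𝒜) {h x : A} {dh dx : ℕ} (hh : h ∈ 𝒜 dh)
    (hx : x ∈ 𝒜 dx) (hxJ : x ∈ J ⊔ Ideal.span {h}) :
    x ∈ J ∨ dh ≤ dx ∧ ∃ c ∈ 𝒜 (dx - dh), x - c * h ∈ J := by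
  obtain ⟨j, hj, _, hch, rfl⟩ := Submodule.mem_sup.mp hxJ
  obtain ⟨c, rfl⟩ := Ideal.mem_span_singleton'.mp hch
  have hjx : (decompose 𝒜 j dx : A) ∈ J := hJ dx hj
  have hcomp : j + c * h = (decompose 𝒜 j dx : A) + decompose 𝒜 (c * h) dx := by
    rw [← AddMemClass.coe_add, ← DirectSum.add_apply, ← decompose_add,
      decompose_of_mem_same 𝒜 hx]
  rw [hcomp]
  by_cases hle : dh ≤ dx
  · refine Or.inr ⟨hle, _, (decompose 𝒜 c (dx - dh)).2, ?_⟩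
    rwa [coe_decompose_mul_of_right_mem_of_le 𝒜 hh hle, add_sub_cancel_right]
  · exact Or.inl (by rwa [coe_decompose_mul_of_right_mem_of_not_le 𝒜 hh hle, add_zero])

theorem Ideal.IsHomogeneous.isPrime_of_isPrime_sup_span_singleton_s2 {J : Ideal A}
    (hJ : J.IsHomogeneous 𝒜) {h : A} {dh : ℕ} (hdh : 0 < dh) (hh : h ∈ 𝒜 dh)
    (hreg : IsSMulRegular (A ⧸ J) h) (hP : (J ⊔ Ideal.span {h}).IsPrime) : J.IsPrime := by
  rw [isSMulRegular_quotient_iff_mem_of_smul_mem] at hreg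
  refine hJ.isPrime_of_homogeneous_mem_or_mem
    (fun htop => hP.ne_top (by rw [htop, top_sup_eq])) ?_
  rintro x y ⟨dx, hx⟩ ⟨dy, hy⟩ hxy
  induction hN : dx + dy using Nat.strong_induction_on generalizing x y dx dy with
  | _ N ih =>
  have one_side : ∀ {x y : A} {dx dy : ℕ}, x ∈ 𝒜 dx → y ∈ 𝒜 dy → dx + dy = N → x * y ∈ J →
      x ∈ J ⊔ Ideal.span {h} → x ∈ J ∨ y ∈ J := by
    intro x y dx dy hx hy hN hxy hxP
    obtain hxJ | ⟨hle, c, hc, hxc⟩ :=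
      hJ.mem_or_exists_sub_mul_mem_of_mem_sup_span_singleton hh hx hxP
    · exact Or.inl hxJ
    have hcy : c * y ∈ J := hreg _ <| by
      rw [smul_eq_mul, show h * (c * y) = x * y - (x - c * h) * y by ring]
      exact J.sub_mem hxy (J.mul_mem_right y hxc)
    refine (ih (dx - dh + dy) (by omega) (dx - dh) hc dy hy hcy rfl).imp_left fun hcJ => ?_
    simpa using J.add_mem hxc (J.mul_mem_right h hcJ)
  obtain hxP | hyP := hP.mem_or_mem (Ideal.mem_sup_left hxy)
  · exact one_side hx hy hN hxy hxP
  · exact (one_side hy hx (by omega) (by rwa [mul_comm]) hyP).symm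

namespace RingTheory.Sequence

variable {rs : List A}

theorem IsWeaklyRegular.of_perm_of_homogeneous_of_pos_degree [IsNoetherianRing A]
    {rs' : List A} (hrs : IsWeaklyRegular A rs) (hperm : rs.Perm rs')
    (hdeg : ∀ r ∈ rs, ∃ d, 0 < d ∧ r ∈ 𝒜 d) : IsWeaklyRegular A rs' :=
  hrs.prototype_perm hperm fun a _ l hsub hK => by
    have hI : (Ideal.ofList l • ⊤ : Ideal A).IsHomogeneous 𝒜 := by
      rw [smul_eq_mul, Ideal.mul_top]
      refine Ideal.homogeneous_span 𝒜 _ fun r hr => ?_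
      obtain ⟨d, -, hd⟩ :=
        hdeg r (hsub.subset (List.mem_cons_of_mem _ (List.mem_cons_of_mem _ hr)))
      exact ⟨d, hd⟩
    obtain ⟨d, hd, ha⟩ := hdeg a (hsub.subset List.mem_cons_self)
    exact hI.eq_bot_of_eq_pointwise_smul_of_mem_irrelevant (mem_irrelevant_of_mem 𝒜 hd ha)
      (IsNoetherian.noetherian _) hK

theorem isPrime_ofList_of_isPrefix (hrs : IsWeaklyRegular A rs)
    (hdeg : ∀ r ∈ rs, ∃ d, 0 < d ∧ r ∈ 𝒜 d) (hprime : (Ideal.ofList rs).IsPrime) {l : List A}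
    (hl : l <+: rs) : (Ideal.ofList l).IsPrime := by
  obtain ⟨m, hlm⟩ := hl
  induction m generalizing l with
  | nil => simpa [← hlm] using hprime
  | cons a m ih =>
    have hP : (Ideal.ofList l ⊔ Ideal.span {a}).IsPrime := by
      rw [← Ideal.ofList_singleton, ← Ideal.ofList_append]
      exact ih (by simpa using hlm)
    have hreg : IsSMulRegular (A ⧸ Ideal.ofList l) a := by
      rw [← hlm, isWeaklyRegular_append_iff, isWeaklyRegular_cons_iff] at hrs
      have hsmul : (Ideal.ofList l • ⊤ : Ideal A) = Ideal.ofList l := by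
        rw [smul_eq_mul, Ideal.mul_top]
      exact hsmul ▸ hrs.2.1
    have hJ : (Ideal.ofList l).IsHomogeneous 𝒜 := Ideal.homogeneous_span 𝒜 _ fun r hr => by
      obtain ⟨d, -, hd⟩ := hdeg r (hlm ▸ List.mem_append_left _ hr)
      exact ⟨d, hd⟩
    obtain ⟨d, hd, ha⟩ := hdeg a (hlm ▸ List.mem_append_right _ List.mem_cons_self)
    exact hJ.isPrime_of_isPrime_sup_span_singleton_s2 hd ha hreg hP

end RingTheory.Sequence

end GradedRing

open MvPolynomial

/-- **Lemma (primeseq., second part).** If `g 1, …, g t` is a homogeneous regular sequence of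
elements of positive degree in a standard graded polynomial ring over a field, generating a prime
ideal, then any permutation `g ∘ σ` of the sequence is a prime sequence: the ideal it generates is
proper and the quotient by the first `i` terms is a domain for all `1 ≤ i ≤ t`. -/
theorem prime_sequence_of_permutation_of_regular_sequence_span_prime
    (k : Type*) [Field k] (n t : ℕ) (g : Fin t → MvPolynomial (Fin n) k)
    (hhom : ∀ i, ∃ d : ℕ, 0 < d ∧ (g i).IsHomogeneous d)
    (hreg : RingTheory.Sequence.IsRegular (MvPolynomial (Fin n) k) (List.ofFn g))
    (hprime : (Ideal.span (Set.range g)).IsPrime)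
    (σ : Equiv.Perm (Fin t)) :
    Ideal.span (Set.range (g ∘ σ)) ≠ ⊤ ∧
    ∀ i : ℕ, 1 ≤ i → i ≤ t →
      IsDomain (MvPolynomial (Fin n) k ⧸
        Ideal.span {p : MvPolynomial (Fin n) k | ∃ j : Fin t, (j : ℕ) < i ∧ p = g (σ j)}) := by
  let _ := MvPolynomial.gradedAlgebra (σ := Fin n) (R := k)
  have hrange : Set.range (g ∘ σ) = Set.range g := σ.surjective.range_comp g
  have hperm : (List.ofFn (g ∘ σ)).Perm (List.ofFn g) := σ.ofFn_comp_perm g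
  have hdeg : ∀ r ∈ List.ofFn g, ∃ d, 0 < d ∧ r ∈ homogeneousSubmodule (Fin n) k d := by
    intro r hr
    obtain ⟨j, rfl⟩ := List.mem_ofFn.mp hr
    obtain ⟨d, hd, hgj⟩ := hhom j
    exact ⟨d, hd, (mem_homogeneousSubmodule _ _).mpr hgj⟩
  have hregσ := hreg.toIsWeaklyRegular.of_perm_of_homogeneous_of_pos_degree hperm.symm hdeg
  have hprimeσ : (Ideal.ofList (List.ofFn (g ∘ σ))).IsPrime := by
    have hset : {r | r ∈ List.ofFn (g ∘ σ)} = Set.range g := by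
      ext; rw [Set.mem_ofPred_eq, List.mem_ofFn', hrange]
    rwa [Ideal.ofList, hset]
  refine ⟨hrange ▸ hprime.ne_top, fun i _ _ => ?_⟩
  have htake : Ideal.span {p | ∃ j : Fin t, (j : ℕ) < i ∧ p = g (σ j)} =
      Ideal.ofList ((List.ofFn (g ∘ σ)).take i) :=
    congrArg Ideal.span <| Set.ext fun p =>
      (List.mem_take_ofFn.trans (exists_congr fun j => and_congr_right' eq_comm)).symm
  have hprime_take := RingTheory.Sequence.isPrime_ofList_of_isPrefix hregσ
    (fun r hr => hdeg r (hperm.mem_iff.mp hr)) hprimeσ (List.take_prefix i _)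
  rw [htake]
  exact Ideal.Quotient.isDomain _
end

section
/- Let S be a commutative ring, t an indeterminate, and I an ideal of S. If f ∈ I is a nonzero element and S is a domain, then the fraction field of the subring S[It, t^2] of S[t] equals the fraction field of S[t]. Consequently t is integral over S[It,t^2] (it satisfies X^2 - t^2 = 0) but t ∉ S[It,t^2] when I is proper, so S[It,t^2] is not integrally closed in its fraction field. -/
open Polynomial

noncomputable def ReesLike (S : Type*) [CommRing S] (I : Ideal S) : Subalgebra S (Polynomial S) :=
  Algebra.adjoin S ({p : Polynomial S | ∃ a ∈ I, p = Polynomial.C a * Polynomial.X} ∪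
    {Polynomial.X ^ 2})

/-- **Proposition (notnormal).** Let `S` be a domain, `I` a proper ideal containing a nonzero
element `f`.  Then `Frac(S[It,t²]) = Frac(S[t])` (every element of `S[t]` is a quotient of
elements of the Rees-like algebra), `t` is integral over `S[It,t²]`, yet `t ∉ S[It,t²]`;
hence `S[It,t²]` is not integrally closed in its fraction field. -/
theorem reesLike_not_integrally_closed
    (S : Type*) [CommRing S] [IsDomain S] (I : Ideal S) (hI : I ≠ ⊤)
    (f : S) (hf : f ∈ I) (hf0 : f ≠ 0) :
    (∀ p : Polynomial S, ∃ a ∈ ReesLike S I, ∃ b ∈ ReesLike S I, b ≠ 0 ∧ p * b = a) ∧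
    IsIntegral (ReesLike S I) (Polynomial.X : Polynomial S) ∧
    (Polynomial.X : Polynomial S) ∉ ReesLike S I := by
  have hfx : (C f * X : Polynomial S) ∈ ReesLike S I :=
    Algebra.subset_adjoin (Or.inl ⟨f, hf, rfl⟩)
  have hx2 : (X ^ 2 : Polynomial S) ∈ ReesLike S I :=
    Algebra.subset_adjoin (Or.inr rfl)
  have hC : ∀ a : S, (C a : Polynomial S) ∈ ReesLike S I := fun a => by
    simpa [Polynomial.algebraMap_eq] using (ReesLike S I).algebraMap_mem a
  have hx2n : ∀ n : ℕ, (X ^ (2 * n) : Polynomial S) ∈ ReesLike S I := fun n => by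
    rw [pow_mul]; exact pow_mem hx2 n
  refine ⟨?_, ?_, ?_⟩
  · intro p
    refine ⟨p * (C f * X), ?_, C f * X, hfx, ?_, rfl⟩
    · induction p using Polynomial.induction_on' with
      | add p q hp hq => rw [add_mul]; exact add_mem hp hq
      | monomial n a =>
        rw [← Polynomial.C_mul_X_pow_eq_monomial]
        rcases Nat.even_or_odd n with ⟨k, hk⟩ | ⟨k, hk⟩
        · have : C a * X ^ n * (C f * X) = C a * X ^ (2 * k) * (C f * X) := by
            rw [hk]; ring
          rw [this]
          exact mul_mem (mul_mem (hC a) (hx2n k)) hfx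
        · have : C a * X ^ n * (C f * X) = C (a * f) * X ^ (2 * (k + 1)) := by
            rw [hk, C_mul]; ring
          rw [this]
          exact mul_mem (hC _) (hx2n (k + 1))
    · exact mul_ne_zero (C_ne_zero.mpr hf0) X_ne_zero
  · refine ⟨X ^ 2 - C ⟨X ^ 2, hx2⟩, monic_X_pow_sub_C _ two_ne_zero, ?_⟩
    simp [eval₂_sub, eval₂_pow, Subalgebra.algebraMap_eq]
  · intro hX
    have hle : ReesLike S I ≤
        { carrier := {p : Polynomial S | p.coeff 1 ∈ I}
          mul_mem' := by
            intro p q hp hq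
            have : (p * q).coeff 1 = p.coeff 0 * q.coeff 1 + p.coeff 1 * q.coeff 0 := by
              rw [coeff_mul, Finset.Nat.sum_antidiagonal_eq_sum_range_succ_mk,
                Finset.sum_range_succ, Finset.sum_range_one]
            simp only [Set.mem_setOf_eq, this]
            exact add_mem (I.mul_mem_left _ hq) (I.mul_mem_right _ hp)
          add_mem' := fun hp hq => by
            simp only [Set.mem_setOf_eq, coeff_add] at *
            exact add_mem hp hq
          algebraMap_mem' := fun a => by
            simp [Polynomial.algebraMap_eq, coeff_C] } := by
      apply Algebra.adjoin_le
      rintro p (⟨a, ha, rfl⟩ | rfl)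
      · show (C a * X : S[X]).coeff 1 ∈ I
        simpa using ha
      · show (X ^ 2 : S[X]).coeff 1 ∈ I
        simp [coeff_X_pow]
    have h1 : (X : S[X]).coeff 1 ∈ I := hle hX
    rw [coeff_X_one] at h1
    exact hI (I.eq_top_iff_one.mpr h1)
end

section
/- Let S be a polynomial ring over a field k and I a homogeneous ideal of S. If for some odd integer σ > 1 the condition 'b ∈ S[t] and b^σ ∈ S[It,t^2] implies b ∈ S[It,t^2]' holds, then I is a radical ideal. -/
/-!
If `a ^ m ∈ I` then also `a ^ N ∈ I` for the odd exponent `N = σ ^ m ≥ m`, so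
`(a t) ^ N = (a ^ N t) (t²) ^ ((N - 1) / 2)` lies in `S[It, t²]`; taking `σ`-th roots `m` times
puts `a t` itself in `S[It, t²]`. Every element of `S[It, t²]` has its odd-degree coefficients
in `I`, so `a ∈ I`.
-/

open Polynomial

theorem mem_of_pow_pow_mem {M : Type*} [Monoid M] {s : Set M} {σ : ℕ}
    (hroot : ∀ b, b ^ σ ∈ s → b ∈ s) {b : M} : ∀ K : ℕ, b ^ σ ^ K ∈ s → b ∈ s
  | 0, h => by simpa using h
  | K + 1, h => mem_of_pow_pow_mem hroot K (hroot _ (by rwa [← pow_mul, ← pow_succ]))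

namespace Polynomial

variable (S : Type*) [CommRing S] (I : Ideal S)

noncomputable def oddCoeffSubalgebra : Subalgebra S S[X] where
  carrier := {p | ∀ d, Odd d → p.coeff d ∈ I}
  add_mem' hp hq d hd := by
    rw [coeff_add]
    exact I.add_mem (hp d hd) (hq d hd)
  mul_mem' {p q} hp hq d hd := by
    rw [coeff_mul]
    refine Ideal.sum_mem _ fun x hx => ?_
    rw [Finset.HasAntidiagonal.mem_antidiagonal] at hx
    rcases Nat.even_or_odd x.1 with h1 | h1
    · have h2 : Odd x.2 := by
        rw [← hx] at hd
        exact (Nat.odd_add'.mp hd).mpr h1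
      exact I.mul_mem_left _ (hq _ h2)
    · exact I.mul_mem_right _ (hp _ h1)
  algebraMap_mem' r d hd := by
    rw [algebraMap_eq, coeff_C, if_neg (by rintro rfl; exact Nat.not_odd_zero hd)]
    exact I.zero_mem

variable {S I}

theorem reesLike_le_oddCoeffSubalgebra : ReesLike S I ≤ oddCoeffSubalgebra S I := by
  refine Algebra.adjoin_le ?_
  rintro p (⟨a, ha, rfl⟩ | rfl) d hd
  · rw [coeff_C_mul, coeff_X]
    split_ifs <;> simp [ha]
  · rw [coeff_X_pow, if_neg (by rintro rfl; exact Nat.not_even_iff_odd.mpr hd even_two)]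
    exact I.zero_mem

theorem C_mul_X_mem_reesLike_iff {a : S} : C a * X ∈ ReesLike S I ↔ a ∈ I := by
  refine ⟨fun h => by simpa using reesLike_le_oddCoeffSubalgebra h 1 odd_one, fun ha => ?_⟩
  exact Algebra.subset_adjoin (Or.inl ⟨a, ha, rfl⟩)

theorem X_sq_mem_reesLike : (X ^ 2 : S[X]) ∈ ReesLike S I :=
  Algebra.subset_adjoin (Or.inr rfl)

theorem C_mul_X_pow_mem_reesLike {a : S} {N : ℕ} (hN : Odd N) (ha : a ^ N ∈ I) :
    (C a * X) ^ N ∈ ReesLike S I := by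
  obtain ⟨j, rfl⟩ := hN
  have h : (C a * X) ^ (2 * j + 1) = C (a ^ (2 * j + 1)) * X * (X ^ 2) ^ j := by
    rw [mul_pow, C_pow]
    ring
  rw [h]
  exact mul_mem (C_mul_X_mem_reesLike_iff.mpr ha) (pow_mem X_sq_mem_reesLike j)

theorem isRadical_of_pow_mem_reesLike {σ : ℕ} (hσ : 1 < σ) (hodd : Odd σ)
    (hroot : ∀ b : S[X], b ^ σ ∈ ReesLike S I → b ∈ ReesLike S I) : I.IsRadical := by
  rintro a ⟨m, hm⟩
  have hpow : a ^ σ ^ m ∈ I := I.pow_mem_of_pow_mem hm (Nat.lt_pow_self hσ).le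
  have hmem : (C a * X) ^ σ ^ m ∈ ReesLike S I := C_mul_X_pow_mem_reesLike hodd.pow hpow
  exact C_mul_X_mem_reesLike_iff.mp (mem_of_pow_pow_mem hroot m hmem)

end Polynomial

theorem isRadical_of_odd_power_condition_general
    (k : Type*) [Field k] (n : ℕ) (I : Ideal (MvPolynomial (Fin n) k))
    (σ : ℕ) (hσ : 1 < σ) (hodd : Odd σ)
    (hcond : ∀ b : Polynomial (MvPolynomial (Fin n) k),
      b ^ σ ∈ ReesLike (MvPolynomial (Fin n) k) I → b ∈ ReesLike (MvPolynomial (Fin n) k) I) :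
    I.IsRadical :=
  Polynomial.isRadical_of_pow_mem_reesLike hσ hodd hcond

/-- **Theorem (RLseminormal, (4) ⇒ (1)).** Let `S = k[x 1, …, x n]` and `I` a homogeneous ideal.
If for some odd integer `σ > 1` every `b ∈ S[t]` with `b^σ ∈ S[It,t²]` lies in `S[It,t²]`,
then `I` is radical. -/
theorem isRadical_of_odd_power_condition
    (k : Type*) [Field k] (n : ℕ) (I : Ideal (MvPolynomial (Fin n) k))
    (hhom : ∀ p ∈ I, ∀ d : ℕ, MvPolynomial.homogeneousComponent d p ∈ I)
    (σ : ℕ) (hσ : 1 < σ) (hodd : Odd σ)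
    (hcond : ∀ b : Polynomial (MvPolynomial (Fin n) k),
      b ^ σ ∈ ReesLike (MvPolynomial (Fin n) k) I → b ∈ ReesLike (MvPolynomial (Fin n) k) I) :
    I.IsRadical :=
  isRadical_of_odd_power_condition_general k n I σ hσ hodd hcond
end

section
/- Let S be a polynomial ring over a field k and I a radical homogeneous ideal. For every odd integer σ > 1 and every b ∈ S[t], if b^σ ∈ S[It,t^2] then b ∈ S[It,t^2]. -/
open Polynomial

/-!
Membership in `S[It, t²]` says that the odd coefficients of `b` lie in `I`, i.e. that the image
of `b` in `(S ⧸ I)[t]` lies in `(S ⧸ I)[t²]`; as `S ⧸ I` is reduced, it is enough to show that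
`c ^ σ ∈ K[t²]` forces `c ∈ K[t²]` for `K` the fraction field of each `S ⧸ P`, `P` prime.
If `2 = 0` in `K`, then `c ^ 2 ∈ K[t²]` by Frobenius, and `c ^ σ = c * (c ^ 2) ^ m` gives
`c ∈ K[t²]` because `K[t]` is free over `K[t²]`. Otherwise `c(-t) ^ σ = c(t) ^ σ`, so `c(-t)` and
`c(t)` are associated in the integrally closed ring `K[t]`, whence `c(-t) = ± c(t)`; the sign `-1`
would make `c ^ σ` at once even and odd, hence zero.
-/

theorem neg_eq_self_iff_of_two_ne_zero {R : Type*} [Ring R] [NoZeroDivisors R]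
    (h2 : (2 : R) ≠ 0) {a : R} : -a = a ↔ a = 0 := by
  rw [neg_eq_iff_add_eq_zero, ← two_mul, mul_eq_zero, or_iff_right h2]

namespace Polynomial

section CommRing

variable {R S : Type*} [CommRing R] [CommRing S]

theorem mem_range_expand_two_iff {p : R[X]} :
    p ∈ (expand R 2).range ↔ ∀ n, Odd n → p.coeff n = 0 := by
  refine ⟨?_, fun h ↦ ⟨contract 2 p, ?_⟩⟩
  · rintro ⟨q, rfl⟩ n hn
    rw [AlgHom.toRingHom_eq_coe, RingHom.coe_coe, coeff_expand two_pos, if_neg hn.not_two_dvd_nat]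
  · ext n
    rw [AlgHom.toRingHom_eq_coe, RingHom.coe_coe, coeff_expand two_pos, coeff_contract two_ne_zero]
    split_ifs with hn
    · rw [Nat.div_mul_cancel hn]
    · exact (h n (Nat.odd_iff.mpr (Nat.two_dvd_ne_zero.mp hn))).symm

theorem map_mem_range_expand_two (f : R →+* S) {p : R[X]} (h : p ∈ (expand R 2).range) :
    p.map f ∈ (expand S 2).range := by
  obtain ⟨q, rfl⟩ := h
  exact ⟨q.map f, map_expand.symm⟩

theorem map_mem_range_expand_two_iff {f : R →+* S} (hf : Function.Injective f) {p : R[X]} :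
    p.map f ∈ (expand S 2).range ↔ p ∈ (expand R 2).range := by
  simp only [mem_range_expand_two_iff, coeff_map, map_eq_zero_iff f hf]

theorem map_mk_mem_range_expand_two_iff {I : Ideal R} {p : R[X]} :
    p.map (Ideal.Quotient.mk I) ∈ (expand (R ⧸ I) 2).range ↔ ∀ n, Odd n → p.coeff n ∈ I := by
  simp only [mem_range_expand_two_iff, coeff_map, Ideal.Quotient.eq_zero_iff_mem]

theorem mem_range_expand_two_iff_comp_neg_X_eq [NoZeroDivisors R] (h2 : (2 : R) ≠ 0)
    {p : R[X]} : p ∈ (expand R 2).range ↔ p.comp (-X) = p := by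
  rw [mem_range_expand_two_iff, Polynomial.ext_iff, ← neg_one_mul, ← C_1, ← C_neg]
  refine forall_congr' fun n ↦ ?_
  rw [comp_C_mul_X_coeff]
  rcases n.even_or_odd with hn | hn
  · simp [hn.neg_one_pow, Nat.not_odd_iff_even.mpr hn]
  · simp [hn.neg_one_pow, hn, neg_eq_self_iff_of_two_ne_zero h2]

end CommRing

section IsDomain

variable {R : Type*} [CommRing R] [IsDomain R]

theorem mem_range_expand_two_of_mul_expand_mem {p q : R[X]} (hq : q ≠ 0)
    (h : p * expand R 2 q ∈ (expand R 2).range) : p ∈ (expand R 2).range := by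
  obtain ⟨r, hr⟩ := h
  have hr' : r = contract 2 p * q := by
    rw [← contract_mul_expand two_ne_zero, ← hr]
    exact (contract_expand 2 two_ne_zero).symm
  refine ⟨contract 2 p, mul_right_cancel₀ ((expand_ne_zero two_pos).mpr hq) ?_⟩
  rw [← hr, hr', AlgHom.toRingHom_eq_coe, RingHom.coe_coe, map_mul]

theorem mem_range_expand_two_of_pow_mem_of_charP_two [CharP R 2] {σ : ℕ} (hσ : Odd σ)
    {c : R[X]} (h : c ^ σ ∈ (expand R 2).range) : c ∈ (expand R 2).range := by
  obtain ⟨m, rfl⟩ := hσ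
  rcases eq_or_ne c 0 with rfl | hc
  · exact zero_mem _
  have hsq : c ^ 2 = expand R 2 (c.map (frobenius R 2)) := by
    rw [← map_expand, map_frobenius_expand]
  have hfrob : c.map (frobenius R 2) ≠ 0 := by
    intro h0
    rw [h0, map_zero, pow_eq_zero_iff two_ne_zero] at hsq
    exact hc hsq
  refine mem_range_expand_two_of_mul_expand_mem (pow_ne_zero m hfrob) ?_
  rwa [map_pow, ← hsq, ← pow_mul, ← pow_succ']

theorem mem_range_expand_two_of_pow_mem_of_two_ne_zero [IsIntegrallyClosed R]
    (h2 : (2 : R) ≠ 0) {σ : ℕ} (hσ : Odd σ) {c : R[X]} (h : c ^ σ ∈ (expand R 2).range) :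
    c ∈ (expand R 2).range := by
  rw [mem_range_expand_two_iff_comp_neg_X_eq h2] at h ⊢
  set c' := c.comp (-X)
  have hpow : c' ^ σ = c ^ σ := by rw [← pow_comp, h]
  obtain ⟨u, hu⟩ : Associated c' c := associated_of_dvd_dvd
    ((IsIntegrallyClosed.pow_dvd_pow_iff hσ.pos.ne').mp hpow.dvd)
    ((IsIntegrallyClosed.pow_dvd_pow_iff hσ.pos.ne').mp hpow.symm.dvd)
  obtain ⟨a, -, ha⟩ := Polynomial.isUnit_iff.mp u.isUnit
  have hu' : c * C a = c' := by
    have := congrArg (·.comp (-X)) hu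
    rw [← ha] at this
    simpa only [mul_comp, C_comp, c', comp_neg_X_comp_neg_X] using this
  rcases eq_or_ne c 0 with hc | hc
  · simp [c', hc]
  have ha2 : a * a = 1 := by
    rw [← hu', ← ha, mul_assoc, ← C_mul] at hu
    exact C_injective (mul_left_cancel₀ hc (hu.trans (mul_one c).symm))
  rcases mul_self_eq_one_iff.mp ha2 with rfl | rfl
  · rw [← hu', C_1, mul_one]
  · have hodd : c' = -c := by rw [← hu', C_neg, C_1, mul_neg_one]
    have h2' : (2 : R[X]) ≠ 0 := by rw [← C_ofNat]; exact C_ne_zero.mpr h2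
    rw [hodd, hσ.neg_pow, neg_eq_self_iff_of_two_ne_zero h2', pow_eq_zero_iff hσ.pos.ne'] at hpow
    exact absurd hpow hc

theorem mem_range_expand_two_of_pow_mem {σ : ℕ} (hσ : Odd σ) {c : R[X]}
    (h : c ^ σ ∈ (expand R 2).range) : c ∈ (expand R 2).range := by
  let K := FractionRing R
  have hinj : Function.Injective (algebraMap R K) := IsFractionRing.injective R K
  rw [← map_mem_range_expand_two_iff hinj] at h ⊢
  rw [Polynomial.map_pow] at h
  by_cases h2 : (2 : K) = 0
  · have : CharP K 2 := CharTwo.of_one_ne_zero_of_two_eq_zero one_ne_zero h2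
    exact mem_range_expand_two_of_pow_mem_of_charP_two hσ h
  · exact mem_range_expand_two_of_pow_mem_of_two_ne_zero h2 hσ h

end IsDomain

theorem mem_range_expand_two_of_pow_mem_of_isReduced {R : Type*} [CommRing R] [IsReduced R]
    {σ : ℕ} (hσ : Odd σ) {c : R[X]} (h : c ^ σ ∈ (expand R 2).range) :
    c ∈ (expand R 2).range := by
  refine mem_range_expand_two_iff.mpr fun n hn ↦ (IsNilpotent.eq_zero ?_)
  rw [← mem_nilradical, nilradical_eq_sInf, Ideal.mem_sInf]
  intro P (hP : P.IsPrime)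
  have hpow := map_mem_range_expand_two (Ideal.Quotient.mk P) h
  rw [Polynomial.map_pow] at hpow
  exact map_mk_mem_range_expand_two_iff.mp (mem_range_expand_two_of_pow_mem hσ hpow) n hn

end Polynomial

section ReesLike

variable {S : Type*} [CommRing S] {I : Ideal S}

theorem monomial_mem_reesLike {n : ℕ} {a : S} (ha : Odd n → a ∈ I) :
    monomial n a ∈ ReesLike S I := by
  have hX2 : (X ^ 2 : S[X]) ∈ ReesLike S I := Algebra.subset_adjoin (Or.inr rfl)
  rw [← C_mul_X_pow_eq_monomial]
  obtain ⟨m, rfl | rfl⟩ := n.even_or_odd'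
  · rw [pow_mul]
    exact mul_mem (Subalgebra.algebraMap_mem _ a) (pow_mem hX2 m)
  · have haX : C a * X ∈ ReesLike S I :=
      Algebra.subset_adjoin (Or.inl ⟨a, ha (odd_two_mul_add_one m), rfl⟩)
    rw [show C a * X ^ (2 * m + 1) = C a * X * (X ^ 2) ^ m by ring]
    exact mul_mem haX (pow_mem hX2 m)

theorem mem_reesLike_iff {b : S[X]} : b ∈ ReesLike S I ↔ ∀ n, Odd n → b.coeff n ∈ I := by
  refine ⟨fun hb ↦ map_mk_mem_range_expand_two_iff.mp ?_, fun hb ↦ ?_⟩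
  · induction hb using Algebra.adjoin_induction with
    | mem p hp =>
      rcases hp with ⟨a, ha, rfl⟩ | rfl
      · rw [Polynomial.map_mul, map_C, Ideal.Quotient.eq_zero_iff_mem.mpr ha, C_0, zero_mul]
        exact zero_mem _
      · exact ⟨X, by simp⟩
    | algebraMap s => exact ⟨C (Ideal.Quotient.mk I s), by simp⟩
    | add p q _ _ hp hq => rw [Polynomial.map_add]; exact add_mem hp hq
    | mul p q _ _ hp hq => rw [Polynomial.map_mul]; exact mul_mem hp hq
  · rw [as_sum_range b]
    exact Subalgebra.sum_mem _ fun n _ ↦ monomial_mem_reesLike (hb n)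

end ReesLike

theorem odd_power_condition_of_isRadical_general
    (k : Type*) [Field k] (n : ℕ) (I : Ideal (MvPolynomial (Fin n) k))
    (hrad : I.IsRadical) :
    ∀ σ : ℕ, 1 < σ → Odd σ →
      ∀ b : Polynomial (MvPolynomial (Fin n) k),
        b ^ σ ∈ ReesLike (MvPolynomial (Fin n) k) I →
        b ∈ ReesLike (MvPolynomial (Fin n) k) I := by
  intro σ _ hσ b hb
  have : IsReduced (MvPolynomial (Fin n) k ⧸ I) := (Ideal.isRadical_iff_quotient_reduced I).mp hrad
  rw [mem_reesLike_iff, ← map_mk_mem_range_expand_two_iff] at hb ⊢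
  rw [Polynomial.map_pow] at hb
  exact mem_range_expand_two_of_pow_mem_of_isReduced hσ hb

/-- **Theorem (RLseminormal, (1) ⇒ (2)).** Let `S = k[x 1, …, x n]` and `I` a radical
homogeneous ideal.  Then for every odd integer `σ > 1` and every `b ∈ S[t]`, if
`b^σ ∈ S[It,t²]` then `b ∈ S[It,t²]`. -/
theorem odd_power_condition_of_isRadical
    (k : Type*) [Field k] (n : ℕ) (I : Ideal (MvPolynomial (Fin n) k))
    (hhom : ∀ p ∈ I, ∀ d : ℕ, MvPolynomial.homogeneousComponent d p ∈ I)
    (hrad : I.IsRadical) :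
    ∀ σ : ℕ, 1 < σ → Odd σ →
      ∀ b : Polynomial (MvPolynomial (Fin n) k),
        b ^ σ ∈ ReesLike (MvPolynomial (Fin n) k) I →
        b ∈ ReesLike (MvPolynomial (Fin n) k) I :=
  odd_power_condition_of_isRadical_general k n I hrad
end

section
/- Let S be a polynomial ring over a field k with char(k) ≠ 2, and let I be a homogeneous ideal. Then I is radical if and only if the Rees-like algebra RL(I) = S[It,t^2] is seminormal. -/
open Polynomial

/-- Seminormality of a subring `A` of `S[t]` relative to its normalization `S[t]`
(the normalization of the Rees-like algebra is `S[t]`), phrased via the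
Leahy–Vitulli/Swan criterion: for every pair of coprime integers `1 < r < s`, whenever
`b ∈ S[t]` satisfies `b^r ∈ A` and `b^s ∈ A`, then `b ∈ A`. -/
def SeminormalIn {S : Type*} [CommRing S] (A : Subalgebra S (Polynomial S)) : Prop :=
  ∀ r s : ℕ, 1 < r → r < s → Nat.Coprime r s →
    ∀ b : Polynomial S, b ^ r ∈ A → b ^ s ∈ A → b ∈ A

/-- The subalgebra of `S[t]` of polynomials all of whose odd-degree coefficients lie in `I`. -/
def OddCoeffIn (S : Type*) [CommRing S] (I : Ideal S) : Subalgebra S (Polynomial S) where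
  carrier := {p | ∀ d : ℕ, Odd d → p.coeff d ∈ I}
  add_mem' := by
    intro p q hp hq d hd
    rw [Polynomial.coeff_add]
    exact Ideal.add_mem _ (hp d hd) (hq d hd)
  mul_mem' := by
    intro p q hp hq d hd
    rw [Polynomial.coeff_mul]
    refine Ideal.sum_mem _ ?_
    rintro ⟨i, j⟩ hij
    have hij' : i + j = d := Finset.HasAntidiagonal.mem_antidiagonal.mp hij
    rcases Nat.even_or_odd i with hi | hi
    · have hj : Odd j := by
        subst hij'
        rcases Nat.even_or_odd j with hj | hj
        · exact absurd (Even.add hi hj) (Nat.not_even_iff_odd.mpr hd)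
        · exact hj
      exact Ideal.mul_mem_left _ _ (hq j hj)
    · exact Ideal.mul_mem_right _ _ (hp i hi)
  algebraMap_mem' := by
    intro a d hd
    rw [Polynomial.algebraMap_eq, Polynomial.coeff_C]
    have : d ≠ 0 := by rintro rfl; exact (Nat.not_even_iff_odd.mpr hd) Even.zero
    simp [this]

theorem mem_reesLike_iff_s6 {S : Type*} [CommRing S] (I : Ideal S) (p : Polynomial S) :
    p ∈ ReesLike S I ↔ ∀ d : ℕ, Odd d → p.coeff d ∈ I := by
  constructor
  · intro hp
    have hle : ReesLike S I ≤ OddCoeffIn S I := by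
      apply Algebra.adjoin_le
      rintro q (⟨a, ha, rfl⟩ | hq)
      · intro d hd
        rw [Polynomial.coeff_C_mul, Polynomial.coeff_X]
        rcases eq_or_ne d 1 with rfl | h1
        · simpa using ha
        · simp [Ne.symm h1]
      · rcases Set.mem_singleton_iff.mp hq with rfl
        intro d hd
        have hd2 : d ≠ 2 := by
          rintro rfl
          exact (by decide : ¬ Odd 2) hd
        rw [Polynomial.coeff_X_pow, if_neg hd2]
        exact I.zero_mem
    exact hle hp
  · intro hp
    rw [p.as_sum_support]
    refine Subalgebra.sum_mem _ ?_
    intro d _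
    have key : ∀ c : S, (Odd d → c ∈ I) → Polynomial.monomial d c ∈ ReesLike S I := by
      intro c hc
      rcases Nat.even_or_odd d with ⟨e, he⟩ | ⟨e, he⟩
      · have hrepr : Polynomial.monomial d c = Polynomial.C c * (X ^ 2) ^ e := by
          subst he
          rw [← pow_mul, ← Polynomial.C_mul_X_pow_eq_monomial, two_mul]
        rw [hrepr]
        refine Subalgebra.mul_mem _ ?_ (Subalgebra.pow_mem _ ?_ _)
        · exact Subalgebra.algebraMap_mem _ c
        · exact Algebra.subset_adjoin (Set.mem_union_right _ rfl)
      · have hrepr : Polynomial.monomial d c = (Polynomial.C c * X) * (X ^ 2) ^ e := by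
          subst he
          rw [← pow_mul, ← Polynomial.C_mul_X_pow_eq_monomial, mul_assoc, ← pow_succ']
        rw [hrepr]
        refine Subalgebra.mul_mem _ ?_ (Subalgebra.pow_mem _ ?_ _)
        · exact Algebra.subset_adjoin (Set.mem_union_left _ ⟨c, hc ⟨e, he⟩, rfl⟩)
        · exact Algebra.subset_adjoin (Set.mem_union_right _ rfl)
    exact key _ (fun hd => hp d hd)

/-- Coefficients of the substitution `t ↦ -t`. -/
theorem coeff_aeval_neg_X {R : Type*} [CommRing R] (p : Polynomial R) (m : ℕ) :
    (Polynomial.aeval (-X : Polynomial R) p).coeff m = (-1) ^ m * p.coeff m := by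
  induction p using Polynomial.induction_on' with
  | add p q hp hq => simp [hp, hq, mul_add]
  | monomial d a =>
    rw [Polynomial.aeval_monomial, Polynomial.algebraMap_eq, neg_pow,
      show ((-1 : Polynomial R)) = Polynomial.C (-1) by simp, ← map_pow,
      mul_left_comm, Polynomial.coeff_C_mul, Polynomial.C_mul_X_pow_eq_monomial,
      Polynomial.coeff_monomial]
    rcases eq_or_ne d m with rfl | h
    · simp
    · simp [h]

theorem aeval_neg_X_eq_self {R : Type*} [CommRing R] (p : Polynomial R)
    (hp : ∀ d : ℕ, Odd d → p.coeff d = 0) :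
    Polynomial.aeval (-X : Polynomial R) p = p := by
  ext m
  rw [coeff_aeval_neg_X]
  rcases Nat.even_or_odd m with hm | hm
  · rw [hm.neg_one_pow, one_mul]
  · rw [hp m hm, mul_zero]

/-- In a domain, elements with equal coprime powers are equal. -/
theorem eq_of_pow_eq_pow_of_coprime {R : Type*} [CommRing R] [IsDomain R] {a b : R} {r s : ℕ}
    (hr : 1 < r) (hrs : r < s) (hco : Nat.Coprime r s)
    (h1 : a ^ r = b ^ r) (h2 : a ^ s = b ^ s) : a = b := by
  rcases eq_or_ne b 0 with rfl | hb
  · have ha : a ^ r = 0 := by rw [h1, zero_pow (show r ≠ 0 by omega)]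
    exact (pow_eq_zero_iff (show r ≠ 0 by omega)).mp ha
  -- Bezout via Euler's theorem: r ^ φ(s) ≡ 1 [MOD s]
  have hs1 : 1 < s := lt_trans hr hrs
  have htot : 1 ≤ Nat.totient s := Nat.totient_pos.mpr (by omega)
  have heuler : r ^ Nat.totient s % s = 1 := by
    have := (Nat.ModEq.pow_totient hco)
    unfold Nat.ModEq at this
    rwa [Nat.one_mod_eq_one.mpr (by omega)] at this
  obtain ⟨q, hNq⟩ : ∃ q, r ^ Nat.totient s = s * q + 1 := by
    refine ⟨r ^ Nat.totient s / s, ?_⟩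
    conv_lhs => rw [← Nat.div_add_mod (r ^ Nat.totient s) s]
    rw [heuler]
  have haN : a ^ (r ^ Nat.totient s) = b ^ (r ^ Nat.totient s) := by
    have hNr : r ^ Nat.totient s = r * r ^ (Nat.totient s - 1) := by
      rw [← pow_succ']
      congr 1
      omega
    rw [hNr, pow_mul, pow_mul, h1]
  have key : b ^ (s * q) * a = b ^ (s * q) * b := by
    have h2' : a ^ (s * q) = b ^ (s * q) := by rw [pow_mul, pow_mul, h2]
    calc b ^ (s * q) * a = a ^ (s * q) * a := by rw [h2']
    _ = a ^ (r ^ Nat.totient s) := by rw [hNq, pow_succ]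
    _ = b ^ (r ^ Nat.totient s) := haN
    _ = b ^ (s * q) * b := by rw [hNq, pow_succ]
  exact mul_left_cancel₀ (pow_ne_zero _ hb) key

/-- **Corollary (criteriaseminormal).** Let `k` be a field with `char k ≠ 2`, `S = k[x 1, …, x n]`
and `I` a homogeneous ideal.  Then `I` is radical if and only if the Rees-like algebra
`S[It, t²]` is seminormal. -/
theorem isRadical_iff_reesLike_seminormal
    (k : Type*) [Field k] (hchar : (2 : k) ≠ 0) (n : ℕ)
    (I : Ideal (MvPolynomial (Fin n) k))
    (hhom : ∀ p ∈ I, ∀ d : ℕ, MvPolynomial.homogeneousComponent d p ∈ I) :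
    I.IsRadical ↔ SeminormalIn (ReesLike (MvPolynomial (Fin n) k) I) := by
  set S := MvPolynomial (Fin n) k with hS
  constructor
  · -- radical ⇒ seminormal
    intro hrad r s hr hrs hco b hbr hbs
    rw [mem_reesLike_iff_s6] at hbr hbs ⊢
    intro d hd
    -- it suffices to show membership in every prime above `I`
    apply hrad
    rw [Ideal.radical_eq_sInf, Ideal.mem_sInf]
    rintro P ⟨hIP, hP⟩
    -- work modulo the prime `P`
    haveI := hP
    let φ : S →+* S ⧸ P := Ideal.Quotient.mk P
    let f : Polynomial (S ⧸ P) := b.map φ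
    have hmapfix : ∀ q : Polynomial S, (∀ d : ℕ, Odd d → q.coeff d ∈ I) →
        Polynomial.aeval (-X : Polynomial (S ⧸ P)) (q.map φ) = q.map φ := by
      intro q hq
      apply aeval_neg_X_eq_self
      intro e he
      rw [Polynomial.coeff_map]
      exact Ideal.Quotient.eq_zero_iff_mem.mpr (hIP (hq e he))
    have hfr : (Polynomial.aeval (-X : Polynomial (S ⧸ P)) f) ^ r = f ^ r := by
      rw [← map_pow, show f ^ r = (b ^ r).map φ by rw [Polynomial.map_pow]]
      exact hmapfix _ hbr
    have hfs : (Polynomial.aeval (-X : Polynomial (S ⧸ P)) f) ^ s = f ^ s := by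
      rw [← map_pow, show f ^ s = (b ^ s).map φ by rw [Polynomial.map_pow]]
      exact hmapfix _ hbs
    have hfix : Polynomial.aeval (-X : Polynomial (S ⧸ P)) f = f :=
      eq_of_pow_eq_pow_of_coprime hr hrs hco hfr hfs
    -- compare coefficients in odd degree `d`
    have hc : (-1 : S ⧸ P) ^ d * f.coeff d = f.coeff d := by
      conv_rhs => rw [← hfix]
      rw [coeff_aeval_neg_X]
    have hneg : ((-1 : S ⧸ P)) ^ d = -1 := Odd.neg_one_pow (α := S ⧸ P) hd
    rw [hneg] at hc
    have h2 : (2 : S ⧸ P) * f.coeff d = 0 := by linear_combination - hc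
    -- `2` is a unit since `char k ≠ 2`
    have hunit : φ (MvPolynomial.C ((2 : k)⁻¹)) * (2 : S ⧸ P) = 1 := by
      have : (2 : S ⧸ P) = φ (MvPolynomial.C (2 : k)) := by
        rw [show (MvPolynomial.C (2 : k) : S) = (2 : S) from map_ofNat _ 2]
        exact (map_ofNat φ 2).symm
      rw [this, ← map_mul, ← map_mul, inv_mul_cancel₀ hchar]
      simp [φ]
    have hzero : f.coeff d = 0 := by
      calc f.coeff d = (φ (MvPolynomial.C ((2 : k)⁻¹)) * (2 : S ⧸ P)) * f.coeff d := by
            rw [hunit, one_mul]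
      _ = φ (MvPolynomial.C ((2 : k)⁻¹)) * ((2 : S ⧸ P) * f.coeff d) := by ring
      _ = 0 := by rw [h2, mul_zero]
    have : φ (b.coeff d) = 0 := by rwa [← Polynomial.coeff_map]
    exact Ideal.Quotient.eq_zero_iff_mem.mp this
  · -- seminormal ⇒ radical
    intro hsn a ha
    rcases ha with ⟨m, hm⟩
    rcases Nat.eq_zero_or_pos m with rfl | hm0
    · rw [pow_zero] at hm
      simpa using Ideal.mul_mem_left I a hm
    -- use the pair (2, 2m+1)
    have hodd : Odd (2 * m + 1) := ⟨m, by ring⟩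
    have hmem : (Polynomial.C a * X) ∈ ReesLike S I := by
      apply hsn 2 (2 * m + 1) (by norm_num) (by omega) (Nat.coprime_two_left.mpr hodd)
      · rw [mem_reesLike_iff_s6]
        intro d hd
        rw [mul_pow, ← Polynomial.C_pow, Polynomial.C_mul_X_pow_eq_monomial,
          Polynomial.coeff_monomial]
        have h2d : 2 ≠ d := by
          rintro rfl
          exact (by decide : ¬ Odd 2) hd
        rw [if_neg h2d]
        exact I.zero_mem
      · rw [mem_reesLike_iff_s6]
        intro d hd
        rw [mul_pow, ← Polynomial.C_pow, Polynomial.C_mul_X_pow_eq_monomial,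
          Polynomial.coeff_monomial]
        rcases eq_or_ne (2 * m + 1) d with h | h
        · rw [if_pos h]
          have hsplit : a ^ (2 * m + 1) = a ^ m * a ^ (m + 1) := by
            rw [← pow_add]; congr 1; omega
          rw [hsplit]
          exact Ideal.mul_mem_right _ _ hm
        · rw [if_neg h]
          exact I.zero_mem
    rw [mem_reesLike_iff_s6] at hmem
    have := hmem 1 odd_one
    simpa using this
end

section
/- Let k be a perfect field of characteristic p > 2, S a polynomial ring over k, and I a radical homogeneous ideal such that the Rees-like algebra RL(I) = S[It,t^2] is F-split. Then S/I is F-split. -/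
/-!
An F-splitting `φ` of `RL(I) = S[It, t²]` restricts, through `s ↦ (φ s)₀`, to an F-splitting `ψ`
of `S`; it suffices to show `ψ(I) ⊆ I`. For `s ∈ I` and `p = 2m + 1`, the identity
`(s t²)ᵖ · s = (s t)ᵖ · (s t · t^{2m})` in `RL(I)` gives `s t² · φ(s) = s t · φ(s t^{2m+1})`.
Cancelling `s t` in the domain `S[t]` yields `t · φ(s) = φ(s t^{2m+1})`, so `ψ(s)` is the
coefficient of `t` in an element of `RL(I)`, and odd-degree coefficients of `RL(I)` lie in `I`.
-/

open Polynomial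

/-- A ring `A` of characteristic `p` is *F-split* if the Frobenius `A → A` splits as a map of
`A`-modules, i.e. there is an additive map `φ : A → A` with `φ(1) = 1` and
`φ(aᵖ·b) = a·φ(b)` for all `a b : A`. -/
def IsFSplit (p : ℕ) (A : Type*) [CommRing A] : Prop :=
  ∃ φ : A →+ A, φ 1 = 1 ∧ ∀ a b : A, φ (a ^ p * b) = a * φ b

def IsFrobeniusSplitting (p : ℕ) {A : Type*} [CommRing A] (φ : A →+ A) : Prop :=
  φ 1 = 1 ∧ ∀ a b : A, φ (a ^ p * b) = a * φ b

theorem IsFrobeniusSplitting.isFSplit_quotient {p : ℕ} {A : Type*} [CommRing A] {φ : A →+ A}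
    (hφ : IsFrobeniusSplitting p φ) {J : Ideal A} (hJ : ∀ a ∈ J, φ a ∈ J) :
    IsFSplit p (A ⧸ J) := by
  refine ⟨QuotientAddGroup.map J.toAddSubgroup J.toAddSubgroup φ hJ, ?_, ?_⟩
  · exact congrArg (Ideal.Quotient.mk J) hφ.1
  · rintro ⟨a⟩ ⟨b⟩
    exact congrArg (Ideal.Quotient.mk J) (hφ.2 a b)

namespace ReesLike

variable {S : Type*} [CommRing S] {I : Ideal S}

theorem C_mul_X_mem {s : S} (hs : s ∈ I) : C s * X ∈ ReesLike S I :=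
  Algebra.subset_adjoin (Or.inl ⟨s, hs, rfl⟩)

theorem X_sq_mem : (X ^ 2 : S[X]) ∈ ReesLike S I :=
  Algebra.subset_adjoin (Or.inr rfl)

theorem coeff_mem_of_odd {q : S[X]} (hq : q ∈ ReesLike S I) {j : ℕ} (hj : Odd j) :
    q.coeff j ∈ I := by
  induction hq using Algebra.adjoin_induction generalizing j with
  | mem x hx =>
    obtain ⟨a, ha, rfl⟩ | rfl := hx
    · rw [coeff_C_mul, coeff_X]
      split_ifs <;> simp [ha]
    · rw [coeff_X_pow, if_neg (by rintro rfl; exact Nat.not_odd_iff_even.mpr even_two hj)]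
      exact I.zero_mem
  | algebraMap r =>
    rw [algebraMap_eq, coeff_C, if_neg (by rintro rfl; exact Nat.not_odd_zero hj)]
    exact I.zero_mem
  | add x y _ _ ihx ihy =>
    rw [coeff_add]
    exact I.add_mem (ihx hj) (ihy hj)
  | mul x y _ _ ihx ihy =>
    rw [coeff_mul]
    refine Submodule.sum_mem _ fun ⟨i, l⟩ hil => ?_
    rw [Finset.HasAntidiagonal.mem_antidiagonal] at hil
    rcases Nat.even_or_odd i with hi | hi
    · have hl : Odd l := by
        rw [← hil, Nat.odd_add'] at hj
        exact hj.mpr hi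
      exact I.mul_mem_left _ (ihy hl)
    · exact I.mul_mem_right _ (ihx hi)

noncomputable def restrictDegreeZero (φ : ReesLike S I →+ ReesLike S I) : S →+ S :=
  (lcoeff S 0).toAddMonoidHom.comp <| ((ReesLike S I).val : ReesLike S I →+ S[X]).comp <|
    φ.comp (algebraMap S (ReesLike S I)).toAddMonoidHom

theorem restrictDegreeZero_apply (φ : ReesLike S I →+ ReesLike S I) (s : S) :
    restrictDegreeZero φ s = (φ (algebraMap S _ s) : S[X]).coeff 0 :=
  rfl

variable {p : ℕ} {φ : ReesLike S I →+ ReesLike S I}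

theorem isFrobeniusSplitting_restrictDegreeZero (hφ : IsFrobeniusSplitting p φ) :
    IsFrobeniusSplitting p (restrictDegreeZero φ) := by
  refine ⟨?_, fun a b => ?_⟩
  · rw [restrictDegreeZero_apply, map_one, hφ.1]
    simp
  · rw [restrictDegreeZero_apply, map_mul, map_pow, hφ.2, restrictDegreeZero_apply]
    exact coeff_C_mul _

theorem restrictDegreeZero_mem [IsDomain S] (hφ : IsFrobeniusSplitting p φ) (hp : Odd p)
    {s : S} (hs : s ∈ I) : restrictDegreeZero φ s ∈ I := by
  rcases eq_or_ne s 0 with rfl | hs0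
  · simp
  obtain ⟨m, rfl⟩ := hp
  let c : ReesLike S I := algebraMap S _ s
  let u : ReesLike S I := ⟨C s * X, C_mul_X_mem hs⟩
  let v : ReesLike S I := ⟨X ^ 2, X_sq_mem⟩
  have hfactor : (c * v) ^ (2 * m + 1) * c = u ^ (2 * m + 1) * (u * v ^ m) := by
    apply Subtype.ext
    simp only [Subalgebra.coe_mul, Subalgebra.coe_pow, Subalgebra.coe_algebraMap, c, u, v,
      algebraMap_eq]
    ring
  have hφcu : C s * X * (X * (φ c : S[X])) = C s * X * (φ (u * v ^ m) : S[X]) := by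
    have := congrArg Subtype.val (hφ.2 (c * v) c)
    rw [hfactor, hφ.2] at this
    simp only [Subalgebra.coe_mul, Subalgebra.coe_algebraMap, c, u, v, algebraMap_eq] at this
    linear_combination -this
  have hcancel := mul_left_cancel₀ (mul_ne_zero (C_ne_zero.mpr hs0) X_ne_zero) hφcu
  have hodd := coeff_mem_of_odd (φ (u * v ^ m)).2 (j := 0 + 1) odd_one
  rwa [← hcancel, coeff_X_mul] at hodd

theorem isFSplit_quotient_of_isFSplit [IsDomain S] (hp : Odd p)
    (hsplit : IsFSplit p (ReesLike S I)) : IsFSplit p (S ⧸ I) := by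
  obtain ⟨φ, hφ⟩ := hsplit
  exact (isFrobeniusSplitting_restrictDegreeZero hφ).isFSplit_quotient
    fun _ hs => restrictDegreeZero_mem hφ hp hs

end ReesLike

theorem quotient_isFSplit_of_reesLike_isFSplit_general
    (k : Type*) [Field k] (p : ℕ) [Fact p.Prime] (hp : 2 < p)
    (n : ℕ) (I : Ideal (MvPolynomial (Fin n) k))
    (hsplit : IsFSplit p (ReesLike (MvPolynomial (Fin n) k) I)) :
    IsFSplit p (MvPolynomial (Fin n) k ⧸ I) :=
  ReesLike.isFSplit_quotient_of_isFSplit ((Fact.out : p.Prime).odd_of_ne_two hp.ne') hsplit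

/-- **Theorem (Fsplit, ⇐).** Let `k` be a perfect field of characteristic `p > 2`,
`S = k[x 1, …, x n]`, and `I` a radical homogeneous ideal such that the Rees-like algebra
`S[It, t²]` is F-split.  Then `S/I` is F-split. -/
theorem quotient_isFSplit_of_reesLike_isFSplit
    (k : Type*) [Field k] (p : ℕ) [Fact p.Prime] [CharP k p] [PerfectRing k p] (hp : 2 < p)
    (n : ℕ) (I : Ideal (MvPolynomial (Fin n) k))
    (hhom : ∀ q ∈ I, ∀ d : ℕ, MvPolynomial.homogeneousComponent d q ∈ I)
    (hrad : I.IsRadical)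
    (hsplit : IsFSplit p (ReesLike (MvPolynomial (Fin n) k) I)) :
    IsFSplit p (MvPolynomial (Fin n) k ⧸ I) :=
  quotient_isFSplit_of_reesLike_isFSplit_general k p hp n I hsplit
end

section
/- Let T = S[y_1,...,y_m,z] with I = (f_1,...,f_m) ⊆ S, and let Q be the kernel of the S-algebra map T → S[t] sending y_i ↦ f_i t and z ↦ t^2. Then the elements g_m^even and g_m^odd defined for the sign pattern (f_1, -f_2, ±f_3,...,±f_m) lie in the corresponding Rees-like prime ideal, the kernel of the map sending y_1 ↦ f_1 t, y_2 ↦ -f_2 t, y_i ↦ ±f_i t (i ≥ 3), z ↦ t^2. -/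
/-!
Under `y i ↦ ε i f i t`, `z ↦ t²` the summand of `g_m` indexed by `S` becomes
`(∏_{i ∉ S} ε i) f 1 ⋯ f m t^N` with `N = m` in the even case and `N = m - 1` in the odd one,
so it suffices that `∑_S ∏_{i ∉ S} ε i` vanishes over the subsets of either parity.
The involution `S ↦ S ∆ {1, 2}` (indices `⟨0, _⟩`, `⟨1, _⟩` of `Fin m`) preserves the
parity of `#S` and, because `ε 1 = 1` and `ε 2 = -1`, flips the sign of `∏_{i ∉ S} ε i`.
-/

/-- `g m even = Σ_{S ⊆ {1,…,m}, |S| even} y^{S̄} f^S z^{|S|/2}`, where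
`y^{S̄} = Π_{i ∉ S} Y i` and `f^S = Π_{i ∈ S} F i`. -/
def gEvenFull {T : Type*} [CommRing T] {m : ℕ} (Y F : Fin m → T) (Z : T) : T :=
  ∑ S ∈ Finset.univ.powerset.filter (fun S : Finset (Fin m) => Even S.card),
    (∏ i ∈ Sᶜ, Y i) * (∏ i ∈ S, F i) * Z ^ (S.card / 2)

/-- `g m odd = Σ_{S ⊆ {1,…,m}, |S| odd} y^{S̄} f^S z^{(|S|-1)/2}`. -/
def gOddFull {T : Type*} [CommRing T] {m : ℕ} (Y F : Fin m → T) (Z : T) : T :=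
  ∑ S ∈ Finset.univ.powerset.filter (fun S : Finset (Fin m) => Odd S.card),
    (∏ i ∈ Sᶜ, Y i) * (∏ i ∈ S, F i) * Z ^ ((S.card - 1) / 2)

open Finset
open scoped symmDiff

section

variable {ι : Type*} [DecidableEq ι]

theorem Finset.card_symmDiff_add_two_mul_card_inter (s t : Finset ι) :
    #(s ∆ t) + 2 * #(s ∩ t) = #s + #t := by
  have hunion : s ∆ t ∪ s ∩ t = s ∪ t := by simpa using symmDiff_sup_inf s t
  have hdisj : Disjoint (s ∆ t) (s ∩ t) := disjoint_symmDiff_inf s t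
  rw [← card_union_add_card_inter, ← hunion, card_union_of_disjoint hdisj]
  ring

theorem Finset.even_card_symmDiff_iff (s t : Finset ι) :
    Even #(s ∆ t) ↔ (Even #s ↔ Even #t) := by
  rw [← Nat.even_add, ← card_symmDiff_add_two_mul_card_inter s t]
  simp [Nat.even_add]

theorem Finset.even_card_symmDiff_pair_iff {i j : ι} (hij : i ≠ j) (S : Finset ι) :
    Even #(S ∆ {i, j}) ↔ Even #S := by
  simp [even_card_symmDiff_iff, card_pair hij]

variable [Fintype ι]

theorem prod_compl_symmDiff_pair {R : Type*} [CommMonoid R] [HasDistribNeg R] {ε : ι → R}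
    {i j : ι} (hij : i ≠ j) (hi : ε i = 1) (hj : ε j = -1) (S : Finset ι) :
    ∏ k ∈ (S ∆ {i, j})ᶜ, ε k = -∏ k ∈ Sᶜ, ε k := by
  rw [← Fintype.prod_ite_mem _ ε, ← Fintype.prod_ite_mem Sᶜ ε, ← prod_mul_prod_compl {i, j},
    ← prod_mul_prod_compl {i, j}, prod_pair hij, prod_pair hij, ← neg_mul]
  congr 1
  · by_cases hiS : i ∈ S <;> by_cases hjS : j ∈ S <;> simp [hiS, hjS, hi, hj, hij, hij.symm]
  · refine prod_congr rfl fun k hk => ?_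
    simp only [mem_compl, mem_insert, mem_singleton, not_or] at hk
    simp [hk.1, hk.2]

variable {R : Type*} [CommRing R]

theorem sum_prod_compl_eq_zero_of_symmDiff_pair_mem {ε : ι → R} {i j : ι} (hij : i ≠ j)
    (hi : ε i = 1) (hj : ε j = -1) {𝒮 : Finset (Finset ι)}
    (h𝒮 : ∀ S ∈ 𝒮, S ∆ {i, j} ∈ 𝒮) :
    ∑ S ∈ 𝒮, ∏ k ∈ Sᶜ, ε k = 0 := by
  refine sum_involution (fun S _ => S ∆ {i, j}) (fun S _ => ?_) (fun S _ _ hS => ?_)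
    h𝒮 (fun S _ => symmDiff_symmDiff_cancel_right _ S)
  · rw [prod_compl_symmDiff_pair hij hi hj, add_neg_cancel]
  · simp [symmDiff_eq_left] at hS

theorem prod_compl_mul_prod_mul_sq_pow (a b : ι → R) (t : R) (S : Finset ι) (e : ℕ) :
    (∏ k ∈ Sᶜ, a k * b k * t) * (∏ k ∈ S, b k) * (t ^ 2) ^ e =
      (∏ k ∈ Sᶜ, a k) * ((∏ k, b k) * t ^ (#Sᶜ + 2 * e)) := by
  rw [prod_mul_distrib, prod_mul_distrib, prod_const, ← prod_compl_mul_prod S b]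
  ring

theorem sum_signed_monomials_eq_zero {ε : ι → R} {i j : ι} (hij : i ≠ j)
    (hi : ε i = 1) (hj : ε j = -1) {𝒮 : Finset (Finset ι)}
    (h𝒮 : ∀ S ∈ 𝒮, S ∆ {i, j} ∈ 𝒮) (b : ι → R) (t : R) (e : Finset ι → ℕ) {N : ℕ}
    (he : ∀ S ∈ 𝒮, #Sᶜ + 2 * e S = N) :
    ∑ S ∈ 𝒮, (∏ k ∈ Sᶜ, ε k * b k * t) * (∏ k ∈ S, b k) * (t ^ 2) ^ e S = 0 := by
  calc _ = ∑ S ∈ 𝒮, (∏ k ∈ Sᶜ, ε k) * ((∏ k, b k) * t ^ N) :=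
        sum_congr rfl fun S hS => by rw [prod_compl_mul_prod_mul_sq_pow, he S hS]
    _ = 0 := by rw [← sum_mul, sum_prod_compl_eq_zero_of_symmDiff_pair_mem hij hi hj h𝒮, zero_mul]

end

open MvPolynomial in
/-- **Lemma (evenodd).** Let `S = k[x 1, …, x n]`, `f 1, …, f m ∈ S`, and
`T = S[y 1, …, y m, z]`.  Let `ε i ∈ {±1}` with `ε 1 = 1` and `ε 2 = -1` (so `m ≥ 2`).
Then `g m even` and `g m odd` lie in the Rees-like prime `RLP(ε 1 f 1, …, ε m f m)`, the kernel
of the `S`-algebra map `T → S[t]`, `y i ↦ ε i f i t`, `z ↦ t²`. -/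
theorem gEven_gOdd_mem_signed_reesLikePrime
    (k : Type*) [Field k] (n m : ℕ) (hm : 2 ≤ m)
    (f : Fin m → MvPolynomial (Fin n) k)
    (ε : Fin m → MvPolynomial (Fin n) k)
    (hε0 : ε ⟨0, by omega⟩ = 1) (hε1 : ε ⟨1, by omega⟩ = -1) :
    (aeval (fun v : Option (Fin m) =>
        v.elim ((Polynomial.X : Polynomial (MvPolynomial (Fin n) k)) ^ 2)
          (fun i => Polynomial.C (ε i * f i) * Polynomial.X)) :
        MvPolynomial (Option (Fin m)) (MvPolynomial (Fin n) k) →ₐ[MvPolynomial (Fin n) k]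
          Polynomial (MvPolynomial (Fin n) k))
      (gEvenFull (fun i => X (some i)) (fun i => C (f i)) (X none)) = 0 ∧
    (aeval (fun v : Option (Fin m) =>
        v.elim ((Polynomial.X : Polynomial (MvPolynomial (Fin n) k)) ^ 2)
          (fun i => Polynomial.C (ε i * f i) * Polynomial.X)) :
        MvPolynomial (Option (Fin m)) (MvPolynomial (Fin n) k) →ₐ[MvPolynomial (Fin n) k]
          Polynomial (MvPolynomial (Fin n) k))
      (gOddFull (fun i => X (some i)) (fun i => C (f i)) (X none)) = 0 := by
  have h01 : (⟨0, by omega⟩ : Fin m) ≠ ⟨1, by omega⟩ := by simp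
  have hC0 : Polynomial.C (ε ⟨0, by omega⟩) = 1 := by rw [hε0, map_one]
  have hC1 : Polynomial.C (ε ⟨1, by omega⟩) = -1 := by rw [hε1, map_neg, map_one]
  have hcard (S : Finset (Fin m)) : #Sᶜ + #S = m := by
    rw [card_compl, Fintype.card_fin, Nat.sub_add_cancel (by simpa using card_le_univ S)]
  simp only [gEvenFull, gOddFull, map_sum, map_mul, map_prod, map_pow, aeval_X, aeval_C,
    Polynomial.algebraMap_eq, Option.elim]
  constructor
  · refine sum_signed_monomials_eq_zero h01 hC0 hC1 ?_ _ _ _ (N := m) fun S hS => ?_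
    · simp [even_card_symmDiff_pair_iff h01]
    · have := Nat.even_iff.mp (mem_filter.mp hS).2
      have := hcard S
      omega
  · refine sum_signed_monomials_eq_zero h01 hC0 hC1 ?_ _ _ _ (N := m - 1) fun S hS => ?_
    · simp [← Nat.not_even_iff_odd, even_card_symmDiff_pair_iff h01]
    · have := Nat.odd_iff.mp (mem_filter.mp hS).2
      have := hcard S
      omega
end

section
/- Let S = k[x_1,...,x_n] over a field k, I = (f_1,...,f_m) a homogeneous ideal, T = S[y_1,...,y_m,z], and Q = RLP(f_1,...,f_m) the Rees-like prime. Let C = (y_1^2 - z f_1^2, ..., y_m^2 - z f_m^2). Then Q = C : (g_m^odd), i.e., for h ∈ T, h·g_m^odd ∈ C if and only if h ∈ Q. -/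
open MvPolynomial
set_option synthInstance.maxHeartbeats 400000
set_option maxHeartbeats 1000000
set_option linter.unusedVariables false

/-- The Rees-like prime: the kernel of the `S`-algebra map
`T = S[y 1, …, y m, z] → S[t]` sending `y i ↦ f i · t` and `z ↦ t²`. -/
noncomputable def RLP {k : Type*} [Field k] {n m : ℕ}
    (f : Fin m → MvPolynomial (Fin n) k) :
    Ideal (MvPolynomial (Option (Fin m)) (MvPolynomial (Fin n) k)) :=
  RingHom.ker ((aeval (fun v : Option (Fin m) =>
      v.elim ((Polynomial.X : Polynomial (MvPolynomial (Fin n) k)) ^ 2)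
        (fun i => Polynomial.C (f i) * Polynomial.X)) :
    MvPolynomial (Option (Fin m)) (MvPolynomial (Fin n) k) →ₐ[MvPolynomial (Fin n) k]
      Polynomial (MvPolynomial (Fin n) k)) :
    MvPolynomial (Option (Fin m)) (MvPolynomial (Fin n) k) →+*
      Polynomial (MvPolynomial (Fin n) k))

section Aux

open Finset

/-- number of odd-cardinality subsets of a nonempty finset -/
theorem card_odd_powerset {ι : Type*} [DecidableEq ι] (U : Finset ι) (hU : U.Nonempty) :
    ((U.powerset.filter fun S => Odd S.card).card) = 2 ^ (U.card - 1) := by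
  classical
  have h0 : (∑ S ∈ U.powerset, (-1 : ℤ) ^ S.card) = 0 :=
    Finset.sum_powerset_neg_one_pow_card_of_nonempty hU
  rw [← Finset.sum_filter_add_sum_filter_not U.powerset (fun S => Odd S.card)] at h0
  have h1 : (∑ S ∈ U.powerset.filter fun S => Odd S.card, (-1 : ℤ) ^ S.card)
      = -((U.powerset.filter fun S => Odd S.card).card : ℤ) := by
    rw [Finset.sum_congr rfl (fun S hS => (Finset.mem_filter.1 hS).2.neg_one_pow)]
    simp [mul_comm]
  have h2 : (∑ S ∈ U.powerset.filter fun S => ¬ Odd S.card, (-1 : ℤ) ^ S.card)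
      = ((U.powerset.filter fun S => ¬ Odd S.card).card : ℤ) := by
    rw [Finset.sum_congr rfl (fun S hS => Even.neg_one_pow (by
      have := (Finset.mem_filter.1 hS).2; simpa [Nat.not_odd_iff_even] using this))]
    simp
  have h3 : (U.powerset.filter fun S => Odd S.card).card
      + (U.powerset.filter fun S => ¬ Odd S.card).card = 2 ^ U.card := by
    rw [Finset.card_filter_add_card_filter_not, Finset.card_powerset]
  have h4 : 2 ^ U.card = 2 * 2 ^ (U.card - 1) := by
    rw [← pow_succ']
    congr 1
    have := hU.card_pos
    omega
  rw [h1, h2] at h0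
  omega

variable {k : Type*} [Field k] {n m : ℕ} (f : Fin m → MvPolynomial (Fin n) k)

local notation "A" => MvPolynomial (Fin n) k
local notation "T" => MvPolynomial (Option (Fin m)) (MvPolynomial (Fin n) k)

noncomputable def phiF : T →ₐ[MvPolynomial (Fin n) k] Polynomial (MvPolynomial (Fin n) k) :=
  aeval (fun v : Option (Fin m) =>
      v.elim ((Polynomial.X : Polynomial (MvPolynomial (Fin n) k)) ^ 2)
        (fun i => Polynomial.C (f i) * Polynomial.X))

noncomputable def CidI : Ideal (MvPolynomial (Option (Fin m)) (MvPolynomial (Fin n) k)) :=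
  Ideal.span (Set.range fun i : Fin m =>
          (X (some i)) ^ 2 - X none * MvPolynomial.C (f i) ^ 2)

noncomputable def WE : T :=
  ∑ δ ∈ Finset.univ.filter (fun δ : Finset (Fin m) => ¬ Even (δ.card + m)),
    (∏ i ∈ δᶜ, MvPolynomial.C (f i)) * (X none) ^ ((m - 1 - δ.card) / 2) * ∏ i ∈ δ, X (some i)

noncomputable def WO : T :=
  ∑ δ ∈ Finset.univ.filter (fun δ : Finset (Fin m) => Even (δ.card + m)),
    (∏ i ∈ δᶜ, MvPolynomial.C (f i)) * (X none) ^ ((m - δ.card) / 2) * ∏ i ∈ δ, X (some i)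

theorem gOdd_eq_WE :
    gOddFull (fun i => X (some i)) (fun i => MvPolynomial.C (f i)) (X none) = WE f := by
  classical
  unfold gOddFull WE
  refine Finset.sum_nbij' (fun S => Sᶜ) (fun δ => δᶜ) ?_ ?_ ?_ ?_ ?_
  · intro S hS
    simp only [Finset.mem_filter, Finset.mem_powerset] at hS
    obtain ⟨-, hodd⟩ := hS
    simp only [Finset.mem_filter, Finset.mem_univ, true_and]
    have hc : Sᶜ.card = m - S.card := by
      rw [Finset.card_compl, Fintype.card_fin]
    have hle : S.card ≤ m := by
      simpa using Finset.card_le_card (Finset.subset_univ S)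
    rw [hc]
    rw [Nat.odd_iff] at hodd
    rw [Nat.even_iff]
    omega
  · intro δ hδ
    simp only [Finset.mem_filter, Finset.mem_univ, true_and] at hδ
    simp only [Finset.mem_filter, Finset.mem_powerset]
    refine ⟨Finset.subset_univ _, ?_⟩
    have hc : δᶜ.card = m - δ.card := by
      rw [Finset.card_compl, Fintype.card_fin]
    have hle : δ.card ≤ m := by
      simpa using Finset.card_le_card (Finset.subset_univ δ)
    rw [hc, Nat.odd_iff]
    rw [Nat.even_iff] at hδ
    omega
  · intro S _; exact compl_compl S
  · intro δ _; exact compl_compl δ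
  · intro S hS
    simp only [Finset.mem_filter, Finset.mem_powerset] at hS
    obtain ⟨-, hodd⟩ := hS
    have hle : S.card ≤ m := by
      simpa using Finset.card_le_card (Finset.subset_univ S)
    have hc : Sᶜ.card = m - S.card := by
      rw [Finset.card_compl, Fintype.card_fin]
    rw [compl_compl]
    have he : (S.card - 1) / 2 = (m - 1 - Sᶜ.card) / 2 := by
      rw [hc]
      have := hodd.pos
      omega
    rw [← he]
    ring

end Aux

section Swap

variable {k : Type*} [Field k] {n m : ℕ} (f : Fin m → MvPolynomial (Fin n) k)

theorem swap_E (i : Fin m) :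
    X (some i) * WE f - MvPolynomial.C (f i) * WO f ∈ CidI f := by
  classical
  unfold WE WO
  rw [Finset.mul_sum, Finset.mul_sum]
  rw [show (∑ δ ∈ Finset.univ.filter (fun δ : Finset (Fin m) => Even (δ.card + m)),
        MvPolynomial.C (f i) * ((∏ j ∈ δᶜ, MvPolynomial.C (f j)) *
          (X none) ^ ((m - δ.card) / 2) * ∏ j ∈ δ, X (some j)))
      = ∑ δ ∈ Finset.univ.filter (fun δ : Finset (Fin m) => ¬ Even (δ.card + m)),
        MvPolynomial.C (f i) *
          ((∏ j ∈ (if i ∈ δ then δ.erase i else insert i δ)ᶜ, MvPolynomial.C (f j)) *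
          (X none) ^ ((m - (if i ∈ δ then δ.erase i else insert i δ).card) / 2) *
          ∏ j ∈ (if i ∈ δ then δ.erase i else insert i δ), X (some j)) from ?_, ← Finset.sum_sub_distrib]
  · refine Ideal.sum_mem _ (fun δ hδ => ?_)
    simp only [Finset.mem_filter, Finset.mem_univ, true_and] at hδ
    by_cases hi : i ∈ δ
    · rw [if_pos hi]
      have hprodY : ∏ j ∈ δ, X (some j)
          = (X (some i) : MvPolynomial (Option (Fin m)) (MvPolynomial (Fin n) k)) *
            ∏ j ∈ δ.erase i, X (some j) := (Finset.mul_prod_erase δ _ hi).symm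
      have hprodC : ∏ j ∈ (δ.erase i)ᶜ, (MvPolynomial.C (f j) :
            MvPolynomial (Option (Fin m)) (MvPolynomial (Fin n) k))
          = MvPolynomial.C (f i) * ∏ j ∈ δᶜ, MvPolynomial.C (f j) := by
        rw [Finset.compl_erase]
        exact Finset.prod_insert (by simp [hi])
      have hcard : δ.card ≤ m := by
        simpa using Finset.card_le_card (Finset.subset_univ δ)
      have hpos : 1 ≤ δ.card := Finset.card_pos.2 ⟨i, hi⟩
      have hexp : (m - (δ.erase i).card) / 2 = (m - 1 - δ.card) / 2 + 1 := by
        rw [Finset.card_erase_of_mem hi]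
        rw [Nat.even_iff] at hδ
        omega
      have heq : X (some i) * ((∏ j ∈ δᶜ, MvPolynomial.C (f j)) *
            (X none) ^ ((m - 1 - δ.card) / 2) * ∏ j ∈ δ, X (some j)) -
          MvPolynomial.C (f i) * ((∏ j ∈ (δ.erase i)ᶜ, MvPolynomial.C (f j)) *
            (X none) ^ ((m - (δ.erase i).card) / 2) * ∏ j ∈ δ.erase i, X (some j))
          = ((∏ j ∈ δᶜ, MvPolynomial.C (f j)) * (X none) ^ ((m - 1 - δ.card) / 2) *
              ∏ j ∈ δ.erase i, X (some j)) *
            (X (some i) ^ 2 - X none * MvPolynomial.C (f i) ^ 2) := by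
        rw [hprodY, hprodC, hexp, pow_succ]
        ring
      rw [heq]
      exact Ideal.mul_mem_left _ _ (Ideal.subset_span ⟨i, rfl⟩)
    · rw [if_neg hi]
      have hprodY : ∏ j ∈ insert i δ, X (some j)
          = (X (some i) : MvPolynomial (Option (Fin m)) (MvPolynomial (Fin n) k)) *
            ∏ j ∈ δ, X (some j) := Finset.prod_insert hi
      have hprodC : ∏ j ∈ δᶜ, (MvPolynomial.C (f j) :
            MvPolynomial (Option (Fin m)) (MvPolynomial (Fin n) k))
          = MvPolynomial.C (f i) * ∏ j ∈ (insert i δ)ᶜ, MvPolynomial.C (f j) := by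
        rw [Finset.compl_insert]
        exact (Finset.mul_prod_erase _ _ (by simpa using hi)).symm
      have hexp : (m - (insert i δ).card) / 2 = (m - 1 - δ.card) / 2 := by
        rw [Finset.card_insert_of_notMem hi]
        omega
      have heq : X (some i) * ((∏ j ∈ δᶜ, MvPolynomial.C (f j)) *
            (X none) ^ ((m - 1 - δ.card) / 2) * ∏ j ∈ δ, X (some j)) -
          MvPolynomial.C (f i) * ((∏ j ∈ (insert i δ)ᶜ, MvPolynomial.C (f j)) *
            (X none) ^ ((m - (insert i δ).card) / 2) * ∏ j ∈ insert i δ, X (some j)) = 0 := by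
        rw [hprodY, hprodC, hexp]
        ring
      rw [heq]
      exact Ideal.zero_mem _
  · refine (Finset.sum_nbij' (fun δ => if i ∈ δ then δ.erase i else insert i δ)
      (fun δ => if i ∈ δ then δ.erase i else insert i δ) ?_ ?_ ?_ ?_ ?_).symm
    · intro δ hδ
      simp only [Finset.mem_filter, Finset.mem_univ, true_and] at hδ ⊢
      by_cases hi : i ∈ δ
      · rw [if_pos hi, Finset.card_erase_of_mem hi]
        have hpos : 1 ≤ δ.card := Finset.card_pos.2 ⟨i, hi⟩
        rw [Nat.even_iff] at hδ ⊢
        omega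
      · rw [if_neg hi, Finset.card_insert_of_notMem hi]
        rw [Nat.even_iff] at hδ ⊢
        omega
    · intro δ hδ
      simp only [Finset.mem_filter, Finset.mem_univ, true_and] at hδ ⊢
      by_cases hi : i ∈ δ
      · rw [if_pos hi, Finset.card_erase_of_mem hi]
        have hpos : 1 ≤ δ.card := Finset.card_pos.2 ⟨i, hi⟩
        rw [Nat.even_iff] at hδ ⊢
        omega
      · rw [if_neg hi, Finset.card_insert_of_notMem hi]
        rw [Nat.even_iff] at hδ ⊢
        omega
    · intro δ hδ
      by_cases hi : i ∈ δ
      · simp [hi, Finset.insert_erase hi]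
      · simp [hi, Finset.erase_insert hi]
    · intro δ hδ
      by_cases hi : i ∈ δ
      · simp [hi, Finset.insert_erase hi]
      · simp [hi, Finset.erase_insert hi]
    · intro δ hδ
      rfl

end Swap

section Swap2

variable {k : Type*} [Field k] {n m : ℕ} (f : Fin m → MvPolynomial (Fin n) k)

theorem swap_O (i : Fin m) :
    X (some i) * WO f - MvPolynomial.C (f i) * X none * WE f ∈ CidI f := by
  classical
  unfold WE WO
  rw [Finset.mul_sum, Finset.mul_sum]
  rw [show (∑ δ ∈ Finset.univ.filter (fun δ : Finset (Fin m) => ¬ Even (δ.card + m)),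
        MvPolynomial.C (f i) * X none * ((∏ j ∈ δᶜ, MvPolynomial.C (f j)) *
          (X none) ^ ((m - 1 - δ.card) / 2) * ∏ j ∈ δ, X (some j)))
      = ∑ δ ∈ Finset.univ.filter (fun δ : Finset (Fin m) => Even (δ.card + m)),
        MvPolynomial.C (f i) * X none *
          ((∏ j ∈ (if i ∈ δ then δ.erase i else insert i δ)ᶜ, MvPolynomial.C (f j)) *
          (X none) ^ ((m - 1 - (if i ∈ δ then δ.erase i else insert i δ).card) / 2) *
          ∏ j ∈ (if i ∈ δ then δ.erase i else insert i δ), X (some j)) from ?_,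
      ← Finset.sum_sub_distrib]
  · refine Ideal.sum_mem _ (fun δ hδ => ?_)
    simp only [Finset.mem_filter, Finset.mem_univ, true_and] at hδ
    by_cases hi : i ∈ δ
    · rw [if_pos hi]
      have hprodY : ∏ j ∈ δ, X (some j)
          = (X (some i) : MvPolynomial (Option (Fin m)) (MvPolynomial (Fin n) k)) *
            ∏ j ∈ δ.erase i, X (some j) := (Finset.mul_prod_erase δ _ hi).symm
      have hprodC : ∏ j ∈ (δ.erase i)ᶜ, (MvPolynomial.C (f j) :
            MvPolynomial (Option (Fin m)) (MvPolynomial (Fin n) k))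
          = MvPolynomial.C (f i) * ∏ j ∈ δᶜ, MvPolynomial.C (f j) := by
        rw [Finset.compl_erase]
        exact Finset.prod_insert (by simp [hi])
      have hcard : δ.card ≤ m := by
        simpa using Finset.card_le_card (Finset.subset_univ δ)
      have hpos : 1 ≤ δ.card := Finset.card_pos.2 ⟨i, hi⟩
      have hexp : (m - 1 - (δ.erase i).card) / 2 = (m - δ.card) / 2 := by
        rw [Finset.card_erase_of_mem hi]
        omega
      have heq : X (some i) * ((∏ j ∈ δᶜ, MvPolynomial.C (f j)) *
            (X none) ^ ((m - δ.card) / 2) * ∏ j ∈ δ, X (some j)) -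
          MvPolynomial.C (f i) * X none * ((∏ j ∈ (δ.erase i)ᶜ, MvPolynomial.C (f j)) *
            (X none) ^ ((m - 1 - (δ.erase i).card) / 2) * ∏ j ∈ δ.erase i, X (some j))
          = ((∏ j ∈ δᶜ, MvPolynomial.C (f j)) * (X none) ^ ((m - δ.card) / 2) *
              ∏ j ∈ δ.erase i, X (some j)) *
            (X (some i) ^ 2 - X none * MvPolynomial.C (f i) ^ 2) := by
        rw [hprodY, hprodC, hexp]
        ring
      rw [heq]
      exact Ideal.mul_mem_left _ _ (Ideal.subset_span ⟨i, rfl⟩)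
    · rw [if_neg hi]
      have hprodY : ∏ j ∈ insert i δ, X (some j)
          = (X (some i) : MvPolynomial (Option (Fin m)) (MvPolynomial (Fin n) k)) *
            ∏ j ∈ δ, X (some j) := Finset.prod_insert hi
      have hprodC : ∏ j ∈ δᶜ, (MvPolynomial.C (f j) :
            MvPolynomial (Option (Fin m)) (MvPolynomial (Fin n) k))
          = MvPolynomial.C (f i) * ∏ j ∈ (insert i δ)ᶜ, MvPolynomial.C (f j) := by
        rw [Finset.compl_insert]
        exact (Finset.mul_prod_erase _ _ (by simpa using hi)).symm
      have hlt : δ.card < m := by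
        have hne : δ ≠ Finset.univ := fun h => hi (by rw [h]; exact Finset.mem_univ i)
        simpa using Finset.card_lt_card (Finset.ssubset_univ_iff.2 hne)
      have hexp : (m - 1 - (insert i δ).card) / 2 + 1 = (m - δ.card) / 2 := by
        rw [Finset.card_insert_of_notMem hi]
        rw [Nat.even_iff] at hδ
        omega
      have heq : X (some i) * ((∏ j ∈ δᶜ, MvPolynomial.C (f j)) *
            (X none) ^ ((m - δ.card) / 2) * ∏ j ∈ δ, X (some j)) -
          MvPolynomial.C (f i) * X none * ((∏ j ∈ (insert i δ)ᶜ, MvPolynomial.C (f j)) *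
            (X none) ^ ((m - 1 - (insert i δ).card) / 2) * ∏ j ∈ insert i δ, X (some j)) = 0 := by
        rw [hprodY, hprodC, ← hexp, pow_succ]
        ring
      rw [heq]
      exact Ideal.zero_mem _
  · refine (Finset.sum_nbij' (fun δ => if i ∈ δ then δ.erase i else insert i δ)
      (fun δ => if i ∈ δ then δ.erase i else insert i δ) ?_ ?_ ?_ ?_ ?_).symm
    · intro δ hδ
      simp only [Finset.mem_filter, Finset.mem_univ, true_and] at hδ ⊢
      by_cases hi : i ∈ δ
      · rw [if_pos hi, Finset.card_erase_of_mem hi]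
        have hpos : 1 ≤ δ.card := Finset.card_pos.2 ⟨i, hi⟩
        rw [Nat.even_iff] at hδ ⊢
        omega
      · rw [if_neg hi, Finset.card_insert_of_notMem hi]
        rw [Nat.even_iff] at hδ ⊢
        omega
    · intro δ hδ
      simp only [Finset.mem_filter, Finset.mem_univ, true_and] at hδ ⊢
      by_cases hi : i ∈ δ
      · rw [if_pos hi, Finset.card_erase_of_mem hi]
        have hpos : 1 ≤ δ.card := Finset.card_pos.2 ⟨i, hi⟩
        rw [Nat.even_iff] at hδ ⊢
        omega
      · rw [if_neg hi, Finset.card_insert_of_notMem hi]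
        rw [Nat.even_iff] at hδ ⊢
        omega
    · intro δ hδ
      by_cases hi : i ∈ δ
      · simp [hi, Finset.insert_erase hi]
      · simp [hi, Finset.erase_insert hi]
    · intro δ hδ
      by_cases hi : i ∈ δ
      · simp [hi, Finset.insert_erase hi]
      · simp [hi, Finset.erase_insert hi]
    · intro δ hδ
      rfl

end Swap2

section Key

variable {k : Type*} [Field k] {n m : ℕ} (f : Fin m → MvPolynomial (Fin n) k)

theorem key_decomp (h : MvPolynomial (Option (Fin m)) (MvPolynomial (Fin n) k)) :
    ∃ eE eO : Polynomial (MvPolynomial (Fin n) k),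
      phiF f h = (Polynomial.expand _ 2) eE + Polynomial.X * (Polynomial.expand _ 2) eO ∧
      h * gOddFull (fun i => X (some i)) (fun i => MvPolynomial.C (f i)) (X none) -
        (Polynomial.eval₂ MvPolynomial.C (X none) eE * WE f +
         Polynomial.eval₂ MvPolynomial.C (X none) eO * WO f) ∈ CidI f := by
  have hgW := gOdd_eq_WE f
  have hz : phiF f (X none) = Polynomial.X ^ 2 := by simp [phiF]
  have hy : ∀ i : Fin m, phiF f (X (some i)) = Polynomial.C (f i) * Polynomial.X := by
    intro i; simp [phiF]
  induction h using MvPolynomial.induction_on with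
  | C a =>
      refine ⟨Polynomial.C a, 0, ?_, ?_⟩
      · simp [phiF, Polynomial.expand_C]
      · rw [hgW]
        have : MvPolynomial.C a * WE f -
            (Polynomial.eval₂ MvPolynomial.C (X none) (Polynomial.C a) * WE f +
             Polynomial.eval₂ MvPolynomial.C (X none)
               (0 : Polynomial (MvPolynomial (Fin n) k)) * WO f) = 0 := by
          rw [Polynomial.eval₂_C, Polynomial.eval₂_zero]
          ring
        rw [this]
        exact Ideal.zero_mem _
  | add p q ihp ihq =>
      obtain ⟨eEp, eOp, hp1, hp2⟩ := ihp
      obtain ⟨eEq, eOq, hq1, hq2⟩ := ihq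
      refine ⟨eEp + eEq, eOp + eOq, ?_, ?_⟩
      · rw [map_add, hp1, hq1, map_add, map_add]
        ring
      · have : (p + q) * gOddFull (fun i => X (some i))
              (fun i => MvPolynomial.C (f i)) (X none) -
            (Polynomial.eval₂ MvPolynomial.C (X none) (eEp + eEq) * WE f +
             Polynomial.eval₂ MvPolynomial.C (X none) (eOp + eOq) * WO f)
            = (p * gOddFull (fun i => X (some i)) (fun i => MvPolynomial.C (f i)) (X none) -
                (Polynomial.eval₂ MvPolynomial.C (X none) eEp * WE f +
                 Polynomial.eval₂ MvPolynomial.C (X none) eOp * WO f)) +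
              (q * gOddFull (fun i => X (some i)) (fun i => MvPolynomial.C (f i)) (X none) -
                (Polynomial.eval₂ MvPolynomial.C (X none) eEq * WE f +
                 Polynomial.eval₂ MvPolynomial.C (X none) eOq * WO f)) := by
          rw [Polynomial.eval₂_add, Polynomial.eval₂_add]
          ring
        rw [this]
        exact Ideal.add_mem _ hp2 hq2
  | mul_X p v ih =>
      obtain ⟨eE, eO, h1, h2⟩ := ih
      cases v with
      | none =>
          refine ⟨Polynomial.X * eE, Polynomial.X * eO, ?_, ?_⟩
          · rw [map_mul, hz, h1, map_mul, map_mul, Polynomial.expand_X]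
            ring
          · have : p * X none * gOddFull (fun i => X (some i))
                  (fun i => MvPolynomial.C (f i)) (X none) -
                (Polynomial.eval₂ MvPolynomial.C (X none) (Polynomial.X * eE) * WE f +
                 Polynomial.eval₂ MvPolynomial.C (X none) (Polynomial.X * eO) * WO f)
                = X none * (p * gOddFull (fun i => X (some i))
                    (fun i => MvPolynomial.C (f i)) (X none) -
                  (Polynomial.eval₂ MvPolynomial.C (X none) eE * WE f +
                   Polynomial.eval₂ MvPolynomial.C (X none) eO * WO f)) := by
              rw [Polynomial.eval₂_mul, Polynomial.eval₂_mul, Polynomial.eval₂_X]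
              ring
            rw [this]
            exact Ideal.mul_mem_left _ _ h2
      | some i =>
          refine ⟨Polynomial.C (f i) * Polynomial.X * eO, Polynomial.C (f i) * eE, ?_, ?_⟩
          · rw [map_mul, hy i, h1, map_mul, map_mul, map_mul, Polynomial.expand_X,
              Polynomial.expand_C]
            ring
          · have : p * X (some i) * gOddFull (fun i => X (some i))
                  (fun i => MvPolynomial.C (f i)) (X none) -
                (Polynomial.eval₂ MvPolynomial.C (X none)
                    (Polynomial.C (f i) * Polynomial.X * eO) * WE f +
                 Polynomial.eval₂ MvPolynomial.C (X none) (Polynomial.C (f i) * eE) * WO f)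
                = X (some i) * (p * gOddFull (fun i => X (some i))
                    (fun i => MvPolynomial.C (f i)) (X none) -
                  (Polynomial.eval₂ MvPolynomial.C (X none) eE * WE f +
                   Polynomial.eval₂ MvPolynomial.C (X none) eO * WO f)) +
                  Polynomial.eval₂ MvPolynomial.C (X none) eE *
                    (X (some i) * WE f - MvPolynomial.C (f i) * WO f) +
                  Polynomial.eval₂ MvPolynomial.C (X none) eO *
                    (X (some i) * WO f - MvPolynomial.C (f i) * X none * WE f) := by
              rw [Polynomial.eval₂_mul, Polynomial.eval₂_mul, Polynomial.eval₂_mul,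
                Polynomial.eval₂_X, Polynomial.eval₂_C]
              ring
            rw [this]
            exact Ideal.add_mem _ (Ideal.add_mem _ (Ideal.mul_mem_left _ _ h2)
              (Ideal.mul_mem_left _ _ (swap_E f i))) (Ideal.mul_mem_left _ _ (swap_O f i))

end Key

section Parity

theorem expand2_parity_zero {R : Type*} [CommRing R] (eE eO : Polynomial R)
    (h : (Polynomial.expand R 2) eE + Polynomial.X * (Polynomial.expand R 2) eO = 0) :
    eE = 0 ∧ eO = 0 := by
  constructor
  · ext j
    have h2 := congrArg (fun p => Polynomial.coeff p (2 * j)) h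
    simp only [Polynomial.coeff_add, Polynomial.coeff_zero] at h2
    have e1 : ((Polynomial.expand R 2) eE).coeff (2 * j) = eE.coeff j :=
      Polynomial.coeff_expand_mul' two_pos _ _
    have e2 : (Polynomial.X * (Polynomial.expand R 2) eO).coeff (2 * j) = 0 := by
      cases j with
      | zero => simp [Polynomial.mul_coeff_zero]
      | succ j =>
          rw [show 2 * (j + 1) = (2 * j + 1) + 1 by ring, Polynomial.coeff_X_mul,
            Polynomial.coeff_expand two_pos]
          have hnd : ¬ (2 ∣ 2 * j + 1) := by omega
          simp [hnd]
    rw [e1, e2] at h2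
    simpa using h2
  · ext j
    have h2 := congrArg (fun p => Polynomial.coeff p (2 * j + 1)) h
    simp only [Polynomial.coeff_add, Polynomial.coeff_zero] at h2
    have e1 : ((Polynomial.expand R 2) eE).coeff (2 * j + 1) = 0 := by
      rw [Polynomial.coeff_expand two_pos]
      have hnd : ¬ (2 ∣ 2 * j + 1) := by omega
      simp [hnd]
    have e2 : (Polynomial.X * (Polynomial.expand R 2) eO).coeff (2 * j + 1) = eO.coeff j := by
      rw [Polynomial.coeff_X_mul]
      exact Polynomial.coeff_expand_mul' two_pos _ _
    rw [e1, e2] at h2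
    simpa using h2

end Parity

section Forward

variable {k : Type*} [Field k] {n m : ℕ} (f : Fin m → MvPolynomial (Fin n) k)

theorem forward_dir (h : MvPolynomial (Option (Fin m)) (MvPolynomial (Fin n) k))
    (hker : phiF f h = 0) :
    h * gOddFull (fun i => X (some i)) (fun i => MvPolynomial.C (f i)) (X none) ∈ CidI f := by
  obtain ⟨eE, eO, h1, h2⟩ := key_decomp f h
  rw [hker] at h1
  obtain ⟨hE0, hO0⟩ := expand2_parity_zero eE eO h1.symm
  rw [hE0, hO0] at h2
  simpa using h2

end Forward

section Converse

open scoped Classical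

theorem prod_X_eq_monomial' {σ R : Type*} [CommSemiring R] [DecidableEq σ] (s : Finset σ) :
    (∏ i ∈ s, (X i : MvPolynomial σ R)) =
      monomial (∑ i ∈ s, Finsupp.single i 1) 1 := by
  induction s using Finset.induction_on with
  | empty => simp
  | @insert a s ha ih =>
      rw [Finset.prod_insert ha, Finset.sum_insert ha, ih,
        show (X a : MvPolynomial σ R) = monomial (Finsupp.single a 1) 1 by
          rw [← C_mul_X_eq_monomial, map_one, one_mul],
        monomial_mul, one_mul]

variable {k : Type*} [Field k] {n m : ℕ} (f : Fin m → MvPolynomial (Fin n) k)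

noncomputable def Zset : Finset (Fin m) := Finset.univ.filter (fun i => f i = 0)

noncomputable def Zind : Fin m →₀ ℕ := ∑ i ∈ Zset f, Finsupp.single i 1

noncomputable def psiF :
    MvPolynomial (Option (Fin m)) (MvPolynomial (Fin n) k) →+*
      MvPolynomial (Fin m) (Polynomial (MvPolynomial (Fin n) k)) :=
  MvPolynomial.eval₂Hom (MvPolynomial.C.comp Polynomial.C)
    (fun v => v.elim (MvPolynomial.C (Polynomial.X ^ 2))
      (fun i => if f i = 0 then X i
        else MvPolynomial.C (Polynomial.C (f i) * Polynomial.X)))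

theorem Zind_apply (j : Fin m) : Zind f j = if j ∈ Zset f then 1 else 0 := by
  rw [Zind]
  rw [show ((∑ i ∈ Zset f, Finsupp.single i 1) : Fin m →₀ ℕ) j
      = ∑ i ∈ Zset f, (Finsupp.single i 1 : Fin m →₀ ℕ) j from
    by rw [Finsupp.finset_sum_apply]]
  rw [Finset.sum_congr rfl (fun i _ => Finsupp.single_apply)]
  simp [eq_comm]

theorem constCoeff_psi (h : MvPolynomial (Option (Fin m)) (MvPolynomial (Fin n) k)) :
    MvPolynomial.constantCoeff (psiF f h) = phiF f h := by
  have : (MvPolynomial.constantCoeff.comp (psiF f) :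
      MvPolynomial (Option (Fin m)) (MvPolynomial (Fin n) k) →+*
        Polynomial (MvPolynomial (Fin n) k)) = (phiF f : _ →+* _) := by
    apply MvPolynomial.ringHom_ext
    · intro a
      simp [psiF, phiF]
    · intro v
      cases v with
      | none => simp [psiF, phiF]
      | some i =>
          by_cases hfi : f i = 0
          · simp [psiF, phiF, hfi]
          · simp [psiF, phiF, hfi]
  exact DFunLike.congr_fun this h

end Converse

section PsiG

open scoped Classical

variable {k : Type*} [Field k] {n m : ℕ} (f : Fin m → MvPolynomial (Fin n) k)

theorem psi_g (hne : ∃ i, f i ≠ 0) :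
    psiF f (gOddFull (fun i => X (some i)) (fun i => MvPolynomial.C (f i)) (X none))
      = 2 ^ (m - 1 - (Zset f).card) •
        monomial (Zind f) (Polynomial.C (∏ i ∈ (Zset f)ᶜ, f i) *
          Polynomial.X ^ (m - 1 - (Zset f).card)) := by
  have hZcard : (Zset f).card ≤ m := by
    simpa using Finset.card_le_card (Finset.subset_univ (Zset f))
  have hZc : ((Zset f)ᶜ).card = m - (Zset f).card := by
    rw [Finset.card_compl, Fintype.card_fin]
  have hZcne : ((Zset f)ᶜ).Nonempty := by
    obtain ⟨i, hi⟩ := hne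
    exact ⟨i, by simp [Zset, hi]⟩
  have hZlt : (Zset f).card < m := by
    have := Finset.card_pos.2 hZcne
    omega
  unfold gOddFull
  rw [map_sum]
  rw [← Finset.sum_subset (s₁ := ((Zset f)ᶜ.powerset.filter fun S => Odd S.card))
    (by
      intro S hS
      simp only [Finset.mem_filter, Finset.mem_powerset] at hS ⊢
      exact ⟨Finset.subset_univ _, hS.2⟩)
    (by
      intro S hS hnS
      simp only [Finset.mem_filter, Finset.mem_powerset] at hS hnS
      have hbad : ∃ i ∈ S, f i = 0 := by
        by_contra hc
        push_neg at hc
        exact hnS ⟨fun i hi => by simp [Zset, hc i hi], hS.2⟩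
      obtain ⟨i, hiS, hfi⟩ := hbad
      have hz : (∏ i ∈ S, MvPolynomial.C (f i) :
          MvPolynomial (Option (Fin m)) (MvPolynomial (Fin n) k)) = 0 := by
        rw [← map_prod, Finset.prod_eq_zero hiS hfi, map_zero]
      rw [hz, mul_zero, zero_mul, map_zero])]
  have hterm : ∀ S ∈ (Zset f)ᶜ.powerset.filter fun S => Odd S.card,
      psiF f ((∏ i ∈ Sᶜ, X (some i)) * (∏ i ∈ S, MvPolynomial.C (f i)) *
        (X none) ^ ((S.card - 1) / 2))
      = monomial (Zind f) (Polynomial.C (∏ i ∈ (Zset f)ᶜ, f i) *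
          Polynomial.X ^ (m - 1 - (Zset f).card)) := by
    intro S hS
    simp only [Finset.mem_filter, Finset.mem_powerset] at hS
    obtain ⟨hSsub, hSodd⟩ := hS
    have hcard : S.card ≤ ((Zset f)ᶜ).card := Finset.card_le_card hSsub
    have hpos : 1 ≤ S.card := hSodd.pos
    rw [map_mul, map_mul, map_pow, map_prod, map_prod]
    have hXnone : psiF f (X none) = MvPolynomial.C (Polynomial.X ^ 2) := by
      simp [psiF]
    have hXsome : ∀ i : Fin m, psiF f (X (some i)) =
        if f i = 0 then X i
        else MvPolynomial.C (Polynomial.C (f i) * Polynomial.X) := by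
      intro i; simp [psiF]
    have hCa : ∀ i : Fin m, psiF f (MvPolynomial.C (f i)) =
        MvPolynomial.C (Polynomial.C (f i)) := by
      intro i; simp [psiF]
    rw [hXnone, Finset.prod_congr rfl (fun i _ => hXsome i),
      Finset.prod_congr rfl (fun i _ => hCa i)]
    rw [Finset.prod_ite (fun i => (X i :
        MvPolynomial (Fin m) (Polynomial (MvPolynomial (Fin n) k))))
      (fun i => MvPolynomial.C (Polynomial.C (f i) * Polynomial.X))]
    have hfilt1 : Sᶜ.filter (fun i => f i = 0) = Zset f := by
      ext i
      simp only [Finset.mem_filter, Finset.mem_compl, Zset, Finset.mem_univ, true_and]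
      constructor
      · exact fun h => h.2
      · intro h
        refine ⟨fun hiS => ?_, h⟩
        have := hSsub hiS
        simp [Zset, Finset.mem_compl] at this
        exact this h
    have hfilt2 : Sᶜ.filter (fun i => ¬ f i = 0) = (Zset f)ᶜ \ S := by
      ext i
      simp only [Finset.mem_filter, Finset.mem_compl, Finset.mem_sdiff, Zset,
        Finset.mem_univ, true_and]
      constructor
      · exact fun h => ⟨h.2, h.1⟩
      · exact fun h => ⟨h.2, h.1⟩
    rw [hfilt1, hfilt2]
    rw [← map_prod, Finset.prod_mul_distrib, ← map_prod, Finset.prod_const,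
      ← map_prod, prod_X_eq_monomial', ← Zind]
    have hcards : ((Zset f)ᶜ \ S).card = m - (Zset f).card - S.card := by
      rw [Finset.card_sdiff_of_subset hSsub, hZc]
    have hprods : (∏ i ∈ (Zset f)ᶜ \ S, f i) * ∏ i ∈ S, f i = ∏ i ∈ (Zset f)ᶜ, f i := by
      rw [← Finset.prod_union Finset.sdiff_disjoint, Finset.sdiff_union_of_subset hSsub]
    have hexp : (m - (Zset f).card - S.card) + 2 * ((S.card - 1) / 2)
        = m - 1 - (Zset f).card := by
      rw [Nat.odd_iff] at hSodd
      omega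
    have hpowmon : ((MvPolynomial.monomial (0 : Fin m →₀ ℕ))
          ((Polynomial.X : Polynomial (MvPolynomial (Fin n) k)) ^ 2)) ^ ((S.card - 1) / 2)
        = MvPolynomial.monomial (0 : Fin m →₀ ℕ)
            ((Polynomial.X : Polynomial (MvPolynomial (Fin n) k))
              ^ (2 * ((S.card - 1) / 2))) := by
      rw [MvPolynomial.monomial_pow, smul_zero, ← pow_mul]
    rw [C_apply, C_apply, monomial_mul, C_apply, hpowmon, monomial_mul, monomial_mul]
    congr 1
    · simp
    · rw [one_mul, ← map_prod, ← hprods, map_mul, ← hexp, pow_add, hcards]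
      ring
  rw [Finset.sum_congr rfl hterm, Finset.sum_const, card_odd_powerset _ hZcne, hZc,
    show m - (Zset f).card - 1 = m - 1 - (Zset f).card by omega]

end PsiG

section ConverseMain

open scoped Classical

variable {k : Type*} [Field k] {n m : ℕ} (f : Fin m → MvPolynomial (Fin n) k)

theorem converse_dir (hchar : (2 : k) ≠ 0) (hne : ∃ i, f i ≠ 0)
    (h : MvPolynomial (Option (Fin m)) (MvPolynomial (Fin n) k))
    (hmem : h * gOddFull (fun i => X (some i)) (fun i => MvPolynomial.C (f i)) (X none)
      ∈ CidI f) :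
    phiF f h = 0 := by
  have hmap := Ideal.mem_map_of_mem (psiF f) hmem
  rw [CidI, Ideal.map_span, ← Set.range_comp] at hmap
  obtain ⟨c, hc⟩ := Ideal.mem_span_range_iff_exists_fun.mp hmap
  have hXnone : psiF f (X none) = MvPolynomial.C (Polynomial.X ^ 2) := by simp [psiF]
  have hco : ∀ i : Fin m, MvPolynomial.coeff (Zind f)
      (c i * ((psiF f) ∘ fun i : Fin m =>
        X (some i) ^ 2 - X none * MvPolynomial.C (f i) ^ 2) i) = 0 := by
    intro i
    by_cases hfi : f i = 0
    · have hgen : ((psiF f) ∘ fun i : Fin m =>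
          X (some i) ^ 2 - X none * MvPolynomial.C (f i) ^ 2) i
          = monomial (Finsupp.single i 2) 1 := by
        simp only [Function.comp_apply, map_sub, map_mul, map_pow, hXnone]
        rw [show psiF f (X (some i)) = X i by simp [psiF, hfi], hfi]
        simp [X_pow_eq_monomial]
      rw [hgen, MvPolynomial.coeff_mul_monomial']
      have hnle : ¬ Finsupp.single i 2 ≤ Zind f := by
        intro hle
        have h2 := hle i
        rw [Finsupp.single_eq_same, Zind_apply] at h2
        split at h2 <;> omega
      rw [if_neg hnle]
    · have hgen : ((psiF f) ∘ fun i : Fin m =>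
          X (some i) ^ 2 - X none * MvPolynomial.C (f i) ^ 2) i = 0 := by
        simp only [Function.comp_apply, map_sub, map_mul, map_pow, hXnone]
        rw [show psiF f (X (some i)) = MvPolynomial.C (Polynomial.C (f i) * Polynomial.X)
            by simp [psiF, hfi],
          show psiF f (MvPolynomial.C (f i)) = MvPolynomial.C (Polynomial.C (f i))
            by simp [psiF]]
        have e1 : (MvPolynomial.C (Polynomial.C (f i)) :
              MvPolynomial (Fin m) (Polynomial (MvPolynomial (Fin n) k))) ^ 2
            = MvPolynomial.C (Polynomial.C (f i) ^ 2) := (map_pow _ _ _).symm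
        have e2 : (MvPolynomial.C (Polynomial.C (f i) * Polynomial.X) :
              MvPolynomial (Fin m) (Polynomial (MvPolynomial (Fin n) k))) ^ 2
            = MvPolynomial.C ((Polynomial.C (f i) * Polynomial.X) ^ 2) := (map_pow _ _ _).symm
        have e3 : (MvPolynomial.C (Polynomial.X :
              Polynomial (MvPolynomial (Fin n) k)) :
              MvPolynomial (Fin m) (Polynomial (MvPolynomial (Fin n) k))) ^ 2
            = MvPolynomial.C ((Polynomial.X : Polynomial (MvPolynomial (Fin n) k)) ^ 2) :=
          (map_pow _ _ _).symm
        rw [e1, e2, e3, ← map_mul, ← map_sub,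
          show (Polynomial.C (f i) * Polynomial.X) ^ 2 -
            Polynomial.X ^ 2 * Polynomial.C (f i) ^ 2 = 0 by ring, map_zero]
      rw [hgen, mul_zero, MvPolynomial.coeff_zero]
  have hzero : MvPolynomial.coeff (Zind f)
      (psiF f (h * gOddFull (fun i => X (some i))
        (fun i => MvPolynomial.C (f i)) (X none))) = 0 := by
    rw [← hc, MvPolynomial.coeff_sum]
    exact Finset.sum_eq_zero (fun i _ => hco i)
  rw [map_mul, psi_g f hne, mul_smul_comm, MvPolynomial.coeff_smul] at hzero
  have hmon := MvPolynomial.coeff_mul_monomial (0 : Fin m →₀ ℕ) (Zind f)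
    (Polynomial.C (∏ i ∈ (Zset f)ᶜ, f i) * Polynomial.X ^ (m - 1 - (Zset f).card)) (psiF f h)
  rw [zero_add] at hmon
  rw [hmon] at hzero
  have hcc : MvPolynomial.coeff 0 (psiF f h) = phiF f h := by
    rw [show (MvPolynomial.coeff 0 (psiF f h)) = MvPolynomial.constantCoeff (psiF f h) by
      rw [MvPolynomial.constantCoeff_eq], constCoeff_psi]
  rw [hcc, nsmul_eq_mul] at hzero
  have hNne : ((2 ^ (m - 1 - (Zset f).card) : ℕ) :
      Polynomial (MvPolynomial (Fin n) k)) ≠ 0 := by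
    rw [← map_natCast (algebraMap k (Polynomial (MvPolynomial (Fin n) k)))]
    rw [map_ne_zero_iff _ (algebraMap k (Polynomial (MvPolynomial (Fin n) k))).injective]
    rw [Nat.cast_pow, Nat.cast_ofNat]
    exact pow_ne_zero _ hchar
  rcases mul_eq_zero.mp hzero with hN | hz
  · exact absurd hN hNne
  rcases mul_eq_zero.mp hz with h0 | h0
  · exact h0
  exfalso
  have hc0 : (Polynomial.C (∏ i ∈ (Zset f)ᶜ, f i) *
      Polynomial.X ^ (m - 1 - (Zset f).card) :
        Polynomial (MvPolynomial (Fin n) k)) ≠ 0 := by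
    apply mul_ne_zero
    · refine fun hcz => ?_
      rw [Polynomial.C_eq_zero] at hcz
      obtain ⟨i, hi, hfz⟩ := Finset.prod_eq_zero_iff.mp hcz
      simp only [Finset.mem_compl, Zset, Finset.mem_filter, Finset.mem_univ, true_and] at hi
      exact hi hfz
    · exact pow_ne_zero _ Polynomial.X_ne_zero
  exact hc0 h0

end ConverseMain

/-- **Lemma (SES, first part).** Let `S = k[x 1, …, x n]` with `char k ≠ 2`,
`I = (f 1, …, f m)` homogeneous of height `≥ 2`, `T = S[y 1, …, y m, z]`,
`Q = RLP(f 1, …, f m)` and `C = (y 1² - z f 1², …, y m² - z f m²)`.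
Then `Q = C : (g m odd)`: for all `h ∈ T`, `h · g m odd ∈ C` iff `h ∈ Q`. -/
theorem reesLikePrime_eq_colon_gOdd
    (k : Type*) [Field k] (hchar : (2 : k) ≠ 0) (n m : ℕ)
    (f : Fin m → MvPolynomial (Fin n) k)
    (hhom : ∀ i, ∃ d : ℕ, (f i).IsHomogeneous d)
    (hht : ∀ p : PrimeSpectrum (MvPolynomial (Fin n) k),
      Ideal.span (Set.range f) ≤ p.asIdeal → 2 ≤ Order.height p) :
    ∀ h : MvPolynomial (Option (Fin m)) (MvPolynomial (Fin n) k),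
      h * gOddFull (fun i => X (some i)) (fun i => MvPolynomial.C (f i)) (X none) ∈
        Ideal.span (Set.range fun i : Fin m =>
          (X (some i)) ^ 2 - X none * MvPolynomial.C (f i) ^ 2) ↔
      h ∈ RLP f := by
  
  have hne : ∃ i, f i ≠ 0 := by
    by_contra hc
    push_neg at hc
    have hle : Ideal.span (Set.range f) ≤ (⊥ : Ideal (MvPolynomial (Fin n) k)) :=
      Ideal.span_le.2 (by rintro x ⟨i, rfl⟩; simp [hc i])
    have h2 := hht ⟨⊥, Ideal.bot_prime⟩ hle
    have h0 : Order.height (⟨⊥, Ideal.bot_prime⟩ :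
        PrimeSpectrum (MvPolynomial (Fin n) k)) = 0 :=
      Order.height_eq_zero.mpr (fun q _ =>
        (PrimeSpectrum.asIdeal_le_asIdeal _ _).mp bot_le)
    rw [h0] at h2
    exact absurd h2 (by simp)
  intro h
  constructor
  · intro hmem
    have h0 : phiF f h = 0 := converse_dir f hchar hne h hmem
    exact RingHom.mem_ker.mpr h0
  · intro hker
    exact forward_dir f h (RingHom.mem_ker.mp hker)
end

section
/- Let T = S[y_1,...,y_m,z] with S = k[x_1,...,x_n] and I = (f_1,...,f_m). Set C = (y_1^2 - z f_1^2,..., y_m^2 - z f_m^2). Then (C + (g_m^odd)) : (g_m^even) = IT + (y_1,...,y_m). -/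
open MvPolynomial

/-!
Splitting off an index `j` writes `g_even = y_j e + z f_j o` and `g_odd = y_j o + f_j e`, with
`e`, `o` the analogous sums over the remaining indices. Hence
`y_j g_even = e (y_j² - z f_j²) + z f_j g_odd` and `f_j g_even = y_j g_odd - o (y_j² - z f_j²)`,
which gives `IT + (y) ⊆ (C + (g_odd)) : g_even`. Conversely, modulo `IT` we have
`g_even ≡ ∏ y_i`, `g_odd ≡ 0` and `C ≡ (y_1², …, y_m²)`; in `(S/I)[y, z]` a polynomial `p` with
`p ∏ y_i ∈ (y_1², …, y_m²)` lies in `(y_1, …, y_m)`, as every monomial of `p ∏ y_i` is divisible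
by some `y_i²`.
-/

open Finset Ideal

section SubsetSum

variable {ι T : Type*} [DecidableEq ι] [CommRing T] (Y F : ι → T)

def weightedSubsetSum (c : ℕ → T) (U : Finset ι) : T :=
  ∑ S ∈ U.powerset, (∏ i ∈ U \ S, Y i) * (∏ i ∈ S, F i) * c S.card

theorem weightedSubsetSum_insert (c : ℕ → T) {a : ι} {U : Finset ι} (ha : a ∉ U) :
    weightedSubsetSum Y F c (insert a U) =
      Y a * weightedSubsetSum Y F c U + F a * weightedSubsetSum Y F (fun k => c (k + 1)) U := by
  rw [weightedSubsetSum, sum_powerset_insert ha, weightedSubsetSum, weightedSubsetSum, mul_sum,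
    mul_sum]
  congr 1 <;> refine sum_congr rfl fun S hS => ?_ <;>
    have haS : a ∉ S := fun h => ha (mem_powerset.1 hS h)
  · rw [insert_sdiff_of_notMem _ haS, prod_insert (by simp [ha])]
    ring
  · rw [insert_sdiff_insert, sdiff_insert_of_notMem ha, prod_insert haS,
      card_insert_of_notMem haS]
    ring

theorem weightedSubsetSum_eq_of_mem (c : ℕ → T) {a : ι} {U : Finset ι} (ha : a ∈ U) :
    weightedSubsetSum Y F c U = Y a * weightedSubsetSum Y F c (U.erase a) +
      F a * weightedSubsetSum Y F (fun k => c (k + 1)) (U.erase a) := by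
  rw [← weightedSubsetSum_insert Y F c (notMem_erase a U), insert_erase ha]

theorem weightedSubsetSum_const_mul (a : T) (c : ℕ → T) (U : Finset ι) :
    weightedSubsetSum Y F (fun k => a * c k) U = a * weightedSubsetSum Y F c U := by
  simp only [weightedSubsetSum, mul_sum]
  exact sum_congr rfl fun S _ => by ring

theorem weightedSubsetSum_sub_prod_mem_span_range (c : ℕ → T) (U : Finset ι) :
    weightedSubsetSum Y F c U - (∏ i ∈ U, Y i) * c 0 ∈ span (Set.range F) := by
  induction U using Finset.induction_on generalizing c with
  | empty => simp [weightedSubsetSum]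
  | insert a U ha ih =>
    have hFa : F a ∈ span (Set.range F) := subset_span ⟨a, rfl⟩
    convert add_mem (mul_mem_left _ (Y a) (ih c))
      (mul_mem_right (weightedSubsetSum Y F (fun k => c (k + 1)) U) _ hFa) using 1
    rw [weightedSubsetSum_insert Y F c ha, prod_insert ha]
    ring

end SubsetSum

section Weights

variable {T : Type*} [CommRing T] (Z : T)

def evenWeight (k : ℕ) : T := if Even k then Z ^ (k / 2) else 0

def oddWeight (k : ℕ) : T := if Odd k then Z ^ ((k - 1) / 2) else 0

@[simp] theorem evenWeight_zero : evenWeight Z 0 = 1 := by simp [evenWeight]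

@[simp] theorem oddWeight_zero : oddWeight Z 0 = 0 := by simp [oddWeight]

theorem evenWeight_succ (k : ℕ) : evenWeight Z (k + 1) = Z * oddWeight Z k := by
  rcases Nat.even_or_odd k with hk | hk
  · simp [evenWeight, oddWeight, Nat.even_add_one, hk, Nat.not_odd_iff_even.2 hk]
  · have : (k + 1) / 2 = (k - 1) / 2 + 1 := by obtain ⟨j, rfl⟩ := hk; omega
    simp [evenWeight, oddWeight, hk, this, pow_succ, mul_comm]

theorem oddWeight_succ (k : ℕ) : oddWeight Z (k + 1) = evenWeight Z k := by
  simp [evenWeight, oddWeight, Nat.odd_add_one]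

end Weights

section Split

variable {T : Type*} [CommRing T] {m : ℕ} (Y F : Fin m → T) (Z : T)

theorem gEvenFull_eq_weightedSubsetSum :
    gEvenFull Y F Z = weightedSubsetSum Y F (evenWeight Z) univ := by
  simp [gEvenFull, weightedSubsetSum, evenWeight, sum_filter, compl_eq_univ_sdiff]

theorem gOddFull_eq_weightedSubsetSum :
    gOddFull Y F Z = weightedSubsetSum Y F (oddWeight Z) univ := by
  simp [gOddFull, weightedSubsetSum, oddWeight, sum_filter, compl_eq_univ_sdiff]

theorem gEvenFull_eq_erase (j : Fin m) :
    gEvenFull Y F Z = Y j * weightedSubsetSum Y F (evenWeight Z) (univ.erase j) +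
      Z * F j * weightedSubsetSum Y F (oddWeight Z) (univ.erase j) := by
  rw [gEvenFull_eq_weightedSubsetSum, weightedSubsetSum_eq_of_mem Y F _ (mem_univ j)]
  simp only [evenWeight_succ, weightedSubsetSum_const_mul]
  ring

theorem gOddFull_eq_erase (j : Fin m) :
    gOddFull Y F Z = Y j * weightedSubsetSum Y F (oddWeight Z) (univ.erase j) +
      F j * weightedSubsetSum Y F (evenWeight Z) (univ.erase j) := by
  rw [gOddFull_eq_weightedSubsetSum, weightedSubsetSum_eq_of_mem Y F _ (mem_univ j)]
  simp only [oddWeight_succ]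

end Split

section Colon

variable {T : Type*} [CommRing T] {m : ℕ} (Y F : Fin m → T) (Z : T)

theorem span_range_sup_span_range_le_colon :
    span (Set.range Y) ⊔ span (Set.range F) ≤
      (span (Set.range fun i => Y i ^ 2 - Z * F i ^ 2) ⊔ span {gOddFull Y F Z}).colon
        (span {gEvenFull Y F Z}) := by
  set K := span (Set.range fun i => Y i ^ 2 - Z * F i ^ 2) ⊔ span {gOddFull Y F Z}
  have hC (j : Fin m) : Y j ^ 2 - Z * F j ^ 2 ∈ K := mem_sup_left (subset_span ⟨j, rfl⟩)
  have hgOdd : gOddFull Y F Z ∈ K := mem_sup_right (mem_span_singleton_self _)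
  refine sup_le (span_le.2 ?_) (span_le.2 ?_) <;> rintro _ ⟨j, rfl⟩ <;>
    rw [SetLike.mem_coe, mem_colon_span_singleton]
  all_goals
    have hE := gEvenFull_eq_erase Y F Z j
    have hO := gOddFull_eq_erase Y F Z j
    set e := weightedSubsetSum Y F (evenWeight Z) (univ.erase j)
    set o := weightedSubsetSum Y F (oddWeight Z) (univ.erase j)
  · have : Y j * gEvenFull Y F Z = e * (Y j ^ 2 - Z * F j ^ 2) + Z * F j * gOddFull Y F Z := by
      rw [hE, hO]; ring
    rw [this]
    exact add_mem (mul_mem_left _ _ (hC j)) (mul_mem_left _ _ hgOdd)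
  · have : F j * gEvenFull Y F Z = Y j * gOddFull Y F Z - o * (Y j ^ 2 - Z * F j ^ 2) := by
      rw [hE, hO]; ring
    rw [this]
    exact sub_mem (mul_mem_left _ _ hgOdd) (mul_mem_left _ _ (hC j))

theorem mul_prod_mem_of_mul_gEvenFull_mem {h : T}
    (hh : h * gEvenFull Y F Z ∈
      span (Set.range fun i => Y i ^ 2 - Z * F i ^ 2) ⊔ span {gOddFull Y F Z}) :
    h * ∏ i, Y i ∈ span (Set.range fun i => Y i ^ 2) ⊔ span (Set.range F) := by
  set J := span (Set.range F)
  set K := span (Set.range fun i => Y i ^ 2) ⊔ J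
  have hJK : J ≤ K := le_sup_right
  have hF (j : Fin m) : F j ∈ J := subset_span ⟨j, rfl⟩
  have hE : gEvenFull Y F Z - ∏ i, Y i ∈ J := by
    simpa [gEvenFull_eq_weightedSubsetSum] using
      weightedSubsetSum_sub_prod_mem_span_range Y F (evenWeight Z) univ
  have hO : gOddFull Y F Z ∈ J := by
    simpa [gOddFull_eq_weightedSubsetSum] using
      weightedSubsetSum_sub_prod_mem_span_range Y F (oddWeight Z) univ
  have hCK : span (Set.range fun i => Y i ^ 2 - Z * F i ^ 2) ⊔ span {gOddFull Y F Z} ≤ K := by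
    refine sup_le (span_le.2 ?_) (span_singleton_le_iff_mem _ |>.2 (hJK hO))
    rintro _ ⟨j, rfl⟩
    exact sub_mem (mem_sup_left (subset_span ⟨j, rfl⟩))
      (hJK (mul_mem_left _ _ (pow_mem_of_mem _ (hF j) 2 two_pos)))
  have : h * ∏ i, Y i = h * gEvenFull Y F Z - h * (gEvenFull Y F Z - ∏ i, Y i) := by ring
  rw [this]
  exact sub_mem (hCK hh) (hJK (mul_mem_left _ _ hE))

end Colon

section Polynomial

variable {A σ ι : Type*} [Fintype ι] {g : ι → σ}

theorem mem_span_X_of_mul_prod_X_mem_span_X_sq [CommSemiring A] (hg : Function.Injective g)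
    {p : MvPolynomial σ A}
    (hp : p * ∏ i, X (g i) ∈ span (Set.range fun i => (X (g i) : MvPolynomial σ A) ^ 2)) :
    p ∈ span (Set.range fun i => (X (g i) : MvPolynomial σ A)) := by
  classical
  set D : σ →₀ ℕ := ∑ i, Finsupp.single (g i) 1
  have hD (i : ι) : D (g i) = 1 := by
    simp [D, Finsupp.finsetSum_apply, Finsupp.single_apply, hg.eq_iff]
  have hprod : ∏ i, (X (g i) : MvPolynomial σ A) = monomial D 1 := by
    simp only [D, monomial_sum_one, X]
  have hsq : (Set.range fun i => (X (g i) : MvPolynomial σ A) ^ 2) =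
      (fun s => monomial s 1) '' Set.range fun i => Finsupp.single (g i) 2 := by
    rw [← Set.range_comp]
    simp [Function.comp_def, X_pow_eq_monomial]
  rw [hsq, mem_ideal_span_monomial_image] at hp
  rw [Set.range_comp' X g, mem_ideal_span_X_image]
  intro d hd
  have hdD : d + D ∈ (p * ∏ i, X (g i)).support := by
    rwa [hprod, mem_support_iff, coeff_mul_monomial, mul_one, ← mem_support_iff]
  obtain ⟨_, ⟨i, rfl⟩, hle⟩ := hp (d + D) hdD
  have := hle (g i)
  simp only [Finsupp.single_eq_same, Finsupp.add_apply, hD] at this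
  exact ⟨g i, ⟨i, rfl⟩, by omega⟩

theorem mem_span_X_sup_map_C_of_mul_prod_X_mem [CommRing A] (hg : Function.Injective g)
    {I : Ideal A} {p : MvPolynomial σ A}
    (hp : p * ∏ i, X (g i) ∈ span (Set.range fun i => (X (g i) : MvPolynomial σ A) ^ 2) ⊔
      I.map C) :
    p ∈ span (Set.range fun i => (X (g i) : MvPolynomial σ A)) ⊔ I.map C := by
  set ψ : MvPolynomial σ A →+* MvPolynomial σ (A ⧸ I) := map (Ideal.Quotient.mk I)
  have hker : RingHom.ker ψ = I.map C := by
    rw [ker_map, Ideal.mk_ker]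
  have hψp : ψ p * ∏ i, X (g i) ∈ span (Set.range fun i => X (g i) ^ 2) := by
    have := mem_map_of_mem ψ hp
    rw [Ideal.map_sup, (map_eq_bot_iff_le_ker ψ).2 hker.ge, sup_bot_eq, Ideal.map_span,
      ← Set.range_comp] at this
    simpa [Function.comp_def, ψ] using this
  have hψ : Function.Surjective ψ := map_surjective _ Ideal.Quotient.mk_surjective
  rw [← hker, ← comap_map_of_surjective' ψ hψ, mem_comap, Ideal.map_span, ← Set.range_comp]
  simpa [Function.comp_def, ψ] using mem_span_X_of_mul_prod_X_mem_span_X_sq hg hψp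

end Polynomial

/-- **Lemma (SES, second part).** Let `S = k[x 1, …, x n]`, `I = (f 1, …, f m)`,
`T = S[y 1, …, y m, z]` and `C = (y 1² - z f 1², …, y m² - z f m²)`.  Then
`(C + (g m odd)) : (g m even) = I·T + (y 1, …, y m)`: for all `h ∈ T`,
`h · g m even ∈ C + (g m odd)` iff `h ∈ I·T + (y 1, …, y m)`. -/
theorem colon_gEven_eq_IT_sup_y
    (k : Type*) [Field k] (n m : ℕ) (f : Fin m → MvPolynomial (Fin n) k) :
    ∀ h : MvPolynomial (Option (Fin m)) (MvPolynomial (Fin n) k),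
      h * gEvenFull (fun i => X (some i)) (fun i => MvPolynomial.C (f i)) (X none) ∈
        Ideal.span (Set.range fun i : Fin m =>
            (X (some i)) ^ 2 - X none * MvPolynomial.C (f i) ^ 2) ⊔
          Ideal.span {gOddFull (fun i => X (some i)) (fun i => MvPolynomial.C (f i)) (X none)} ↔
      h ∈ Ideal.map (algebraMap (MvPolynomial (Fin n) k)
              (MvPolynomial (Option (Fin m)) (MvPolynomial (Fin n) k)))
            (Ideal.span (Set.range f)) ⊔
          Ideal.span (Set.range fun i : Fin m =>
            (X (some i) : MvPolynomial (Option (Fin m)) (MvPolynomial (Fin n) k))) := by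
  intro h
  have hIT : Ideal.map (algebraMap _ _) (span (Set.range f)) =
      span (Set.range fun i =>
        (C (f i) : MvPolynomial (Option (Fin m)) (MvPolynomial (Fin n) k))) := by
    rw [Ideal.map_span, ← Set.range_comp]
    rfl
  constructor
  · intro hh
    have := mul_prod_mem_of_mul_gEvenFull_mem _ _ _ hh
    rw [← hIT] at this
    rw [sup_comm]
    exact mem_span_X_sup_map_C_of_mul_prod_X_mem (Option.some_injective _) this
  · intro hh
    rw [hIT, sup_comm] at hh
    exact mem_colon_span_singleton.1 (span_range_sup_span_range_le_colon _ _ _ hh)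
end

section
/- Under the lex monomial order with y_1 > y_2 > ... > y_m > z > x_1 > ... > x_n on T = k[x_1,...,x_n,y_1,...,y_m,z], the elements y_1^2 - z f_1^2,..., y_m^2 - z f_m^2, g_m^even, g_m^odd form a Gröbner basis of the ideal they generate, and the initial ideal is (y_1^2,...,y_m^2, y_1⋯y_m, y_1⋯y_{m-1}·in(f_m)). -/
open MvPolynomial

/-- The lex-leading monomial (exponent vector) of a multivariate polynomial, for the
lexicographic order in which `X 0 > X 1 > ⋯`.  (By convention it is `0` for `p = 0`.) -/
noncomputable def leadMon {N : ℕ} {k : Type*} [CommSemiring k]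
    (p : MvPolynomial (Fin N) k) : Fin N →₀ ℕ :=
  (MonomialOrder.lex (σ := Fin N)).toSyn.symm
    (p.support.sup (fun d => (MonomialOrder.lex (σ := Fin N)).toSyn d))

/-!
Over any subset `s` of the indices, `g^even` and `g^odd` satisfy
`g^even_{s ∪ i} = y_i g^even_s + z f_i g^odd_s` and
`g^odd_{s ∪ i} = y_i g^odd_s + f_i g^even_s`, so `y_i g^even ≡ z f_i g^odd` and
`y_i g^odd ≡ f_i g^even` modulo the ideal `C` of the binomials `y_i² - z f_i²`. Hence every
element of `J` is `c + r g^even + s g^odd` with `c ∈ C` and `r`, `s` free of `y`.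
Replacing each `y_i²` by `z f_i²` is a linear map that kills `C`, fixes polynomials of degree
`≤ 1` in every `y_i` and commutes with multiplication by `y`-free polynomials. So an element of
`J` none of whose monomials is divisible by an initial monomial of a generator equals
`r g^even + s g^odd`; its leading monomial is then divisible by `y_1 ⋯ y_m` or by
`y_1 ⋯ y_{m-1} in(f_m)` unless it vanishes. Dividing `p - lt(p)` by the generators shows that
this forces the initial monomial of every nonzero `p ∈ J` to be divisible by that of a generator.
-/

open MonomialOrder

section ParitySums

variable {ι T : Type*} [CommRing T] [DecidableEq ι] (Y F : ι → T) (Z : T)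

def evenSum (s : Finset ι) : T :=
  ∑ S ∈ s.powerset with Even S.card,
    (∏ i ∈ s \ S, Y i) * (∏ i ∈ S, F i) * Z ^ (S.card / 2)

def oddSum (s : Finset ι) : T :=
  ∑ S ∈ s.powerset with Odd S.card,
    (∏ i ∈ s \ S, Y i) * (∏ i ∈ S, F i) * Z ^ (S.card / 2)

variable {Y F Z} {i : ι} {s : Finset ι}

theorem evenSum_insert (hi : i ∉ s) :
    evenSum Y F Z (insert i s) = Y i * evenSum Y F Z s + Z * F i * oddSum Y F Z s := by
  simp only [evenSum, oddSum, Finset.sum_filter, Finset.sum_powerset_insert hi, Finset.mul_sum]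
  congr 1 <;> refine Finset.sum_congr rfl fun t ht => ?_ <;>
    have hit : i ∉ t := fun h => hi (Finset.mem_powerset.1 ht h)
  · rw [Finset.insert_sdiff_of_notMem _ hit, Finset.prod_insert (by simp [hi])]
    split_ifs <;> ring
  · rw [Finset.insert_sdiff_insert, Finset.sdiff_insert_of_notMem hi, Finset.prod_insert hit,
      Finset.card_insert_of_notMem hit]
    simp only [Nat.even_add_one, Nat.not_even_iff_odd]
    split_ifs with h
    · rw [show (t.card + 1) / 2 = t.card / 2 + 1 by rcases h with ⟨r, hr⟩; omega]
      ring
    · simp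

theorem oddSum_insert (hi : i ∉ s) :
    oddSum Y F Z (insert i s) = Y i * oddSum Y F Z s + F i * evenSum Y F Z s := by
  simp only [evenSum, oddSum, Finset.sum_filter, Finset.sum_powerset_insert hi, Finset.mul_sum]
  congr 1 <;> refine Finset.sum_congr rfl fun t ht => ?_ <;>
    have hit : i ∉ t := fun h => hi (Finset.mem_powerset.1 ht h)
  · rw [Finset.insert_sdiff_of_notMem _ hit, Finset.prod_insert (by simp [hi])]
    split_ifs <;> ring
  · rw [Finset.insert_sdiff_insert, Finset.sdiff_insert_of_notMem hi, Finset.prod_insert hit,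
      Finset.card_insert_of_notMem hit]
    simp only [Nat.odd_add_one, Nat.not_odd_iff_even]
    split_ifs with h
    · rw [show (t.card + 1) / 2 = t.card / 2 by rcases h with ⟨r, hr⟩; omega]
      ring
    · simp

theorem mul_evenSum_insert_sub (hi : i ∉ s) :
    Y i * evenSum Y F Z (insert i s) - Z * F i * oddSum Y F Z (insert i s) =
      (Y i ^ 2 - Z * F i ^ 2) * evenSum Y F Z s := by
  rw [evenSum_insert hi, oddSum_insert hi]
  ring

theorem mul_oddSum_insert_sub (hi : i ∉ s) :
    Y i * oddSum Y F Z (insert i s) - F i * evenSum Y F Z (insert i s) =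
      (Y i ^ 2 - Z * F i ^ 2) * oddSum Y F Z s := by
  rw [evenSum_insert hi, oddSum_insert hi]
  ring

theorem gEvenFull_eq_evenSum {m : ℕ} (Y F : Fin m → T) (Z : T) :
    gEvenFull Y F Z = evenSum Y F Z Finset.univ := by
  simp only [gEvenFull, evenSum, Finset.compl_eq_univ_sdiff]

theorem gOddFull_eq_oddSum {m : ℕ} (Y F : Fin m → T) (Z : T) :
    gOddFull Y F Z = oddSum Y F Z Finset.univ := by
  refine Finset.sum_congr rfl fun S hS => ?_
  obtain ⟨r, hr⟩ := (Finset.mem_filter.1 hS).2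
  rw [Finset.compl_eq_univ_sdiff, hr]
  congr 2
  omega

end ParitySums

section Groebner

variable {σ : Type*}

theorem MonomialOrder.exists_degree_le_of_reduced_eq_zero {k : Type*} [Field k]
    (m : MonomialOrder σ) {I : Ideal (MvPolynomial σ k)} {G : Set (MvPolynomial σ k)}
    (hGI : G ⊆ I) (hG : ∀ g ∈ G, g ≠ 0)
    (hred : ∀ r ∈ I, (∀ c ∈ r.support, ∀ g ∈ G, ¬ m.degree g ≤ c) → r = 0)
    {p : MvPolynomial σ k} (hp : p ∈ I) (hp0 : p ≠ 0) :
    ∃ g ∈ G, m.degree g ≤ m.degree p := by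
  classical
  by_contra! hstd
  by_cases hdeg : m.degree p = 0
  · refine hp0 (hred p hp fun c hc g hg => ?_)
    have hc0 : m.toSyn c ≤ 0 := by simpa [hdeg] using m.le_degree hc
    have hcp : c = m.degree p := by
      rw [hdeg]
      exact m.toSyn.injective ((le_antisymm hc0 (m.zero_le _)).trans (map_zero _).symm)
    exact hcp ▸ hstd g hg
  -- Divide `p - lt p` by `G`: then `p - q = lt p + r` lies in `I` and is reduced, so it vanishes,
  -- although its coefficient at `degree p` is `lc p`.
  obtain ⟨g, r, hpr, hgdeg, hr⟩ :=
    m.div_set (fun b hb => (m.leadingCoeff_ne_zero_iff.2 (hG b hb)).isUnit) (m.subLTerm p)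
  set q := Finsupp.linearCombination _ (fun b : G => (b : MvPolynomial σ k)) g with hq
  have hqI : q ∈ I := by
    rw [hq, Finsupp.linearCombination_apply]
    exact Submodule.finsuppSum_mem _ I _ _ fun (b : G) _ => I.smul_mem _ (hGI b.2)
  have hq_coeff : q.coeff (m.degree p) = 0 := by
    rw [hq, Finsupp.linearCombination_apply, Finsupp.sum, coeff_sum]
    refine Finset.sum_eq_zero fun b _ => m.coeff_eq_zero_of_lt ?_
    rw [smul_eq_mul, mul_comm]
    exact lt_of_le_of_lt (hgdeg b) (m.degree_sub_LTerm_lt hdeg)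
  have hpq : p - q = monomial (m.degree p) (m.leadingCoeff p) + r := by
    rw [MonomialOrder.subLTerm] at hpr
    linear_combination hpr
  have hzero := hred _ (I.sub_mem hp hqI) fun c hc b hb => by
    rw [hpq] at hc
    rcases Finset.mem_union.1 (support_add hc) with hc | hc
    · rw [Finset.mem_singleton.1 (support_monomial_subset hc)]
      exact hstd b hb
    · exact hr c hc b hb
  have := congrArg (coeff (m.degree p)) hzero
  rw [coeff_sub, hq_coeff, sub_zero, coeff_zero] at this
  exact m.coeff_degree_ne_zero_iff.2 hp0 this

theorem MonomialOrder.degree_add_of_forall_lt {R : Type*} [CommSemiring R] (m : MonomialOrder σ)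
    {f g : MvPolynomial σ R} (h : ∀ c ∈ g.support, c ≺[m] m.degree f) :
    m.degree (f + g) = m.degree f ∧ m.leadingCoeff (f + g) = m.leadingCoeff f := by
  rcases eq_or_ne g 0 with rfl | hg
  · simp
  · have hlt := h _ (m.degree_mem_support hg)
    exact ⟨m.degree_add_of_lt hlt, m.leadingCoeff_add_of_lt hlt⟩

theorem MonomialOrder.span_monomial_degree_eq {R : Type*} [CommSemiring R]
    (m : MonomialOrder σ) {S G : Set (MvPolynomial σ R)} (hGS : G ⊆ S)
    (hS : ∀ p ∈ S, ∃ g ∈ G, m.degree g ≤ m.degree p) :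
    Ideal.span ((fun p => monomial (m.degree p) (1 : R)) '' S) =
      Ideal.span ((fun p => monomial (m.degree p) (1 : R)) '' G) := by
  refine le_antisymm ?_ (Ideal.span_mono (Set.image_mono hGS))
  rw [Ideal.span_le]
  rintro _ ⟨p, hp, rfl⟩
  rw [← Set.image_image (fun d => monomial d (1 : R)) m.degree, SetLike.mem_coe,
    mem_ideal_span_monomial_image]
  intro d hd
  obtain ⟨g, hg, hle⟩ := hS p hp
  rw [Finset.mem_singleton.1 (support_monomial_subset hd)]
  exact ⟨_, Set.mem_image_of_mem _ hg, hle⟩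

end Groebner

theorem MvPolynomial.apply_eq_zero_of_mem_supported {σ R : Type*} [CommSemiring R] {s : Set σ}
    {p : MvPolynomial σ R} (hp : p ∈ supported R s) {d : σ →₀ ℕ} (hd : d ∈ p.support)
    {v : σ} (hv : v ∉ s) : d v = 0 := by
  classical
  by_contra hdv
  exact hv (mem_supported.1 hp
    ((mem_vars_iff_mem_support v).2 ⟨d, hd, Finsupp.mem_support_iff.2 hdv⟩))

section SquareReduction

variable {σ ι k : Type*} [CommRing k] [Fintype ι] {y : ι → σ}

noncomputable def oddExponent (y : ι → σ) (d : σ →₀ ℕ) : σ →₀ ℕ :=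
  d - ∑ j, Finsupp.single (y j) (2 * (d (y j) / 2))

theorem oddExponent_apply_of_injective (hy : Function.Injective y) (d : σ →₀ ℕ) (j : ι) :
    oddExponent y d (y j) = d (y j) % 2 := by
  classical
  simp only [oddExponent, Finsupp.tsub_apply, Finsupp.finsetSum_apply, Finsupp.single_apply,
    hy.eq_iff, Finset.sum_ite_eq', Finset.mem_univ, if_true]
  omega

theorem oddExponent_apply_of_notMem (d : σ →₀ ℕ) {v : σ} (hv : v ∉ Set.range y) :
    oddExponent y d v = d v := by
  classical
  simp only [oddExponent, Finsupp.tsub_apply, Finsupp.finsetSum_apply, Finsupp.single_apply]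
  rw [Finset.sum_eq_zero fun j _ => if_neg fun h => hv ⟨j, h⟩, tsub_zero]

noncomputable def squareReductionMonomial (y : ι → σ) (h : ι → MvPolynomial σ k)
    (d : σ →₀ ℕ) : MvPolynomial σ k :=
  monomial (oddExponent y d) 1 * ∏ j, h j ^ (d (y j) / 2)

/-- The `k`-linear map replacing, in every monomial, each `X (y j) ^ 2` by `h j`. -/
noncomputable def squareReduction (y : ι → σ) (h : ι → MvPolynomial σ k) :
    MvPolynomial σ k →ₗ[k] MvPolynomial σ k :=
  (basisMonomials σ k).constr k (squareReductionMonomial y h)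

variable (hy : Function.Injective y) {h : ι → MvPolynomial σ k}
include hy

theorem squareReductionMonomial_add (d : σ →₀ ℕ) {e : σ →₀ ℕ}
    (he : ∀ j, e (y j) = 0) :
    squareReductionMonomial y h (d + e) = monomial e 1 * squareReductionMonomial y h d := by
  have hodd : oddExponent y (d + e) = e + oddExponent y d := by
    ext v
    by_cases hv : v ∈ Set.range y
    · obtain ⟨j, rfl⟩ := hv
      simp only [oddExponent_apply_of_injective hy, Finsupp.add_apply, he, add_zero, zero_add]
    · simp only [oddExponent_apply_of_notMem _ hv, Finsupp.add_apply, add_comm]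
  simp only [squareReductionMonomial, hodd, Finsupp.add_apply, he, add_zero, ← mul_assoc,
    monomial_mul, one_mul]

theorem squareReductionMonomial_add_single (d : σ →₀ ℕ) (i : ι) :
    squareReductionMonomial y h (d + Finsupp.single (y i) 2) =
      h i * squareReductionMonomial y h d := by
  classical
  have hodd : oddExponent y (d + Finsupp.single (y i) 2) = oddExponent y d := by
    ext v
    by_cases hv : v ∈ Set.range y
    · obtain ⟨j, rfl⟩ := hv
      simp only [oddExponent_apply_of_injective hy, Finsupp.add_apply, Finsupp.single_apply,
        hy.eq_iff]
      split_ifs <;> omega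
    · have hne : y i ≠ v := fun h => hv ⟨i, h⟩
      simp only [oddExponent_apply_of_notMem _ hv, Finsupp.add_apply, Finsupp.single_apply,
        if_neg hne, add_zero]
  have hexp : ∀ j ∈ ({i}ᶜ : Finset ι),
      h j ^ ((d + Finsupp.single (y i) 2 : σ →₀ ℕ) (y j) / 2) = h j ^ (d (y j) / 2) := by
    intro j hj
    rw [Finsupp.add_apply, Finsupp.single_apply, if_neg (hy.ne (by simpa using hj)).symm,
      add_zero]
  simp only [squareReductionMonomial, hodd, Fintype.prod_eq_mul_prod_compl i,
    Finset.prod_congr rfl hexp]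
  rw [Finsupp.add_apply, Finsupp.single_eq_same,
    show (d (y i) + 2) / 2 = d (y i) / 2 + 1 by omega, pow_succ]
  ring

theorem squareReductionMonomial_of_le_one {d : σ →₀ ℕ} (hd : ∀ j, d (y j) ≤ 1) :
    squareReductionMonomial y h d = monomial d 1 := by
  have hodd : oddExponent y d = d := by
    ext v
    by_cases hv : v ∈ Set.range y
    · obtain ⟨j, rfl⟩ := hv
      rw [oddExponent_apply_of_injective hy]
      have := hd j
      omega
    · exact oddExponent_apply_of_notMem _ hv
  simp only [squareReductionMonomial, hodd, Nat.div_eq_of_lt (Nat.lt_succ_of_le (hd _)),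
    pow_zero, Finset.prod_const_one, mul_one]

omit hy in
theorem squareReduction_monomial (d : σ →₀ ℕ) (c : k) :
    squareReduction y h (monomial d c) = c • squareReductionMonomial y h d := by
  rw [show monomial d c = c • monomial d 1 by rw [smul_monomial, smul_eq_mul, mul_one],
    map_smul]
  exact congrArg (c • ·) ((basisMonomials σ k).constr_basis k _ d)

theorem squareReduction_mul_monomial (p : MvPolynomial σ k) {e : σ →₀ ℕ}
    (he : ∀ j, e (y j) = 0) (c : k) :
    squareReduction y h (p * monomial e c) = monomial e c * squareReduction y h p := by
  induction p using MvPolynomial.induction_on' with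
  | monomial d a =>
    rw [monomial_mul, squareReduction_monomial, squareReduction_monomial,
      squareReductionMonomial_add hy d he, smul_eq_C_mul, smul_eq_C_mul, mul_comm a, map_mul,
      ← mul_one c, ← C_mul_monomial, mul_one]
    ring
  | add p q hp hq => rw [add_mul, map_add, map_add, hp, hq, mul_add]

theorem squareReduction_mul_of_mem_supported (p : MvPolynomial σ k) {q : MvPolynomial σ k}
    (hq : q ∈ supported k (Set.range y)ᶜ) :
    squareReduction y h (p * q) = q * squareReduction y h p := by
  conv_lhs => rw [q.as_sum, Finset.mul_sum, map_sum]
  conv_rhs => rw [q.as_sum, Finset.sum_mul]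
  refine Finset.sum_congr rfl fun e he => squareReduction_mul_monomial hy p (fun j => ?_) _
  exact apply_eq_zero_of_mem_supported hq he (fun h => h ⟨j, rfl⟩)

theorem squareReduction_mul_X_sq (p : MvPolynomial σ k) (i : ι) :
    squareReduction y h (p * X (y i) ^ 2) = h i * squareReduction y h p := by
  induction p using MvPolynomial.induction_on' with
  | monomial d a =>
    rw [X_pow_eq_monomial, monomial_mul, mul_one, squareReduction_monomial,
      squareReduction_monomial, squareReductionMonomial_add_single hy, mul_smul_comm]
  | add p q hp hq => rw [add_mul, map_add, map_add, hp, hq, mul_add]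

theorem squareReduction_eq_zero_of_mem_span (hh : ∀ j, h j ∈ supported k (Set.range y)ᶜ)
    {p : MvPolynomial σ k} (hp : p ∈ Ideal.span (Set.range fun j => X (y j) ^ 2 - h j)) :
    squareReduction y h p = 0 := by
  obtain ⟨c, rfl⟩ := Ideal.mem_span_range_iff_exists_fun.1 hp
  refine (map_sum _ _ _).trans (Finset.sum_eq_zero fun j _ => ?_)
  rw [mul_sub, map_sub, squareReduction_mul_X_sq hy,
    squareReduction_mul_of_mem_supported hy _ (hh j), sub_self]

theorem squareReduction_eq_self {p : MvPolynomial σ k}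
    (hp : ∀ d ∈ p.support, ∀ j, d (y j) ≤ 1) : squareReduction y h p = p := by
  conv_lhs => rw [p.as_sum, map_sum]
  conv_rhs => rw [p.as_sum]
  refine Finset.sum_congr rfl fun d hd => ?_
  rw [squareReduction_monomial, squareReductionMonomial_of_le_one hy (hp d hd), smul_monomial,
    smul_eq_mul, mul_one]

end SquareReduction

namespace EvenOddGroebner

variable {n m : ℕ}

def yVar (i : Fin (m + 1)) : Fin (m + 1 + 1 + n) := Fin.castAdd n i.castSucc

def zVar : Fin (m + 1 + 1 + n) := Fin.castAdd n (Fin.last (m + 1))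

def xVar (j : Fin n) : Fin (m + 1 + 1 + n) := Fin.natAdd (m + 1 + 1) j

theorem val_yVar (i : Fin (m + 1)) : (yVar (n := n) i : ℕ) = i := rfl

theorem val_zVar : (zVar : Fin (m + 1 + 1 + n)) = m + 1 := rfl

theorem val_xVar (j : Fin n) : (xVar (m := m) j : ℕ) = m + 1 + 1 + j := rfl

theorem yVar_injective : Function.Injective (yVar (n := n) (m := m)) :=
  fun _ _ h => Fin.ext (Fin.mk.inj h)

theorem zVar_notMem_range : (zVar : Fin (m + 1 + 1 + n)) ∉ Set.range yVar := by
  rintro ⟨i, hi⟩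
  have := congrArg Fin.val hi
  rw [val_yVar, val_zVar] at this
  omega

theorem xVar_notMem_range (j : Fin n) : xVar (m := m) j ∉ Set.range yVar := by
  rintro ⟨i, hi⟩
  have := congrArg Fin.val hi
  rw [val_yVar, val_xVar] at this
  omega

theorem lex_lt_of_yVar {d t : Fin (m + 1 + 1 + n) →₀ ℕ} (i : Fin (m + 1))
    (heq : ∀ j < i, d (yVar j) = t (yVar j)) (hlt : d (yVar i) < t (yVar i)) :
    d ≺[lex] t := by
  refine Finsupp.Lex.lt_iff.2 ⟨yVar i, fun w hw => ?_, hlt⟩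
  have hwi : (w : ℕ) < i := hw
  exact heq ⟨w, by omega⟩ hwi

noncomputable def yExp (s : Finset (Fin (m + 1))) : Fin (m + 1 + 1 + n) →₀ ℕ :=
  ∑ i ∈ s, Finsupp.single (yVar i) 1

theorem yExp_apply (s : Finset (Fin (m + 1))) (j : Fin (m + 1)) :
    yExp (n := n) s (yVar j) = if j ∈ s then 1 else 0 := by
  classical
  simp only [yExp, Finsupp.finsetSum_apply, Finsupp.single_apply, yVar_injective.eq_iff,
    Finset.sum_ite_eq']

theorem prod_X_yVar {k : Type*} [CommSemiring k] (s : Finset (Fin (m + 1))) :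
    ∏ i ∈ s, (X (yVar i) : MvPolynomial (Fin (m + 1 + 1 + n)) k) = monomial (yExp s) 1 := by
  rw [yExp, monomial_sum_one]
  rfl

noncomputable abbrev yFree (k : Type*) [CommSemiring k] (n m : ℕ) :
    Subalgebra k (MvPolynomial (Fin (m + 1 + 1 + n)) k) :=
  supported k (Set.range yVar)ᶜ

variable {k : Type*} [Field k]

local notation "𝕋" => MvPolynomial (Fin (m + 1 + 1 + n)) k

theorem degree_apply_yVar_eq_zero {q : 𝕋} (hq : q ∈ yFree k n m) (j : Fin (m + 1)) :
    lex.degree q (yVar j) = 0 := by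
  rcases eq_or_ne q 0 with rfl | hq0
  · simp
  · exact apply_eq_zero_of_mem_supported hq (lex.degree_mem_support hq0) (fun h => h ⟨j, rfl⟩)

variable (f : Fin (m + 1) → MvPolynomial (Fin n) k)

noncomputable def F (i : Fin (m + 1)) : 𝕋 :=
  rename xVar (f i)

noncomputable def binomial (i : Fin (m + 1)) : 𝕋 :=
  X (yVar i) ^ 2 - X zVar * F f i ^ 2

noncomputable def gEven : 𝕋 :=
  gEvenFull (fun i => X (yVar i)) (F f) (X zVar)

noncomputable def gOdd : 𝕋 :=
  gOddFull (fun i => X (yVar i)) (F f) (X zVar)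

def generators : Set 𝕋 :=
  Set.range (binomial f) ∪ {gEven f, gOdd f}

noncomputable def J : Ideal 𝕋 :=
  Ideal.span (generators f)

noncomputable def binomialIdeal : Ideal 𝕋 :=
  Ideal.span (Set.range (binomial f))

theorem F_mem_yFree (i : Fin (m + 1)) : F f i ∈ yFree k n m := by
  classical
  refine mem_supported.2 fun v hv => ?_
  obtain ⟨j, -, rfl⟩ := Finset.mem_image.1 (vars_rename _ _ hv)
  exact xVar_notMem_range j

theorem F_ne_zero {i : Fin (m + 1)} (hfi : f i ≠ 0) : F f i ≠ 0 :=
  (map_ne_zero_iff _ (rename_injective _ fun _ _ h => Fin.ext (by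
    have := congrArg Fin.val h; rw [val_xVar, val_xVar] at this; omega))).2 hfi

theorem X_zVar_mem_yFree : (X zVar : 𝕋) ∈ yFree k n m :=
  X_mem_supported.2 zVar_notMem_range

theorem X_zVar_mul_F_sq_mem_yFree (i : Fin (m + 1)) : X zVar * F f i ^ 2 ∈ yFree k n m :=
  mul_mem X_zVar_mem_yFree (pow_mem (F_mem_yFree f i) 2)

theorem degree_binomial (i : Fin (m + 1)) :
    lex.degree (binomial f i) = Finsupp.single (yVar i) 2 := by
  classical
  have hX : lex.degree (X (yVar i) ^ 2 : 𝕋) = Finsupp.single (yVar i) 2 := by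
    rw [X_pow_eq_monomial, degree_monomial, if_neg one_ne_zero]
  have hlt : lex.degree (X zVar * F f i ^ 2) ≺[lex] lex.degree (X (yVar i) ^ 2 : 𝕋) := by
    rw [hX]
    refine lex_lt_of_yVar i (fun j hj => ?_) ?_ <;>
      rw [degree_apply_yVar_eq_zero (X_zVar_mul_F_sq_mem_yFree f i)]
    · rw [Finsupp.single_eq_of_ne (yVar_injective.ne hj.ne)]
    · simp
  rw [binomial, degree_sub_of_lt hlt, hX]

theorem binomial_ne_zero (i : Fin (m + 1)) : binomial f i ≠ 0 :=
  ne_zero_of_degree_ne_zero (m := lex) (by simp [degree_binomial])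

noncomputable def summand (S : Finset (Fin (m + 1))) (a : ℕ) : 𝕋 :=
  (∏ i ∈ Finset.univ \ S, X (yVar i)) * (∏ i ∈ S, F f i) * X zVar ^ a

theorem gEven_eq :
    gEven f = ∑ S ∈ Finset.univ.powerset with Even S.card, summand f S (S.card / 2) :=
  gEvenFull_eq_evenSum _ _ _

theorem gOdd_eq :
    gOdd f = ∑ S ∈ Finset.univ.powerset with Odd S.card, summand f S (S.card / 2) :=
  gOddFull_eq_oddSum _ _ _

theorem yVar_apply_of_mem_support_summand {S : Finset (Fin (m + 1))} {a : ℕ}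
    {d : Fin (m + 1 + 1 + n) →₀ ℕ} (hd : d ∈ (summand f S a).support) (j : Fin (m + 1)) :
    d (yVar j) = if j ∈ S then 0 else 1 := by
  classical
  rw [summand, prod_X_yVar, mul_assoc] at hd
  obtain ⟨e, he, d', hd', rfl⟩ := Finset.mem_add.1 (support_mul _ _ hd)
  have hq : (∏ i ∈ S, F f i) * X zVar ^ a ∈ yFree k n m :=
    mul_mem (prod_mem fun i _ => F_mem_yFree f i) (pow_mem X_zVar_mem_yFree a)
  rw [Finset.mem_singleton.1 (support_monomial_subset he), Finsupp.add_apply, yExp_apply,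
    apply_eq_zero_of_mem_supported hq hd' (fun h => h ⟨j, rfl⟩)]
  by_cases hj : j ∈ S <;> simp [hj]

theorem yVar_apply_of_mem_support_sum {𝒮 : Finset (Finset (Fin (m + 1)))}
    {a : Finset (Fin (m + 1)) → ℕ} {d : Fin (m + 1 + 1 + n) →₀ ℕ}
    (hd : d ∈ (∑ S ∈ 𝒮, summand f S (a S)).support) :
    ∃ S ∈ 𝒮, ∀ j, d (yVar j) = if j ∈ S then 0 else 1 := by
  classical
  obtain ⟨S, hS, hdS⟩ := Finset.mem_biUnion.1 (support_sum hd)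
  exact ⟨S, hS, yVar_apply_of_mem_support_summand f hdS⟩

theorem yVar_apply_le_one_of_mem_support_sum {𝒮 : Finset (Finset (Fin (m + 1)))}
    {a : Finset (Fin (m + 1)) → ℕ} {d : Fin (m + 1 + 1 + n) →₀ ℕ}
    (hd : d ∈ (∑ S ∈ 𝒮, summand f S (a S)).support) (j : Fin (m + 1)) :
    d (yVar j) ≤ 1 := by
  obtain ⟨S, -, hS⟩ := yVar_apply_of_mem_support_sum f hd
  rw [hS j]
  split_ifs <;> omega

theorem degree_gEven :
    lex.degree (gEven f) = yExp Finset.univ ∧ lex.leadingCoeff (gEven f) = 1 := by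
  classical
  have hmem : ∅ ∈ Finset.univ.powerset.filter
      (fun S : Finset (Fin (m + 1)) => Even S.card) := by
    simp
  have hlead : summand f ∅ 0 = monomial (yExp Finset.univ) 1 := by
    simp [summand, prod_X_yVar]
  have hdeg : lex.degree (monomial (yExp (n := n) (Finset.univ : Finset (Fin (m + 1)))) (1 : k)) =
      yExp Finset.univ := by
    rw [degree_monomial, if_neg one_ne_zero]
  rw [gEven_eq, ← Finset.add_sum_erase _ _ hmem, Finset.card_empty, Nat.zero_div, hlead]
  refine (lex.degree_add_of_forall_lt fun c hc => ?_).imp (·.trans hdeg)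
    (·.trans (leadingCoeff_monomial _))
  obtain ⟨S, hS, hc⟩ := yVar_apply_of_mem_support_sum f hc
  have hS0 : S.Nonempty := Finset.nonempty_iff_ne_empty.2 (Finset.ne_of_mem_erase hS)
  rw [hdeg]
  refine lex_lt_of_yVar (S.min' hS0) (fun j hj => ?_) ?_
  · rw [hc, yExp_apply, if_neg fun h => absurd hj (not_lt.2 (S.min'_le j h))]
    simp
  · rw [hc, yExp_apply, if_pos (S.min'_mem hS0)]
    simp

theorem gEven_ne_zero : gEven f ≠ 0 :=
  lex.leadingCoeff_ne_zero_iff.1 (by rw [(degree_gEven f).2]; exact one_ne_zero)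

theorem degree_gOdd (hf : f (Fin.last m) ≠ 0) :
    lex.degree (gOdd f) = yExp (Finset.univ \ {Fin.last m}) + lex.degree (F f (Fin.last m)) ∧
      gOdd f ≠ 0 := by
  classical
  have hmem : {Fin.last m} ∈ Finset.univ.powerset.filter
      (fun S : Finset (Fin (m + 1)) => Odd S.card) := by
    simp
  set lead : 𝕋 := monomial (yExp (Finset.univ \ {Fin.last m})) 1 * F f (Fin.last m)
  have hlead : summand f {Fin.last m} (({Fin.last m} : Finset (Fin (m + 1))).card / 2) = lead := by
    simp [lead, summand, prod_X_yVar]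
  have hlead0 : lead ≠ 0 := mul_ne_zero (by simp) (F_ne_zero f hf)
  have hdeg : lex.degree lead =
      yExp (Finset.univ \ {Fin.last m}) + lex.degree (F f (Fin.last m)) := by
    rw [degree_mul (by simp) (F_ne_zero f hf), degree_monomial, if_neg one_ne_zero]
  rw [gOdd_eq, ← Finset.add_sum_erase _ _ hmem, hlead]
  refine (lex.degree_add_of_forall_lt fun c hc => ?_).imp (·.trans hdeg) fun hlc =>
    lex.leadingCoeff_ne_zero_iff.1 (hlc ▸ lex.leadingCoeff_ne_zero_iff.2 hlead0)
  obtain ⟨S, hS, hc⟩ := yVar_apply_of_mem_support_sum f hc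
  obtain ⟨hSl, hS⟩ := Finset.mem_erase.1 hS
  have hS0 : S.Nonempty := Finset.card_pos.1 (Finset.mem_filter.1 hS).2.pos
  have hmin : S.min' hS0 ≠ Fin.last m := fun h => hSl (Finset.eq_singleton_iff_unique_mem.2
    ⟨h ▸ S.min'_mem hS0, fun j hj => le_antisymm (Fin.le_last j) (h ▸ S.min'_le j hj)⟩)
  have hF := degree_apply_yVar_eq_zero (F_mem_yFree f (Fin.last m))
  rw [hdeg]
  refine lex_lt_of_yVar (S.min' hS0) (fun j hj => ?_) ?_ <;>
    rw [hc, Finsupp.add_apply, yExp_apply, hF]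
  · rw [if_neg fun h => absurd hj (not_lt.2 (S.min'_le j h)),
      if_pos (by simpa using (hj.trans_le (Fin.le_last _)).ne)]
  · rw [if_pos (S.min'_mem hS0), if_pos (by simpa using hmin)]
    simp

theorem gEven_mem_generators : gEven f ∈ generators f := Or.inr (Set.mem_insert _ _)

theorem gOdd_mem_generators : gOdd f ∈ generators f := Or.inr (Set.mem_insert_of_mem _ rfl)

theorem generators_ne_zero (hf : f (Fin.last m) ≠ 0) : ∀ g ∈ generators f, g ≠ 0 := by
  rintro _ (⟨i, rfl⟩ | rfl | hg)
  · exact binomial_ne_zero f i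
  · exact gEven_ne_zero f
  · exact Set.mem_singleton_iff.1 hg ▸ (degree_gOdd f hf).2

theorem yVar_apply_le_one_of_mem_support_gEven {d : Fin (m + 1 + 1 + n) →₀ ℕ}
    (hd : d ∈ (gEven f).support) (j : Fin (m + 1)) : d (yVar j) ≤ 1 :=
  yVar_apply_le_one_of_mem_support_sum f (gEven_eq f ▸ hd) j

theorem yVar_apply_le_one_of_mem_support_gOdd {d : Fin (m + 1 + 1 + n) →₀ ℕ}
    (hd : d ∈ (gOdd f).support) (j : Fin (m + 1)) : d (yVar j) ≤ 1 :=
  yVar_apply_le_one_of_mem_support_sum f (gOdd_eq f ▸ hd) j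

theorem X_yVar_mul_gEven_sub_mem (i : Fin (m + 1)) :
    X (yVar i) * gEven f - X zVar * F f i * gOdd f ∈ binomialIdeal f := by
  have := mul_evenSum_insert_sub (Y := fun i => X (yVar i)) (F := F f) (Z := X zVar)
    (Finset.notMem_erase i Finset.univ)
  rw [Finset.insert_erase (Finset.mem_univ i)] at this
  rw [gEven, gOdd, gEvenFull_eq_evenSum, gOddFull_eq_oddSum, this]
  exact Ideal.mul_mem_right _ _ (Ideal.subset_span ⟨i, rfl⟩)

theorem X_yVar_mul_gOdd_sub_mem (i : Fin (m + 1)) :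
    X (yVar i) * gOdd f - F f i * gEven f ∈ binomialIdeal f := by
  have := mul_oddSum_insert_sub (Y := fun i => X (yVar i)) (F := F f) (Z := X zVar)
    (Finset.notMem_erase i Finset.univ)
  rw [Finset.insert_erase (Finset.mem_univ i)] at this
  rw [gEven, gOdd, gEvenFull_eq_evenSum, gOddFull_eq_oddSum, this]
  exact Ideal.mul_mem_right _ _ (Ideal.subset_span ⟨i, rfl⟩)

def IsDecomposed (p : 𝕋) : Prop :=
  ∃ c ∈ binomialIdeal f, ∃ r ∈ yFree k n m, ∃ s ∈ yFree k n m,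
    p = c + r * gEven f + s * gOdd f

variable {f}

theorem IsDecomposed.add {p q : 𝕋} (hp : IsDecomposed f p) (hq : IsDecomposed f q) :
    IsDecomposed f (p + q) := by
  obtain ⟨c, hc, r, hr, s, hs, rfl⟩ := hp
  obtain ⟨c', hc', r', hr', s', hs', rfl⟩ := hq
  exact ⟨c + c', add_mem hc hc', r + r', add_mem hr hr', s + s', add_mem hs hs', by ring⟩

theorem IsDecomposed.mul_of_mem_yFree {p q : 𝕋} (hq : q ∈ yFree k n m)
    (hp : IsDecomposed f p) : IsDecomposed f (q * p) := by
  obtain ⟨c, hc, r, hr, s, hs, rfl⟩ := hp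
  exact ⟨q * c, Ideal.mul_mem_left _ _ hc, q * r, mul_mem hq hr, q * s, mul_mem hq hs, by ring⟩

theorem IsDecomposed.X_yVar_mul {p : 𝕋} (i : Fin (m + 1)) (hp : IsDecomposed f p) :
    IsDecomposed f (X (yVar i) * p) := by
  obtain ⟨c, hc, r, hr, s, hs, rfl⟩ := hp
  refine ⟨X (yVar i) * c + r * (X (yVar i) * gEven f - X zVar * F f i * gOdd f) +
      s * (X (yVar i) * gOdd f - F f i * gEven f), ?_, s * F f i, mul_mem hs (F_mem_yFree f i),
      r * (X zVar * F f i), mul_mem hr (mul_mem X_zVar_mem_yFree (F_mem_yFree f i)), by ring⟩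
  exact add_mem (add_mem (Ideal.mul_mem_left _ _ hc)
    (Ideal.mul_mem_left _ _ (X_yVar_mul_gEven_sub_mem f i)))
    (Ideal.mul_mem_left _ _ (X_yVar_mul_gOdd_sub_mem f i))

theorem IsDecomposed.mul {p : 𝕋} (t : 𝕋) (hp : IsDecomposed f p) :
    IsDecomposed f (t * p) := by
  induction t using MvPolynomial.induction_on generalizing p with
  | C a => exact hp.mul_of_mem_yFree (Subalgebra.algebraMap_mem _ a)
  | add t t' ht ht' => exact add_mul t t' p ▸ (ht hp).add (ht' hp)
  | mul_X t v ht =>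
    rw [mul_assoc]
    refine ht ?_
    by_cases hv : v ∈ Set.range yVar
    · obtain ⟨i, rfl⟩ := hv
      exact hp.X_yVar_mul i
    · exact hp.mul_of_mem_yFree (X_mem_supported.2 hv)

variable (f)

theorem isDecomposed_of_mem {p : 𝕋} (hp : p ∈ J f) : IsDecomposed f p := by
  refine Submodule.span_induction ?_ ⟨0, zero_mem _, 0, zero_mem _, 0, zero_mem _, by ring⟩
    (fun _ _ _ _ => IsDecomposed.add) (fun t _ _ h => h.mul t) hp
  rintro _ (⟨i, rfl⟩ | hg | hg)
  · exact ⟨binomial f i, Ideal.subset_span ⟨i, rfl⟩, 0, zero_mem _, 0, zero_mem _, by ring⟩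
  · exact ⟨0, zero_mem _, 1, one_mem _, 0, zero_mem _, by rw [hg]; ring⟩
  · rw [Set.mem_singleton_iff.1 hg]
    exact ⟨0, zero_mem _, 0, zero_mem _, 1, one_mem _, by ring⟩

theorem add_eq_zero_of_reduced (hf : f (Fin.last m) ≠ 0) {r s : 𝕋}
    (hr : r ∈ yFree k n m) (hs : s ∈ yFree k n m)
    (hred : ∀ c ∈ (r * gEven f + s * gOdd f).support, ∀ g ∈ generators f,
      ¬ lex.degree g ≤ c) :
    r * gEven f + s * gOdd f = 0 := by
  by_contra hb0
  suffices ∃ g ∈ generators f, lex.degree g ≤ lex.degree (r * gEven f + s * gOdd f) from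
    let ⟨g, hg, hle⟩ := this; hred _ (lex.degree_mem_support hb0) g hg hle
  obtain ⟨hdegO, hgO0⟩ := degree_gOdd f hf
  rcases eq_or_ne r 0 with rfl | hr0
  · have hs0 : s ≠ 0 := by rintro rfl; simp at hb0
    refine ⟨gOdd f, gOdd_mem_generators f, ?_⟩
    rw [zero_mul, zero_add, degree_mul hs0 hgO0]
    exact le_add_self
  have hdegE : lex.degree (r * gEven f) = lex.degree r + yExp Finset.univ := by
    rw [degree_mul hr0 (gEven_ne_zero f), (degree_gEven f).1]
  refine ⟨gEven f, gEven_mem_generators f, ?_⟩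
  rcases eq_or_ne s 0 with rfl | hs0
  · rw [zero_mul, add_zero, hdegE, (degree_gEven f).1]
    exact le_add_self
  have hlt : lex.degree (s * gOdd f) ≺[lex] lex.degree (r * gEven f) := by
    rw [degree_mul hs0 hgO0, hdegO, hdegE]
    refine lex_lt_of_yVar (Fin.last m) (fun j hj => ?_) ?_ <;>
      simp only [Finsupp.add_apply, yExp_apply, degree_apply_yVar_eq_zero hr,
        degree_apply_yVar_eq_zero hs, degree_apply_yVar_eq_zero (F_mem_yFree f _)]
    · simp [hj.ne]
    · simp
  rw [degree_add_of_lt hlt, hdegE, (degree_gEven f).1]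
  exact le_add_self

theorem eq_zero_of_mem_of_reduced (hf : f (Fin.last m) ≠ 0) {b : 𝕋} (hb : b ∈ J f)
    (hred : ∀ c ∈ b.support, ∀ g ∈ generators f, ¬ lex.degree g ≤ c) : b = 0 := by
  obtain ⟨c, hc, r, hr, s, hs, rfl⟩ := isDecomposed_of_mem f hb
  have hsqf : ∀ d ∈ (c + r * gEven f + s * gOdd f).support, ∀ j, d (yVar j) ≤ 1 := by
    intro d hd j
    by_contra! h2
    exact hred d hd _ (Or.inl ⟨j, rfl⟩) (degree_binomial f j ▸ Finsupp.single_le_iff.2 h2)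
  -- Reducing `y j ^ 2 ↦ z * F j ^ 2` kills `c` and fixes `b`, `gEven f` and `gOdd f`.
  have hsq := squareReduction_eq_self (h := fun j => X zVar * F f j ^ 2) yVar_injective hsqf
  rw [map_add, map_add, squareReduction_eq_zero_of_mem_span yVar_injective
      (X_zVar_mul_F_sq_mem_yFree f) hc, mul_comm r, mul_comm s,
    squareReduction_mul_of_mem_supported yVar_injective _ hr,
    squareReduction_mul_of_mem_supported yVar_injective _ hs,
    squareReduction_eq_self yVar_injective fun _ => yVar_apply_le_one_of_mem_support_gEven f,
    squareReduction_eq_self yVar_injective fun _ => yVar_apply_le_one_of_mem_support_gOdd f,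
    zero_add, mul_comm _ r, mul_comm _ s] at hsq
  rw [← hsq] at hred ⊢
  exact add_eq_zero_of_reduced f hf hr hs hred

theorem span_monomial_degree_J (hf : f (Fin.last m) ≠ 0) :
    Ideal.span ((fun p => monomial (lex.degree p) (1 : k)) '' {p | p ∈ J f ∧ p ≠ 0}) =
      Ideal.span ((fun p => monomial (lex.degree p) (1 : k)) '' generators f) :=
  lex.span_monomial_degree_eq (fun g hg => ⟨Ideal.subset_span hg, generators_ne_zero f hf g hg⟩)
    fun _ hp => lex.exists_degree_le_of_reduced_eq_zero Ideal.subset_span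
      (generators_ne_zero f hf) (fun _ hb => eq_zero_of_mem_of_reduced f hf hb) hp.1 hp.2

theorem image_monomial_degree_generators (hf : f (Fin.last m) ≠ 0) :
    (fun p => monomial (lex.degree p) (1 : k)) '' generators f =
      (Set.range fun i => X (yVar i) ^ 2) ∪
        {∏ i, X (yVar i), (∏ i ∈ Finset.univ \ {Fin.last m}, X (yVar i)) *
          monomial (lex.degree (F f (Fin.last m))) 1} := by
  rw [generators, Set.image_union, Set.image_pair, ← Set.range_comp, (degree_gEven f).1,
    (degree_gOdd f hf).1, prod_X_yVar, prod_X_yVar, monomial_mul, one_mul]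
  refine congrArg (· ∪ _) (congrArg Set.range (funext fun i => ?_))
  rw [Function.comp_apply, degree_binomial, X_pow_eq_monomial]

end EvenOddGroebner

/-- **Lemma (init1).** Work in `T = k[y 1, …, y m, z, x 1, …, x n]` with the lex order
`y 1 > ⋯ > y m > z > x 1 > ⋯ > x n` (variables indexed by `Fin (m+1+1+n)`, `y i = X i`,
`z = X (m+1)`, `x j = X (m+1+1+j)`, and `m+1` polynomials `f 0, …, f m` in the `x`-variables).
Then `y 1² - z f 1², …, y m² - z f m², g even, g odd` form a Gröbner basis of the ideal `J`
they generate: the initial ideal of `J` is generated by the initial monomials of these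
generators, and equals `(y 1², …, y m², y 1 ⋯ y m, y 1 ⋯ y (m-1) · in(f m))`. -/
theorem groebner_basis_of_C_plus_g
    (k : Type*) [Field k] (n m : ℕ)
    (f : Fin (m + 1) → MvPolynomial (Fin n) k) (hf : ∀ i, f i ≠ 0) :
    letI N := (m + 1) + 1 + n
    letI Y : Fin (m + 1) → MvPolynomial (Fin N) k := fun i => X ⟨(i : ℕ), by omega⟩
    letI Z : MvPolynomial (Fin N) k := X ⟨m + 1, by omega⟩
    letI F : Fin (m + 1) → MvPolynomial (Fin N) k := fun i =>
      rename (fun j : Fin n => (⟨(m + 1) + 1 + (j : ℕ), by omega⟩ : Fin N)) (f i)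
    letI gens : Set (MvPolynomial (Fin N) k) :=
      (Set.range fun i : Fin (m + 1) => Y i ^ 2 - Z * F i ^ 2) ∪
        {gEvenFull Y F Z, gOddFull Y F Z}
    letI J := Ideal.span gens
    Ideal.span ((fun p => monomial (leadMon p) (1 : k)) '' {p | p ∈ J ∧ p ≠ 0}) =
        Ideal.span ((fun p => monomial (leadMon p) (1 : k)) '' gens) ∧
    Ideal.span ((fun p => monomial (leadMon p) (1 : k)) '' {p | p ∈ J ∧ p ≠ 0}) =
        Ideal.span ((Set.range fun i : Fin (m + 1) => Y i ^ 2) ∪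
          {∏ i, Y i,
           (∏ i ∈ Finset.univ \ {Fin.last m}, Y i) *
             monomial (leadMon (F (Fin.last m))) (1 : k)}) := by
  have hinit := EvenOddGroebner.span_monomial_degree_J f (hf (Fin.last m))
  exact ⟨hinit, hinit.trans
    (congrArg Ideal.span (EvenOddGroebner.image_monomial_degree_generators f (hf (Fin.last m))))⟩
end

section
/- Let S = k[x_1, x_2] with char(k) ≠ 2 and I = (x_1, x_2). The defining ideal of the Rees-like algebra RL(I) in T = S[y_1,y_2,z] (with y_i ↦ x_i t, z ↦ t^2) is (x_1 y_2 - x_2 y_1, y_1^2 - z x_1^2, y_1 y_2 - z x_1 x_2, y_2^2 - z x_2^2); that is, the kernel of the map T → S[t] given by y_i ↦ x_i t, z ↦ t^2 is generated by these four elements. -/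
/-!
Write `y₁, y₂, z` for `X 0, X 1, X 2`. Modulo the relations `yᵢ yⱼ ≡ z fᵢ fⱼ`, every element of
`R[y₁, y₂, z]` reduces to `A(z) + y₁ B(z) + y₂ C(z)`. Its image `A(t²) + t (f₁ B + f₂ C)(t²)`
vanishes only if `A = 0` and `f₁ B + f₂ C = 0`. When `R` is a domain, `f₁` is prime and `f₁ ∤ f₂`,
the same holds in `R[z]`, so this syzygy forces `(B, C) = S (f₂, -f₁)`, and then
`y₁ B + y₂ C = -S(z) (f₁ y₂ - f₂ y₁)` lies in the ideal of relations. For `k[x₁, x₂]` take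
`f₁ = x₁`, `f₂ = x₂`.
-/

open Polynomial in
theorem Polynomial.eq_zero_of_expand_two_add_X_mul_expand_two_eq_zero {R : Type*} [CommSemiring R]
    {a d : Polynomial R} (h : expand R 2 a + X * expand R 2 d = 0) : a = 0 ∧ d = 0 := by
  rw [← pow_one (X : Polynomial R)] at h
  have hcoeff (n : ℕ) := congrArg (coeff · n) h
  simp only [coeff_add, coeff_zero, coeff_X_pow_mul', coeff_expand two_pos] at hcoeff
  constructor <;> ext n <;> rw [coeff_zero]
  · have := hcoeff (2 * n)
    split_ifs at this <;> first | omega | simpa using this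
  · simpa [show ¬ 2 ∣ 2 * n + 1 by omega] using hcoeff (2 * n + 1)

theorem exists_eq_mul_of_mul_add_mul_eq_zero {A : Type*} [CommRing A] [IsDomain A] {f g b c : A}
    (hf : Prime f) (hfg : ¬ f ∣ g) (h : f * b + g * c = 0) : ∃ s, b = g * s ∧ c = -(f * s) := by
  obtain ⟨s, rfl⟩ : f ∣ c :=
    (hf.dvd_or_dvd ⟨-b, by linear_combination h⟩).resolve_left hfg
  refine ⟨-s, mul_left_cancel₀ hf.ne_zero ?_, by ring⟩
  linear_combination h

theorem MvPolynomial.prime_X_zero {R : Type*} [CommRing R] [IsDomain R] (n : ℕ) :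
    Prime (X 0 : MvPolynomial (Fin (n + 1)) R) := by
  rw [← MulEquiv.prime_iff (finSuccEquiv R n).toMulEquiv,
    show (finSuccEquiv R n).toMulEquiv (X 0) = Polynomial.X from finSuccEquiv_X_zero]
  exact Polynomial.prime_X

namespace ReesLike

open MvPolynomial

variable {R : Type*} [CommRing R] (f₁ f₂ : R)

def relations : Set (MvPolynomial (Fin 3) R) :=
  {C f₁ * X 1 - C f₂ * X 0,
   X 0 ^ 2 - X 2 * C f₁ ^ 2,
   X 0 * X 1 - X 2 * C (f₁ * f₂),
   X 1 ^ 2 - X 2 * C f₂ ^ 2}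

noncomputable def toPolynomial : MvPolynomial (Fin 3) R →ₐ[R] Polynomial R :=
  aeval ![Polynomial.C f₁ * Polynomial.X, Polynomial.C f₂ * Polynomial.X, Polynomial.X ^ 2]

noncomputable def ofZ : Polynomial R →ₐ[R] MvPolynomial (Fin 3) R :=
  Polynomial.aeval (X 2)

@[simp]
theorem ofZ_C (r : R) : ofZ (Polynomial.C r) = C r :=
  Polynomial.aeval_C _ r

@[simp]
theorem ofZ_X : ofZ (Polynomial.X : Polynomial R) = X 2 :=
  Polynomial.aeval_X _

noncomputable def normalForm (a b c : Polynomial R) : MvPolynomial (Fin 3) R :=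
  ofZ a + X 0 * ofZ b + X 1 * ofZ c

theorem span_relations_le_ker :
    Ideal.span (relations f₁ f₂) ≤ RingHom.ker (toPolynomial f₁ f₂) := by
  rw [Ideal.span_le]
  rintro g (rfl | rfl | rfl | rfl) <;>
    simp only [SetLike.mem_coe, RingHom.mem_ker, toPolynomial, map_sub, map_mul, map_pow, aeval_X,
      algHom_C, Polynomial.algebraMap_eq, Matrix.cons_val, Matrix.cons_val_zero,
      Matrix.cons_val_one] <;> ring

theorem normalForm_mul_X_sub_mem_span (a b c : Polynomial R) (i : Fin 3) :
    ∃ a' b' c', normalForm a b c * X i - normalForm a' b' c' ∈ Ideal.span (relations f₁ f₂) := by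
  have mem_sq₁ : X 0 ^ 2 - X 2 * C f₁ ^ 2 ∈ Ideal.span (relations f₁ f₂) :=
    Ideal.subset_span (by simp [relations])
  have mem_mul : X 0 * X 1 - X 2 * C (f₁ * f₂) ∈ Ideal.span (relations f₁ f₂) :=
    Ideal.subset_span (by simp [relations])
  have mem_sq₂ : X 1 ^ 2 - X 2 * C f₂ ^ 2 ∈ Ideal.span (relations f₁ f₂) :=
    Ideal.subset_span (by simp [relations])
  match i with
  | 0 =>
    refine ⟨Polynomial.C f₁ ^ 2 * Polynomial.X * b +
      Polynomial.C (f₁ * f₂) * Polynomial.X * c, a, 0, ?_⟩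
    convert add_mem (Ideal.mul_mem_left _ (ofZ b) mem_sq₁)
      (Ideal.mul_mem_left _ (ofZ c) mem_mul) using 1
    simp only [normalForm, map_add, map_mul, map_pow, map_zero, ofZ_C, ofZ_X]
    ring
  | 1 =>
    refine ⟨Polynomial.C (f₁ * f₂) * Polynomial.X * b +
      Polynomial.C f₂ ^ 2 * Polynomial.X * c, 0, a, ?_⟩
    convert add_mem (Ideal.mul_mem_left _ (ofZ b) mem_mul)
      (Ideal.mul_mem_left _ (ofZ c) mem_sq₂) using 1
    simp only [normalForm, map_add, map_mul, map_pow, map_zero, ofZ_C, ofZ_X]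
    ring
  | 2 =>
    refine ⟨Polynomial.X * a, Polynomial.X * b, Polynomial.X * c, ?_⟩
    have : normalForm a b c * X 2 =
        normalForm (Polynomial.X * a) (Polynomial.X * b) (Polynomial.X * c) := by
      simp only [normalForm, map_mul, ofZ_X]
      ring
    rw [this, sub_self]
    exact zero_mem _

theorem exists_sub_normalForm_mem_span (p : MvPolynomial (Fin 3) R) :
    ∃ a b c, p - normalForm a b c ∈ Ideal.span (relations f₁ f₂) := by
  induction p using MvPolynomial.induction_on with
  | C s => exact ⟨Polynomial.C s, 0, 0, by simp [normalForm]⟩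
  | add p q hp hq =>
    obtain ⟨a, b, c, hp⟩ := hp
    obtain ⟨a', b', c', hq⟩ := hq
    refine ⟨a + a', b + b', c + c', ?_⟩
    convert add_mem hp hq using 1
    simp only [normalForm, map_add]
    ring
  | mul_X p i hp =>
    obtain ⟨a, b, c, hp⟩ := hp
    obtain ⟨a', b', c', h⟩ := normalForm_mul_X_sub_mem_span f₁ f₂ a b c i
    refine ⟨a', b', c', ?_⟩
    convert add_mem (Ideal.mul_mem_right (X i) _ hp) h using 1
    ring

theorem toPolynomial_ofZ (a : Polynomial R) :
    toPolynomial f₁ f₂ (ofZ a) = Polynomial.expand R 2 a := by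
  rw [← AlgHom.comp_apply]
  congr 1
  ext
  simp [toPolynomial]

theorem toPolynomial_normalForm (a b c : Polynomial R) :
    toPolynomial f₁ f₂ (normalForm a b c) =
      Polynomial.expand R 2 a +
        Polynomial.X * Polynomial.expand R 2 (Polynomial.C f₁ * b + Polynomial.C f₂ * c) := by
  simp only [normalForm, map_add, map_mul, toPolynomial_ofZ, Polynomial.expand_C]
  simp only [toPolynomial, aeval_X, Matrix.cons_val_zero, Matrix.cons_val_one]
  ring

theorem normalForm_mem_span_of_toPolynomial_eq_zero [IsDomain R] (hf₁ : Prime f₁)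
    (hf₁₂ : ¬ f₁ ∣ f₂) {a b c : Polynomial R} (h : toPolynomial f₁ f₂ (normalForm a b c) = 0) :
    normalForm a b c ∈ Ideal.span (relations f₁ f₂) := by
  rw [toPolynomial_normalForm] at h
  obtain ⟨rfl, hsyz⟩ := Polynomial.eq_zero_of_expand_two_add_X_mul_expand_two_eq_zero h
  obtain ⟨s, rfl, rfl⟩ := exists_eq_mul_of_mul_add_mul_eq_zero
    (Polynomial.prime_C_iff.mpr hf₁)
    (fun h => hf₁₂ (by simpa using (Polynomial.C_dvd_iff_dvd_coeff _ _).mp h 0)) hsyz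
  have : normalForm 0 (Polynomial.C f₂ * s) (-(Polynomial.C f₁ * s)) =
      -ofZ s * (C f₁ * X 1 - C f₂ * X 0) := by
    simp only [normalForm, map_mul, map_neg, map_zero, ofZ_C]
    ring
  rw [this]
  exact Ideal.mul_mem_left _ _ (Ideal.subset_span (by simp [relations]))

theorem ker_toPolynomial [IsDomain R] (hf₁ : Prime f₁) (hf₁₂ : ¬ f₁ ∣ f₂) :
    RingHom.ker (toPolynomial f₁ f₂) = Ideal.span (relations f₁ f₂) := by
  refine le_antisymm (fun p hp => ?_) (span_relations_le_ker f₁ f₂)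
  obtain ⟨a, b, c, hpa⟩ := exists_sub_normalForm_mem_span f₁ f₂ p
  have hnf : toPolynomial f₁ f₂ (normalForm a b c) = 0 := by
    simpa [RingHom.mem_ker.mp hp] using span_relations_le_ker f₁ f₂ hpa
  simpa using add_mem hpa (normalForm_mem_span_of_toPolynomial_eq_zero f₁ f₂ hf₁ hf₁₂ hnf)

end ReesLike

theorem reesLikePrime_of_maximal_ideal_two_vars_general
    (k : Type*) [Field k] :
    RingHom.ker ((MvPolynomial.aeval (fun v : Fin 3 =>
        (![Polynomial.C (MvPolynomial.X 0) * Polynomial.X,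
           Polynomial.C (MvPolynomial.X 1) * Polynomial.X,
           Polynomial.X ^ 2] : Fin 3 → Polynomial (MvPolynomial (Fin 2) k)) v) :
      MvPolynomial (Fin 3) (MvPolynomial (Fin 2) k) →ₐ[MvPolynomial (Fin 2) k]
        Polynomial (MvPolynomial (Fin 2) k)) :
      MvPolynomial (Fin 3) (MvPolynomial (Fin 2) k) →+*
        Polynomial (MvPolynomial (Fin 2) k)) =
    Ideal.span
      ({MvPolynomial.C (MvPolynomial.X 0) * MvPolynomial.X 1 -
          MvPolynomial.C (MvPolynomial.X 1) * MvPolynomial.X 0,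
        MvPolynomial.X 0 ^ 2 - MvPolynomial.X 2 * MvPolynomial.C (MvPolynomial.X 0) ^ 2,
        MvPolynomial.X 0 * MvPolynomial.X 1 -
          MvPolynomial.X 2 * MvPolynomial.C (MvPolynomial.X 0 * MvPolynomial.X 1),
        MvPolynomial.X 1 ^ 2 - MvPolynomial.X 2 * MvPolynomial.C (MvPolynomial.X 1) ^ 2} :
        Set (MvPolynomial (Fin 3) (MvPolynomial (Fin 2) k))) :=
  ReesLike.ker_toPolynomial (MvPolynomial.X 0) (MvPolynomial.X 1) (MvPolynomial.prime_X_zero 1)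
    (by simp)

/-- **Example (Jacht2CI, presentation).** Let `S = k[x₁,x₂]` with `char k ≠ 2` and
`I = (x₁,x₂)`.  The kernel of the map `T = S[y₁,y₂,z] → S[t]`, `yᵢ ↦ xᵢ t`, `z ↦ t²`,
is generated by `x₁y₂ - x₂y₁`, `y₁² - z x₁²`, `y₁y₂ - z x₁x₂` and `y₂² - z x₂²`. -/
theorem reesLikePrime_of_maximal_ideal_two_vars
    (k : Type*) [Field k] (hchar : (2 : k) ≠ 0) :
    RingHom.ker ((MvPolynomial.aeval (fun v : Fin 3 =>
        (![Polynomial.C (MvPolynomial.X 0) * Polynomial.X,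
           Polynomial.C (MvPolynomial.X 1) * Polynomial.X,
           Polynomial.X ^ 2] : Fin 3 → Polynomial (MvPolynomial (Fin 2) k)) v) :
      MvPolynomial (Fin 3) (MvPolynomial (Fin 2) k) →ₐ[MvPolynomial (Fin 2) k]
        Polynomial (MvPolynomial (Fin 2) k)) :
      MvPolynomial (Fin 3) (MvPolynomial (Fin 2) k) →+*
        Polynomial (MvPolynomial (Fin 2) k)) =
    Ideal.span
      ({MvPolynomial.C (MvPolynomial.X 0) * MvPolynomial.X 1 -
          MvPolynomial.C (MvPolynomial.X 1) * MvPolynomial.X 0,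
        MvPolynomial.X 0 ^ 2 - MvPolynomial.X 2 * MvPolynomial.C (MvPolynomial.X 0) ^ 2,
        MvPolynomial.X 0 * MvPolynomial.X 1 -
          MvPolynomial.X 2 * MvPolynomial.C (MvPolynomial.X 0 * MvPolynomial.X 1),
        MvPolynomial.X 1 ^ 2 - MvPolynomial.X 2 * MvPolynomial.C (MvPolynomial.X 1) ^ 2} :
        Set (MvPolynomial (Fin 3) (MvPolynomial (Fin 2) k))) :=
  reesLikePrime_of_maximal_ideal_two_vars_general k
end
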